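/- arXiv:2303.00328 — 8 statements merged into one kernel-verified Lean document; each statement's English description precedes it below -/
import Mathlib

section
/- Let G=(V,E) be a tree (a finite connected acyclic simple graph) and T(G) its total graph. Then every maximal clique of T(G) corresponds in G either to a vertex v together with all edges incident to v (the set {v}∪δ(v)), or to an edge e={v,w} together with its two endpoints (the set {v,w,e}). -/
open Finset

variable {V : Type*}

/-- Adjacency between elements (vertices and edges) of a graph. -/
def elemAdj (G : SimpleGraph V) : V ⊕ G.edgeSet → V ⊕ G.edgeSet → Prop
  | Sum.inl v, Sum.inl w => G.Adj v w
  | Sum.inl v, Sum.inr e => v ∈ (e : Sym2 V)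
  | Sum.inr e, Sum.inl v => v ∈ (e : Sym2 V)
  | Sum.inr e, Sum.inr f => e ≠ f ∧ ∃ v, v ∈ (e : Sym2 V) ∧ v ∈ (f : Sym2 V)

/-- A total matching is a set of pairwise non-adjacent elements. -/
def IsTotalMatching (G : SimpleGraph V) (T : Set (V ⊕ G.edgeSet)) : Prop :=
  ∀ d ∈ T, ∀ d' ∈ T, d ≠ d' → ¬ elemAdj G d d'

/-- Characteristic vector of a set of elements. -/
noncomputable def charVec (G : SimpleGraph V) (T : Set (V ⊕ G.edgeSet)) :
    V ⊕ G.edgeSet → ℝ :=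
  T.indicator fun _ => 1

/-- The total matching polytope: convex hull of characteristic vectors of total matchings. -/
def totalMatchingPolytope (G : SimpleGraph V) : Set ((V ⊕ G.edgeSet) → ℝ) :=
  convexHull ℝ {z | ∃ T, IsTotalMatching G T ∧ z = charVec G T}

/-- The total graph of a graph: vertices are the elements, adjacency is element adjacency. -/
def totalGraph (G : SimpleGraph V) : SimpleGraph (V ⊕ G.edgeSet) :=
  SimpleGraph.fromRel (elemAdj G)

lemma tfree {G : SimpleGraph V} (hG : G.IsAcyclic) {a b c : V}
    (hab : G.Adj a b) (hbc : G.Adj b c) (hac : G.Adj a c) : False := by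
  apply hG (SimpleGraph.Walk.cons hab (SimpleGraph.Walk.cons hbc
    (SimpleGraph.Walk.cons hac.symm SimpleGraph.Walk.nil)))
  have h1 := hab.ne
  have h2 := hbc.ne
  have h3 := hac.ne
  simp [SimpleGraph.Walk.isCycle_def, SimpleGraph.Walk.isTrail_def, Sym2.eq_iff]
  tauto

lemma star_clique (G : SimpleGraph V) (v : V) :
    (totalGraph G).IsClique (insert (Sum.inl v)
      {d | ∃ e : G.edgeSet, v ∈ (e : Sym2 V) ∧ d = Sum.inr e}) := by
  intro d hd d' hd' hne
  rw [totalGraph, SimpleGraph.fromRel_adj]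
  refine ⟨hne, Or.inl ?_⟩
  rcases hd with rfl | ⟨e, he, rfl⟩
  · rcases hd' with rfl | ⟨f, hf, rfl⟩
    · exact absurd rfl hne
    · exact hf
  · rcases hd' with rfl | ⟨f, hf, rfl⟩
    · exact he
    · exact ⟨fun h => hne (by rw [h]), v, he, hf⟩

lemma tri_clique (G : SimpleGraph V) {v w : V} (h : G.Adj v w) :
    (totalGraph G).IsClique
      {Sum.inl v, Sum.inl w, Sum.inr ⟨s(v,w), G.mem_edgeSet.mpr h⟩} := by
  intro d hd d' hd' hne
  rw [totalGraph, SimpleGraph.fromRel_adj]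
  refine ⟨hne, ?_⟩
  rcases hd with rfl | rfl | rfl <;> rcases hd' with rfl | rfl | rfl <;>
    simp_all [elemAdj, h, h.symm]

/-- in the total graph of a tree, every maximal clique is either a vertex
together with all edges incident to it, or an edge together with its two endpoints. -/
theorem maximal_clique_of_totalGraph_of_isTree (G : SimpleGraph V) (hG : G.IsTree)
    (K : Set (V ⊕ G.edgeSet)) (hK : (totalGraph G).IsClique K)
    (hmax : ∀ K' : Set (V ⊕ G.edgeSet), (totalGraph G).IsClique K' → K ⊆ K' → K' = K) :
    (∃ v : V, K = insert (Sum.inl v)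
        {d | ∃ e : G.edgeSet, v ∈ (e : Sym2 V) ∧ d = Sum.inr e}) ∨
    (∃ v w : V, ∃ h : G.Adj v w,
        K = {Sum.inl v, Sum.inl w, Sum.inr ⟨s(v,w), G.mem_edgeSet.mpr h⟩}) := by
  have hacyc := hG.IsAcyclic
  -- adjacency extraction lemmas
  have hVE : ∀ {v : V} {e : G.edgeSet}, Sum.inl v ∈ K → Sum.inr e ∈ K →
      v ∈ (e : Sym2 V) := by
    intro v e hv he
    have := hK hv he (by simp)
    rw [totalGraph, SimpleGraph.fromRel_adj] at this
    rcases this.2 with h | h <;> exact h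
  have hVV : ∀ {v w : V}, Sum.inl v ∈ K → Sum.inl w ∈ K → v ≠ w → G.Adj v w := by
    intro v w hv hw hne
    have := hK hv hw (by simpa using hne)
    rw [totalGraph, SimpleGraph.fromRel_adj] at this
    rcases this.2 with h | h
    · exact h
    · exact h.symm
  have hEE : ∀ {e f : G.edgeSet}, Sum.inr e ∈ K → Sum.inr f ∈ K → e ≠ f →
      ∃ u, u ∈ (e : Sym2 V) ∧ u ∈ (f : Sym2 V) := by
    intro e f he hf hne
    have := hK he hf (by simpa using hne)
    rw [totalGraph, SimpleGraph.fromRel_adj] at this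
    rcases this.2 with h | h
    · exact h.2
    · obtain ⟨u, h1, h2⟩ := h.2; exact ⟨u, h2, h1⟩
  by_cases hv : ∃ v : V, Sum.inl v ∈ K
  · obtain ⟨v, hvK⟩ := hv
    by_cases hw : ∃ w : V, w ≠ v ∧ Sum.inl w ∈ K
    · -- two vertices: triangle case
      obtain ⟨w, hwv, hwK⟩ := hw
      have hadj : G.Adj v w := hVV hvK hwK (Ne.symm hwv)
      right
      refine ⟨v, w, hadj, ?_⟩
      refine (hmax _ (tri_clique G hadj) ?_).symm
      intro d hd
      match d with
      | Sum.inl u =>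
        by_cases huv : u = v
        · subst huv; exact Set.mem_insert _ _
        by_cases huw : u = w
        · subst huw; right; exact Set.mem_insert _ _
        · exact absurd (hVV hd hwK huw) (fun h =>
            tfree hacyc (hVV hvK hd (Ne.symm huv)) h hadj)
      | Sum.inr e =>
        have h1 : v ∈ (e : Sym2 V) := hVE hvK hd
        have h2 : w ∈ (e : Sym2 V) := hVE hwK hd
        have : (e : Sym2 V) = s(v, w) :=
          (Sym2.mem_and_mem_iff (Ne.symm hwv)).mp ⟨h1, h2⟩
        right; right
        simp only [Set.mem_singleton_iff]
        congr 1
        exact Subtype.ext this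
    · -- one vertex: star case
      left
      refine ⟨v, (hmax _ (star_clique G v) ?_).symm⟩
      intro d hd
      match d with
      | Sum.inl u =>
        by_cases huv : u = v
        · subst huv; exact Set.mem_insert _ _
        · exact absurd ⟨u, huv, hd⟩ hw
      | Sum.inr e =>
        exact Set.mem_insert_iff.mpr (Or.inr ⟨e, hVE hvK hd, rfl⟩)
  · -- no vertices in K
    exfalso
    push_neg at hv
    -- K is nonempty?
    by_cases hne : ∃ e : G.edgeSet, Sum.inr e ∈ K
    · obtain ⟨e, heK⟩ := hne
      -- find a common vertex v of all edges in K
      obtain ⟨a, heab'⟩ : ∃ a, a ∈ (e : Sym2 V) := ⟨(e : Sym2 V).out.1, Sym2.out_fst_mem _⟩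
      obtain ⟨b, heab⟩ : ∃ b, (e : Sym2 V) = s(a, b) :=
        ⟨Sym2.Mem.other heab', (Sym2.other_spec heab').symm⟩
      have hab : G.Adj a b := G.mem_edgeSet.mp (heab ▸ e.2)
      have key : ∃ v : V, ∀ f : G.edgeSet, Sum.inr f ∈ K → v ∈ (f : Sym2 V) := by
        by_cases ha : ∀ f : G.edgeSet, Sum.inr f ∈ K → a ∈ (f : Sym2 V)
        · exact ⟨a, ha⟩
        push_neg at ha
        obtain ⟨f, hfK, haf⟩ := ha
        have hef : e ≠ f := fun h => haf (h ▸ (heab ▸ Sym2.mem_mk_left a b))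
        obtain ⟨u, hue, huf⟩ := hEE heK hfK hef
        have hub : u = b := by
          rw [heab, Sym2.mem_iff] at hue
          rcases hue with h | h
          · exact absurd (h ▸ huf) haf
          · exact h
        have hbf : b ∈ (f : Sym2 V) := hub ▸ huf
        refine ⟨b, fun g hgK => ?_⟩
        by_contra hbg
        have hge : g ≠ e := fun h => hbg (h ▸ (heab ▸ Sym2.mem_mk_right a b))
        have hgf : g ≠ f := fun h => hbg (h ▸ hbf)
        obtain ⟨u1, hu1g, hu1e⟩ := hEE hgK heK hge
        have hag : a ∈ (g : Sym2 V) := by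
          rw [heab, Sym2.mem_iff] at hu1e
          rcases hu1e with h | h
          · exact h ▸ hu1g
          · exact absurd (h ▸ hu1g) hbg
        obtain ⟨u2, hu2g, hu2f⟩ := hEE hgK hfK hgf
        -- f = s(b, x) for some x ≠ b
        obtain ⟨x, hfx⟩ : ∃ x, (f : Sym2 V) = s(b, x) := ⟨Sym2.Mem.other hbf,
          (Sym2.other_spec hbf).symm⟩
        have hbx : G.Adj b x := G.mem_edgeSet.mp (hfx ▸ f.2)
        have hxg : x ∈ (g : Sym2 V) := by
          rw [hfx, Sym2.mem_iff] at hu2f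
          rcases hu2f with h | h
          · exact absurd (h ▸ hu2g) hbg
          · exact h ▸ hu2g
        have hxa : x ≠ a := fun h => haf (hfx ▸ (h ▸ Sym2.mem_mk_right b x))
        have hgax : (g : Sym2 V) = s(a, x) :=
          (Sym2.mem_and_mem_iff (fun h => hxa h.symm)).mp ⟨hag, hxg⟩
        have hax : G.Adj a x := G.mem_edgeSet.mp (hgax ▸ g.2)
        exact tfree hacyc hab hbx hax
      obtain ⟨v, hvall⟩ := key
      have hsub : K ⊆ insert (Sum.inl v)
          {d | ∃ e : G.edgeSet, v ∈ (e : Sym2 V) ∧ d = Sum.inr e} := by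
        intro d hd
        match d with
        | Sum.inl u => exact absurd hd (hv u)
        | Sum.inr f => exact Set.mem_insert_iff.mpr (Or.inr ⟨f, hvall f hd, rfl⟩)
      have := hmax _ (star_clique G v) hsub
      exact hv v (this ▸ Set.mem_insert _ _)
    · -- K has no edges either: K = ∅
      push_neg at hne
      have hVne : Nonempty V := hG.isConnected.nonempty
      obtain ⟨v⟩ := hVne
      have hsub : K ⊆ {Sum.inl v} := by
        intro d hd
        match d with
        | Sum.inl u => exact absurd hd (hv u)
        | Sum.inr f => exact absurd hd (hne f)
      have := hmax _ (SimpleGraph.isClique_singleton (Sum.inl v)) hsub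
      exact hv v (this ▸ rfl)
end

section
/- Let G=(V,E) be a finite simple undirected graph and let K_{r,r} with r≥2 be an induced balanced biclique of G, with vertex set V(K_{r,r}) and edge set E(K_{r,r}). Then the balanced biclique inequality Σ_{v∈V(K_{r,r})} x_v + Σ_{e∈E(K_{r,r})} y_e ≤ r is facet-defining for the total matching polytope P_T(G). -/
open Finset

variable {V : Type*}

/-- A valid inequality `f z ≤ b` is facet-defining for the total matching polytope if it is
valid and the face it defines has affine dimension `|V| + |E| - 1`. -/
def IsFacetDefining [Fintype V] [DecidableEq V] (G : SimpleGraph V) [DecidableRel G.Adj]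
    (f : ((V ⊕ G.edgeSet) → ℝ) → ℝ) (b : ℝ) : Prop :=
  (∀ z ∈ totalMatchingPolytope G, f z ≤ b) ∧
  Module.finrank ℝ (vectorSpan ℝ {z ∈ totalMatchingPolytope G | f z = b}) =
    Fintype.card V + Fintype.card G.edgeSet - 1

section MyHelpers
variable {G : SimpleGraph V}

lemma my_elemAdj_inl_inl {v w : V} : elemAdj G (Sum.inl v) (Sum.inl w) = G.Adj v w := rfl

lemma my_charVec_of_mem {T : Set (V ⊕ G.edgeSet)} {d} (h : d ∈ T) : charVec G T d = 1 :=
  Set.indicator_of_mem h _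
lemma my_charVec_of_not_mem {T : Set (V ⊕ G.edgeSet)} {d} (h : d ∉ T) : charVec G T d = 0 :=
  Set.indicator_of_notMem h _

lemma my_charVec_insert [DecidableEq (V ⊕ G.edgeSet)] {T : Set (V ⊕ G.edgeSet)} {d} (hd : d ∉ T) :
    charVec G (insert d T) = charVec G T + Pi.single d 1 := by
  classical
  funext x
  by_cases hx : x = d
  · subst hx
    simp [my_charVec_of_mem (Set.mem_insert _ _), my_charVec_of_not_mem hd]
  · by_cases hxT : x ∈ T
    · simp [my_charVec_of_mem hxT, my_charVec_of_mem (Set.mem_insert_of_mem _ hxT),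
        Pi.single_eq_of_ne hx]
    · have : x ∉ insert d T := by simp [Set.mem_insert_iff, hx, hxT]
      simp [my_charVec_of_not_mem this, my_charVec_of_not_mem hxT, Pi.single_eq_of_ne hx]

lemma my_tm_insert {T : Set (V ⊕ G.edgeSet)} {d} (hT : IsTotalMatching G T)
    (h : ∀ d' ∈ T, ¬ elemAdj G d d' ∧ ¬ elemAdj G d' d) :
    IsTotalMatching G (insert d T) := by
  rintro x (rfl | hx) y (rfl | hy) hne hadj
  · exact hne rfl
  · exact (h y hy).1 hadj
  · exact (h x hx).2 hadj
  · exact hT x hx y hy hne hadj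

lemma my_tm_vset [DecidableEq V] {A : Finset V} (hindA : ∀ a ∈ A, ∀ a' ∈ A, ¬ G.Adj a a') :
    IsTotalMatching G (Sum.inl '' (A : Set V)) := by
  rintro d ⟨a, ha, rfl⟩ d' ⟨a', ha', rfl⟩ hne hadj
  exact hindA a ha a' ha' hadj

lemma my_tm_vset_insert_edge [DecidableEq V] {A : Finset V}
    (hindA : ∀ a ∈ A, ∀ a' ∈ A, ¬ G.Adj a a') (e : G.edgeSet)
    (he : ∀ v ∈ (e : Sym2 V), v ∉ A) :
    IsTotalMatching G (insert (Sum.inr e) (Sum.inl '' (A : Set V))) := by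
  rintro x (rfl | ⟨a, ha, rfl⟩) y (rfl | ⟨a', ha', rfl⟩) hne hadj
  · exact hne rfl
  · exact he a' hadj ha'
  · exact he a hadj ha
  · exact hindA a ha a' ha' hadj

lemma my_tm_swap [DecidableEq V] {A : Finset V}
    (hindA : ∀ a ∈ A, ∀ a' ∈ A, ¬ G.Adj a a') {a0 c : V} (hc : c ∉ A)
    (e : G.edgeSet) (hee : (e : Sym2 V) = s(a0, c)) :
    IsTotalMatching G (insert (Sum.inr e) (Sum.inl '' ((A.erase a0 : Finset V) : Set V))) := by
  rintro x (rfl | ⟨a, ha, rfl⟩) y (rfl | ⟨a', ha', rfl⟩) hne hadj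
  · exact hne rfl
  · rw [Finset.coe_erase, Set.mem_diff] at ha'
    have hmem : a' ∈ (e : Sym2 V) := hadj
    rw [hee, Sym2.mem_iff] at hmem
    rcases hmem with rfl | rfl
    · exact ha'.2 rfl
    · exact hc ha'.1
  · rw [Finset.coe_erase, Set.mem_diff] at ha
    have hmem : a ∈ (e : Sym2 V) := hadj
    rw [hee, Sym2.mem_iff] at hmem
    rcases hmem with rfl | rfl
    · exact ha.2 rfl
    · exact hc ha.1
  · rw [Finset.coe_erase, Set.mem_diff] at ha ha'
    exact hindA a ha.1 a' ha'.1 hadj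

lemma my_tm_pm [DecidableEq V] {A B : Finset V} (hdisj : Disjoint A B) (m : V → V)
    (hmB : ∀ a ∈ A, m a ∈ B) (hminj : Set.InjOn m A) :
    IsTotalMatching G
      {d | ∃ a ∈ A, ∃ h : G.Adj a (m a), d = Sum.inr ⟨s(a, m a), G.mem_edgeSet.mpr h⟩} := by
  rintro x ⟨a, ha, h1, rfl⟩ y ⟨a', ha', h1', rfl⟩ hne hadj
  obtain ⟨-, v, hv, hv'⟩ := hadj
  have hAB := Finset.disjoint_left.mp hdisj
  simp only [Sym2.mem_iff] at hv hv'
  have haa : a ≠ a' := by rintro rfl; exact hne rfl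
  rcases hv with rfl | rfl <;> rcases hv' with h2 | h2
  · exact haa h2
  · exact hAB ha (h2 ▸ hmB a' ha')
  · exact hAB ha' (h2 ▸ hmB a ha)
  · exact haa (hminj ha ha' h2)

lemma my_charVec_vset_inl [DecidableEq V] (A : Finset V) (v : V) :
    charVec G (Sum.inl '' (A : Set V)) (Sum.inl v) = if v ∈ A then 1 else 0 := by
  by_cases h : v ∈ A
  · rw [if_pos h]
    exact my_charVec_of_mem (Set.mem_image_of_mem _ (by exact_mod_cast h))
  · rw [if_neg h]
    refine my_charVec_of_not_mem ?_
    rintro ⟨a, ha, hh⟩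
    cases Sum.inl.inj hh
    exact h ha

lemma my_charVec_vset_inr (A : Finset V) (e : G.edgeSet) :
    charVec G (Sum.inl '' (A : Set V)) (Sum.inr e) = 0 := by
  refine my_charVec_of_not_mem ?_
  rintro ⟨a, ha, hh⟩
  exact Sum.inl_ne_inr hh

lemma my_charVec_swapset [DecidableEq V] {A : Finset V} {a0 : V} (ha0 : a0 ∈ A) (e : G.edgeSet) :
    charVec G (insert (Sum.inr e) (Sum.inl '' ((A.erase a0 : Finset V) : Set V))) =
      charVec G (Sum.inl '' (A : Set V)) + Pi.single (Sum.inr e) 1 - Pi.single (Sum.inl a0) 1 := by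
  classical
  funext x
  simp only [Pi.sub_apply, Pi.add_apply]
  rcases x with v | e'
  · have h1 : (Pi.single (Sum.inr e) (1:ℝ) : (V ⊕ G.edgeSet) → ℝ) (Sum.inl v) = 0 := by
      exact Pi.single_eq_of_ne (by simp) 1
    have h2 : (Pi.single (Sum.inl a0) (1:ℝ) : (V ⊕ G.edgeSet) → ℝ) (Sum.inl v)
        = if v = a0 then 1 else 0 := by
      rw [Pi.single_apply]; simp
    have h3 : charVec G (insert (Sum.inr e) (Sum.inl '' ((A.erase a0 : Finset V) : Set V)))
        (Sum.inl v) = if v ∈ A.erase a0 then 1 else 0 := by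
      by_cases h : v ∈ A.erase a0
      · rw [if_pos h]
        exact my_charVec_of_mem (Set.mem_insert_of_mem _
          (Set.mem_image_of_mem _ (by exact_mod_cast h)))
      · rw [if_neg h]
        refine my_charVec_of_not_mem ?_
        rintro (hh | ⟨a, ha, hh⟩)
        · exact Sum.inl_ne_inr hh
        · cases Sum.inl.inj hh
          exact h (by exact_mod_cast ha)
    rw [h1, h2, h3, my_charVec_vset_inl]
    by_cases hv : v = a0 <;> by_cases hvA : v ∈ A <;>
      simp_all [Finset.mem_erase]
  · have h1 : (Pi.single (Sum.inl a0) (1:ℝ) : (V ⊕ G.edgeSet) → ℝ) (Sum.inr e') = 0 := by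
      exact Pi.single_eq_of_ne (by simp) 1
    have h2 : (Pi.single (Sum.inr e) (1:ℝ) : (V ⊕ G.edgeSet) → ℝ) (Sum.inr e')
        = if e' = e then 1 else 0 := by
      rw [Pi.single_apply]; simp
    have h3 : charVec G (insert (Sum.inr e) (Sum.inl '' ((A.erase a0 : Finset V) : Set V)))
        (Sum.inr e') = if e' = e then 1 else 0 := by
      by_cases h : e' = e
      · subst h; rw [if_pos rfl]; exact my_charVec_of_mem (Set.mem_insert _ _)
      · rw [if_neg h]
        refine my_charVec_of_not_mem ?_
        rintro (hh | ⟨a, ha, hh⟩)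
        · exact h (Sum.inr.inj hh)
        · exact Sum.inl_ne_inr hh
    rw [h1, h2, h3, my_charVec_vset_inr]
    ring

lemma my_valid_key [DecidableEq V] [DecidableRel G.Adj] {A B : Finset V}
    {T : Set (V ⊕ G.edgeSet)} (hT : IsTotalMatching G T) :
    ((∑ a ∈ A, charVec G T (Sum.inl a)) +
      ∑ a ∈ A, ∑ b ∈ B, (if h : G.Adj a b then
        charVec G T (Sum.inr ⟨s(a,b), G.mem_edgeSet.mpr h⟩) else 0)) ≤ (A.card : ℝ) := by
  classical
  rw [← Finset.sum_add_distrib]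
  have key : ∀ a ∈ A, (charVec G T (Sum.inl a) +
      ∑ b ∈ B, (if h : G.Adj a b then
        charVec G T (Sum.inr ⟨s(a,b), G.mem_edgeSet.mpr h⟩) else 0)) ≤ 1 := by
    intro a _
    by_cases haT : Sum.inl a ∈ T
    · have hz : ∀ b ∈ B, (if h : G.Adj a b then
          charVec G T (Sum.inr ⟨s(a,b), G.mem_edgeSet.mpr h⟩) else 0) = 0 := by
        intro b _
        by_cases h : G.Adj a b
        · rw [dif_pos h]
          refine my_charVec_of_not_mem fun heT => ?_
          exact hT _ haT _ heT (by simp) (Sym2.mem_mk_left a b)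
        · rw [dif_neg h]
      rw [Finset.sum_eq_zero hz, my_charVec_of_mem haT]
      norm_num
    · rw [my_charVec_of_not_mem haT, zero_add]
      set P : V → Prop := fun b => ∃ h : G.Adj a b,
        Sum.inr (⟨s(a,b), G.mem_edgeSet.mpr h⟩ : G.edgeSet) ∈ T with hP
      have hterm : ∀ b ∈ B, (if h : G.Adj a b then
          charVec G T (Sum.inr ⟨s(a,b), G.mem_edgeSet.mpr h⟩) else 0)
          = if P b then 1 else 0 := by
        intro b _
        by_cases h : G.Adj a b
        · rw [dif_pos h]
          by_cases he : Sum.inr (⟨s(a,b), G.mem_edgeSet.mpr h⟩ : G.edgeSet) ∈ T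
          · rw [my_charVec_of_mem he, if_pos ⟨h, he⟩]
          · rw [my_charVec_of_not_mem he, if_neg]
            rintro ⟨h', he'⟩
            exact he he'
        · rw [dif_neg h, if_neg]
          rintro ⟨h', -⟩
          exact h h'
      rw [Finset.sum_congr rfl hterm, Finset.sum_boole]
      have hcard : (B.filter P).card ≤ 1 := by
        rw [Finset.card_le_one]
        intro b hb b' hb'
        obtain ⟨hadj, hmem⟩ := (Finset.mem_filter.mp hb).2
        obtain ⟨hadj', hmem'⟩ := (Finset.mem_filter.mp hb').2
        by_contra hne
        refine hT _ hmem _ hmem' ?_ ?_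
        · simp only [ne_eq, Sum.inr.injEq, Subtype.mk.injEq, Sym2.congr_right]
          exact hne
        · refine ⟨?_, a, Sym2.mem_mk_left a b, Sym2.mem_mk_left a b'⟩
          simp only [ne_eq, Subtype.mk.injEq, Sym2.congr_right]
          exact hne
      exact_mod_cast hcard
  calc ∑ a ∈ A, _ ≤ ∑ a ∈ A, (1:ℝ) := Finset.sum_le_sum key
  _ = A.card := by simp

lemma my_indep_single_sub {ι : Type*} [Fintype ι] [DecidableEq ι] (d0 : ι) (c : ι → ℝ) :
    LinearIndependent ℝ (fun d : {x : ι // x ≠ d0} =>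
      (Pi.single d.1 1 - Pi.single d0 (c d.1) : ι → ℝ)) := by
  apply LinearIndependent.of_comp (LinearMap.funLeft ℝ ℝ (Subtype.val : {x : ι // x ≠ d0} → ι))
  have hb : ∀ i : {x : ι // x ≠ d0}, (Pi.basisFun ℝ {x : ι // x ≠ d0}) i = Pi.single i 1 :=
    fun i => Pi.basisFun_apply ℝ _ i
  have key : (⇑(LinearMap.funLeft ℝ ℝ (Subtype.val : {x : ι // x ≠ d0} → ι)) ∘
      fun d : {x : ι // x ≠ d0} => (Pi.single d.1 1 - Pi.single d0 (c d.1) : ι → ℝ)) =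
      fun d : {x : ι // x ≠ d0} => (Pi.single d 1 : {x : ι // x ≠ d0} → ℝ) := by
    funext d x
    simp only [Function.comp_apply, LinearMap.funLeft_apply, Pi.sub_apply, Pi.single_apply]
    rw [if_neg x.2]
    by_cases h : x = d
    · simp [h, Subtype.ext_iff]
    · have : (x : ι) ≠ (d : ι) := fun hh => h (Subtype.ext hh)
      simp [h, this]
  rw [key]
  have h2 := (Pi.basisFun ℝ {x : ι // x ≠ d0}).linearIndependent
  rwa [show ⇑(Pi.basisFun ℝ {x : ι // x ≠ d0}) =
    fun d : {x : ι // x ≠ d0} => (Pi.single d 1 : {x : ι // x ≠ d0} → ℝ) from funext hb] at h2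

end MyHelpers

/-- the balanced biclique inequality associated to an induced balanced
biclique `K_{r,r}` with `r ≥ 2` is facet-defining for the total matching polytope. -/
theorem balanced_biclique_inequality_facet_defining
    [Fintype V] [DecidableEq V] (G : SimpleGraph V) [DecidableRel G.Adj]
    (r : ℕ) (hr : 2 ≤ r) (A B : Finset V) (hdisj : Disjoint A B)
    (hA : A.card = r) (hB : B.card = r)
    (hcross : ∀ a ∈ A, ∀ b ∈ B, G.Adj a b)
    (hindA : ∀ a ∈ A, ∀ a' ∈ A, ¬ G.Adj a a')
    (hindB : ∀ b ∈ B, ∀ b' ∈ B, ¬ G.Adj b b') :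
    IsFacetDefining G
      (fun z => ∑ v ∈ A ∪ B, z (Sum.inl v) +
        ∑ a ∈ A, ∑ b ∈ B,
          (if h : G.Adj a b then z (Sum.inr ⟨s(a,b), G.mem_edgeSet.mpr h⟩) else 0))
      (r : ℝ) := by
  classical
  let Fv : ((V ⊕ G.edgeSet) → ℝ) → ℝ := fun z => ∑ v ∈ A ∪ B, z (Sum.inl v) +
        ∑ a ∈ A, ∑ b ∈ B,
          (if h : G.Adj a b then z (Sum.inr ⟨s(a,b), G.mem_edgeSet.mpr h⟩) else 0)
  show IsFacetDefining G Fv (r : ℝ)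
  have hFv_apply : ∀ z, Fv z = ∑ v ∈ A ∪ B, z (Sum.inl v) +
        ∑ a ∈ A, ∑ b ∈ B,
          (if h : G.Adj a b then z (Sum.inr ⟨s(a,b), G.mem_edgeSet.mpr h⟩) else 0) :=
    fun z => rfl
  have hABr : ∀ {x : V}, x ∈ A → x ∉ B := fun hx => Finset.disjoint_left.mp hdisj hx
  obtain ⟨a1, ha1⟩ : A.Nonempty := Finset.card_pos.mp (by omega)
  obtain ⟨b1, hb1⟩ : B.Nonempty := Finset.card_pos.mp (by omega)
  have hsum_union : ∀ z : (V ⊕ G.edgeSet) → ℝ,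
      ∑ v ∈ A ∪ B, z (Sum.inl v) = (∑ a ∈ A, z (Sum.inl a)) + ∑ b ∈ B, z (Sum.inl b) :=
    fun z => Finset.sum_union hdisj
  have hedge_zero : ∀ z : (V ⊕ G.edgeSet) → ℝ,
      (∀ a ∈ A, ∀ b ∈ B, ∀ h : G.Adj a b, z (Sum.inr ⟨s(a,b), G.mem_edgeSet.mpr h⟩) = 0) →
      ∑ a ∈ A, ∑ b ∈ B,
          (if h : G.Adj a b then z (Sum.inr ⟨s(a,b), G.mem_edgeSet.mpr h⟩) else 0) = 0 := by
    intro z hz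
    refine Finset.sum_eq_zero fun a ha => Finset.sum_eq_zero fun b hb => ?_
    by_cases h : G.Adj a b
    · rw [dif_pos h]; exact hz a ha b hb h
    · rw [dif_neg h]
  -- perfect matching on the biclique
  have hcards : A.card = B.card := by rw [hA, hB]
  let σ := Finset.equivOfCardEq hcards
  let m : V → V := fun v => if h : v ∈ A then (σ ⟨v, h⟩ : V) else v
  have hmdef : ∀ a (ha : a ∈ A), m a = (σ ⟨a, ha⟩ : V) := fun a ha => dif_pos ha
  have hmB : ∀ a ∈ A, m a ∈ B := fun a ha => by rw [hmdef a ha]; exact (σ ⟨a, ha⟩).2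
  have hminj : Set.InjOn m ↑A := by
    intro a ha a' ha' h
    rw [Finset.mem_coe] at ha ha'
    rw [hmdef a ha, hmdef a' ha'] at h
    have := σ.injective (Subtype.ext h)
    exact congrArg Subtype.val this
  let M : Set (V ⊕ G.edgeSet) :=
    {d | ∃ a ∈ A, ∃ h : G.Adj a (m a), d = Sum.inr ⟨s(a, m a), G.mem_edgeSet.mpr h⟩}
  -- basic f-evaluations
  have hf_TA : Fv (charVec G (Sum.inl '' (A : Set V))) = r := by
    rw [hFv_apply, hsum_union]
    have h1 : ∑ a ∈ A, charVec G (Sum.inl '' (A : Set V)) (Sum.inl a) = r := by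
      rw [Finset.sum_congr rfl (fun a ha => by rw [my_charVec_vset_inl, if_pos ha]),
        Finset.sum_const, hA]
      simp
    have h2 : ∑ b ∈ B, charVec G (Sum.inl '' (A : Set V)) (Sum.inl b) = 0 :=
      Finset.sum_eq_zero fun b hb => by
        rw [my_charVec_vset_inl, if_neg (fun hbA => hABr hbA hb)]
    rw [h1, h2, hedge_zero _ (fun a _ b _ h => my_charVec_vset_inr A _)]
    ring
  have hf_TB : Fv (charVec G (Sum.inl '' (B : Set V))) = r := by
    rw [hFv_apply, hsum_union]
    have h1 : ∑ a ∈ A, charVec G (Sum.inl '' (B : Set V)) (Sum.inl a) = 0 :=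
      Finset.sum_eq_zero fun a ha => by
        rw [my_charVec_vset_inl, if_neg (hABr ha)]
    have h2 : ∑ b ∈ B, charVec G (Sum.inl '' (B : Set V)) (Sum.inl b) = r := by
      rw [Finset.sum_congr rfl (fun b hb => by rw [my_charVec_vset_inl, if_pos hb]),
        Finset.sum_const, hB]
      simp
    rw [h1, h2, hedge_zero _ (fun a _ b _ h => my_charVec_vset_inr B _)]
    ring
  have hMnotinl : ∀ v : V, (Sum.inl v : V ⊕ G.edgeSet) ∉ M := by
    rintro v ⟨a, ha, h, heq⟩
    exact Sum.inl_ne_inr heq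
  have hf_M : Fv (charVec G M) = r := by
    rw [hFv_apply, hsum_union]
    have h1 : ∑ a ∈ A, charVec G M (Sum.inl a) = 0 :=
      Finset.sum_eq_zero fun a _ => my_charVec_of_not_mem (hMnotinl a)
    have h2 : ∑ b ∈ B, charVec G M (Sum.inl b) = 0 :=
      Finset.sum_eq_zero fun b _ => my_charVec_of_not_mem (hMnotinl b)
    have h3 : ∑ a ∈ A, ∑ b ∈ B, (if h : G.Adj a b then
        charVec G M (Sum.inr ⟨s(a,b), G.mem_edgeSet.mpr h⟩) else 0) = r := by
      have hinner : ∀ a ∈ A, ∑ b ∈ B, (if h : G.Adj a b then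
          charVec G M (Sum.inr ⟨s(a,b), G.mem_edgeSet.mpr h⟩) else 0) = 1 := by
        intro a ha
        have hterm : ∀ b ∈ B, (if h : G.Adj a b then
            charVec G M (Sum.inr ⟨s(a,b), G.mem_edgeSet.mpr h⟩) else 0)
            = if b = m a then (1:ℝ) else 0 := by
          intro b hb
          rw [dif_pos (hcross a ha b hb)]
          by_cases hbm : b = m a
          · subst hbm
            rw [if_pos rfl]
            exact my_charVec_of_mem ⟨a, ha, hcross a ha (m a) hb, rfl⟩
          · rw [if_neg hbm]
            refine my_charVec_of_not_mem ?_
            rintro ⟨a'', ha'', h'', heq⟩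
            have hval : s(a,b) = s(a'', m a'') := by
              have := Sum.inr.inj heq
              exact congrArg Subtype.val this
            rcases Sym2.eq_iff.mp hval with ⟨rfl, h4⟩ | ⟨h4, h5⟩
            · exact hbm h4
            · exact hABr ha (h4 ▸ hmB a'' ha'')
        rw [Finset.sum_congr rfl hterm, Finset.sum_ite_eq' B (m a) (fun _ => (1:ℝ)),
          if_pos (hmB a ha)]
      rw [Finset.sum_congr rfl hinner, Finset.sum_const, hA]
      simp
    rw [h1, h2, h3]
    ring
  have hf_single_inl : ∀ v : V, Fv (Pi.single (Sum.inl v) 1) =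
      if v ∈ A ∪ B then 1 else 0 := by
    intro v
    rw [hFv_apply]
    have h1 : ∑ u ∈ A ∪ B, (Pi.single (Sum.inl v) 1 : (V ⊕ G.edgeSet) → ℝ) (Sum.inl u)
        = if v ∈ A ∪ B then 1 else 0 := by
      have hterm : ∀ u ∈ A ∪ B, (Pi.single (Sum.inl v) 1 : (V ⊕ G.edgeSet) → ℝ) (Sum.inl u)
          = if u = v then (1:ℝ) else 0 := by
        intro u _
        rw [Pi.single_apply]
        by_cases h : u = v
        · subst h; simp
        · rw [if_neg h, if_neg (fun hh => h (Sum.inl.inj hh))]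
      rw [Finset.sum_congr rfl hterm]
      exact Finset.sum_ite_eq' (A ∪ B) v (fun _ => (1:ℝ))
    rw [h1, hedge_zero _ (fun a _ b _ h => Pi.single_eq_of_ne (by simp) 1)]
    ring
  have hf_single_inr_in : ∀ a (ha : a ∈ A), ∀ b (hb : b ∈ B),
      Fv (Pi.single (Sum.inr ⟨s(a,b), G.mem_edgeSet.mpr (hcross a ha b hb)⟩) 1) = 1 := by
    intro a ha b hb
    rw [hFv_apply]
    have h1 : ∑ u ∈ A ∪ B, (Pi.single
        (Sum.inr (⟨s(a,b), G.mem_edgeSet.mpr (hcross a ha b hb)⟩ : G.edgeSet)) 1 :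
        (V ⊕ G.edgeSet) → ℝ) (Sum.inl u) = 0 :=
      Finset.sum_eq_zero fun u _ => Pi.single_eq_of_ne (by simp) 1
    have h2 : ∑ a' ∈ A, ∑ b' ∈ B, (if h : G.Adj a' b' then
        (Pi.single (Sum.inr (⟨s(a,b), G.mem_edgeSet.mpr (hcross a ha b hb)⟩ : G.edgeSet)) 1 :
          (V ⊕ G.edgeSet) → ℝ) (Sum.inr ⟨s(a',b'), G.mem_edgeSet.mpr h⟩) else 0) = 1 := by
      have hinner : ∀ a' ∈ A, ∑ b' ∈ B, (if h : G.Adj a' b' then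
          (Pi.single (Sum.inr (⟨s(a,b), G.mem_edgeSet.mpr (hcross a ha b hb)⟩ : G.edgeSet)) 1 :
            (V ⊕ G.edgeSet) → ℝ) (Sum.inr ⟨s(a',b'), G.mem_edgeSet.mpr h⟩) else 0)
          = if a' = a then (1:ℝ) else 0 := by
        intro a' ha'
        have hterm : ∀ b' ∈ B, (if h : G.Adj a' b' then
            (Pi.single (Sum.inr (⟨s(a,b), G.mem_edgeSet.mpr (hcross a ha b hb)⟩ : G.edgeSet)) 1 :
              (V ⊕ G.edgeSet) → ℝ) (Sum.inr ⟨s(a',b'), G.mem_edgeSet.mpr h⟩) else 0)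
            = if a' = a then (if b' = b then (1:ℝ) else 0) else 0 := by
          intro b' hb'
          rw [dif_pos (hcross a' ha' b' hb'), Pi.single_apply]
          by_cases h1' : a' = a
          · by_cases h2' : b' = b
            · subst h1'; subst h2'; simp
            · rw [if_pos h1', if_neg h2', if_neg]
              intro hh
              have hval : s(a',b') = s(a,b) := by
                have := Sum.inr.inj hh
                exact congrArg Subtype.val this
              rcases Sym2.eq_iff.mp hval with ⟨-, h4⟩ | ⟨h4, -⟩
              · exact h2' h4
              · exact hABr ha' (h4 ▸ hb)
          · rw [if_neg h1', if_neg]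
            intro hh
            have hval : s(a',b') = s(a,b) := by
              have := Sum.inr.inj hh
              exact congrArg Subtype.val this
            rcases Sym2.eq_iff.mp hval with ⟨h4, -⟩ | ⟨h4, h5⟩
            · exact h1' h4
            · exact hABr ha (h5 ▸ hb')
        rw [Finset.sum_congr rfl hterm]
        by_cases h1' : a' = a
        · simp only [if_pos h1']
          rw [Finset.sum_ite_eq' B b (fun _ => (1:ℝ)), if_pos hb]
        · simp only [if_neg h1']
          exact Finset.sum_const_zero
      rw [Finset.sum_congr rfl hinner, Finset.sum_ite_eq' A a (fun _ => (1:ℝ)), if_pos ha]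
    rw [h1, h2]
    ring
  have hf_single_inr_out : ∀ e : G.edgeSet, (∀ a ∈ A, ∀ b ∈ B, (e : Sym2 V) ≠ s(a,b)) →
      Fv (Pi.single (Sum.inr e) 1) = 0 := by
    intro e hno
    rw [hFv_apply]
    have h1 : ∑ u ∈ A ∪ B, (Pi.single (Sum.inr e) 1 : (V ⊕ G.edgeSet) → ℝ) (Sum.inl u) = 0 :=
      Finset.sum_eq_zero fun u _ => Pi.single_eq_of_ne (by simp) 1
    have h2 := hedge_zero (Pi.single (Sum.inr e) 1) (fun a ha b hb h => by
      refine Pi.single_eq_of_ne ?_ 1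
      intro hh
      have hval : s(a,b) = (e : Sym2 V) := by
        have := Sum.inr.inj hh
        exact congrArg Subtype.val this
      exact hno a ha b hb hval.symm)
    rw [h1, h2]
    ring
  -- linearity
  have hdsplit_add : ∀ (p : Prop) (inst : Decidable p) (f g : p → ℝ),
      (dite p (fun h => f h + g h) (fun _ => 0)) = dite p f (fun _ => 0) + dite p g (fun _ => 0) := by
    intros p inst f g
    split <;> simp
  have hdsplit_mul : ∀ (p : Prop) (inst : Decidable p) (c : ℝ) (f : p → ℝ),
      (dite p (fun h => c * f h) (fun _ => 0)) = c * dite p f (fun _ => 0) := by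
    intros p inst c f
    split <;> simp
  have hf_add : ∀ x y, Fv (x + y) = Fv x + Fv y := by
    intro x y
    simp only [hFv_apply, Pi.add_apply, hdsplit_add, Finset.sum_add_distrib]
    ring
  have hf_smul : ∀ (c : ℝ) x, Fv (c • x) = c * Fv x := by
    intro c x
    simp only [hFv_apply, Pi.smul_apply, smul_eq_mul, hdsplit_mul, ← Finset.mul_sum]
    ring
  have hf_sub : ∀ x y, Fv (x - y) = Fv x - Fv y := by
    intro x y
    have h := hf_add (x - y) y
    rw [sub_add_cancel] at h
    linarith
  -- validity
  have hvalid : ∀ z ∈ totalMatchingPolytope G, Fv z ≤ (r : ℝ) := by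
    intro z hz
    have hconv : Convex ℝ {w : (V ⊕ G.edgeSet) → ℝ | Fv w ≤ (r:ℝ)} :=
      convex_halfSpace_le ⟨hf_add, hf_smul⟩ _
    refine convexHull_min ?_ hconv hz
    rintro w ⟨T, hT, rfl⟩
    show Fv (charVec G T) ≤ (r:ℝ)
    rw [hFv_apply, hsum_union]
    have hAcast : ((A.card : ℝ)) = r := by rw [hA]
    have hBcast : ((B.card : ℝ)) = r := by rw [hB]
    by_cases hBT : ∀ b ∈ B, Sum.inl b ∉ T
    · have hkey := my_valid_key (A := A) (B := B) hT
      have hB0 : ∑ b ∈ B, charVec G T (Sum.inl b) = 0 :=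
        Finset.sum_eq_zero fun b hb => my_charVec_of_not_mem (hBT b hb)
      rw [hB0]
      linarith [hkey]
    · push_neg at hBT
      obtain ⟨b0, hb0B, hb0T⟩ := hBT
      have hA0 : ∀ a ∈ A, Sum.inl a ∉ T := by
        intro a ha haT
        refine hT _ haT _ hb0T (fun hh => hABr ha (Sum.inl.inj hh ▸ hb0B)) ?_
        exact hcross a ha b0 hb0B
      have hkey := my_valid_key (A := B) (B := A) hT
      have hswap : ∑ a ∈ A, ∑ b ∈ B, (if h : G.Adj a b then
          charVec G T (Sum.inr ⟨s(a,b), G.mem_edgeSet.mpr h⟩) else 0)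
          = ∑ b ∈ B, ∑ a ∈ A, (if h : G.Adj b a then
          charVec G T (Sum.inr ⟨s(b,a), G.mem_edgeSet.mpr h⟩) else 0) := by
        rw [Finset.sum_comm]
        refine Finset.sum_congr rfl fun b hb => Finset.sum_congr rfl fun a ha => ?_
        by_cases h : G.Adj a b
        · rw [dif_pos h, dif_pos h.symm]
          congr 1
          exact congrArg Sum.inr (Subtype.ext Sym2.eq_swap)
        · rw [dif_neg h, dif_neg (fun hh => h hh.symm)]
      have hAz : ∑ a ∈ A, charVec G T (Sum.inl a) = 0 :=
        Finset.sum_eq_zero fun a ha => my_charVec_of_not_mem (hA0 a ha)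
      rw [hAz, hswap]
      linarith [hkey]
  -- the tight set
  have hSmem : ∀ T, IsTotalMatching G T → Fv (charVec G T) = r →
      charVec G T ∈ {z ∈ totalMatchingPolytope G | Fv z = (r:ℝ)} :=
    fun T h1 h2 => ⟨subset_convexHull ℝ _ ⟨T, h1, rfl⟩, h2⟩
  have hdiffS : ∀ {z1 z2 : (V ⊕ G.edgeSet) → ℝ},
      z1 ∈ {z ∈ totalMatchingPolytope G | Fv z = (r:ℝ)} →
      z2 ∈ {z ∈ totalMatchingPolytope G | Fv z = (r:ℝ)} →
      z1 - z2 ∈ vectorSpan ℝ {z ∈ totalMatchingPolytope G | Fv z = (r:ℝ)} := by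
    intro z1 z2 h1 h2
    have := vsub_mem_vectorSpan ℝ h1 h2
    rwa [vsub_eq_sub] at this
  have hTA_S := hSmem _ (my_tm_vset hindA) hf_TA
  have hTB_S := hSmem _ (my_tm_vset hindB) hf_TB
  have hM_tm : IsTotalMatching G M := my_tm_pm hdisj m hmB hminj
  have hM_S := hSmem _ hM_tm hf_M
  -- generators
  have g1 : ∀ a (ha : a ∈ A), ∀ b (hb : b ∈ B),
      (Pi.single (Sum.inr (⟨s(a,b), G.mem_edgeSet.mpr (hcross a ha b hb)⟩ : G.edgeSet)) 1
        - Pi.single (Sum.inl a) 1 : (V ⊕ G.edgeSet) → ℝ)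
      ∈ vectorSpan ℝ {z ∈ totalMatchingPolytope G | Fv z = (r:ℝ)} := by
    intro a ha b hb
    have hm1 : IsTotalMatching G (insert
        (Sum.inr (⟨s(a,b), G.mem_edgeSet.mpr (hcross a ha b hb)⟩ : G.edgeSet))
        (Sum.inl '' ((A.erase a : Finset V) : Set V))) :=
      my_tm_swap hindA (fun hbA => hABr hbA hb) _ rfl
    have hswap := my_charVec_swapset (G := G) ha
      (⟨s(a,b), G.mem_edgeSet.mpr (hcross a ha b hb)⟩ : G.edgeSet)
    have hfT1 : Fv (charVec G (insert
        (Sum.inr (⟨s(a,b), G.mem_edgeSet.mpr (hcross a ha b hb)⟩ : G.edgeSet))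
        (Sum.inl '' ((A.erase a : Finset V) : Set V)))) = r := by
      rw [hswap, hf_sub, hf_add, hf_TA, hf_single_inr_in a ha b hb, hf_single_inl,
        if_pos (Finset.mem_union_left _ ha)]
      ring
    have hd := hdiffS (hSmem _ hm1 hfT1) hTA_S
    rw [hswap] at hd
    rwa [show charVec G (Sum.inl '' (A : Set V))
        + Pi.single (Sum.inr (⟨s(a,b), G.mem_edgeSet.mpr (hcross a ha b hb)⟩ : G.edgeSet)) 1
        - Pi.single (Sum.inl a) 1 - charVec G (Sum.inl '' (A : Set V))
        = Pi.single (Sum.inr (⟨s(a,b), G.mem_edgeSet.mpr (hcross a ha b hb)⟩ : G.edgeSet)) 1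
          - Pi.single (Sum.inl a) 1 from by abel] at hd
  have g2 : ∀ a (ha : a ∈ A), ∀ b (hb : b ∈ B),
      (Pi.single (Sum.inr (⟨s(a,b), G.mem_edgeSet.mpr (hcross a ha b hb)⟩ : G.edgeSet)) 1
        - Pi.single (Sum.inl b) 1 : (V ⊕ G.edgeSet) → ℝ)
      ∈ vectorSpan ℝ {z ∈ totalMatchingPolytope G | Fv z = (r:ℝ)} := by
    intro a ha b hb
    have hm1 : IsTotalMatching G (insert
        (Sum.inr (⟨s(a,b), G.mem_edgeSet.mpr (hcross a ha b hb)⟩ : G.edgeSet))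
        (Sum.inl '' ((B.erase b : Finset V) : Set V))) :=
      my_tm_swap hindB (fun haB => hABr ha haB) _ Sym2.eq_swap
    have hswap := my_charVec_swapset (G := G) hb
      (⟨s(a,b), G.mem_edgeSet.mpr (hcross a ha b hb)⟩ : G.edgeSet)
    have hfT1 : Fv (charVec G (insert
        (Sum.inr (⟨s(a,b), G.mem_edgeSet.mpr (hcross a ha b hb)⟩ : G.edgeSet))
        (Sum.inl '' ((B.erase b : Finset V) : Set V)))) = r := by
      rw [hswap, hf_sub, hf_add, hf_TB, hf_single_inr_in a ha b hb, hf_single_inl,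
        if_pos (Finset.mem_union_right _ hb)]
      ring
    have hd := hdiffS (hSmem _ hm1 hfT1) hTB_S
    rw [hswap] at hd
    rwa [show charVec G (Sum.inl '' (B : Set V))
        + Pi.single (Sum.inr (⟨s(a,b), G.mem_edgeSet.mpr (hcross a ha b hb)⟩ : G.edgeSet)) 1
        - Pi.single (Sum.inl b) 1 - charVec G (Sum.inl '' (B : Set V))
        = Pi.single (Sum.inr (⟨s(a,b), G.mem_edgeSet.mpr (hcross a ha b hb)⟩ : G.edgeSet)) 1
          - Pi.single (Sum.inl b) 1 from by abel] at hd
  have hvb : ∀ b (hb : b ∈ B),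
      (Pi.single (Sum.inl b) 1 - Pi.single (Sum.inl a1) 1 : (V ⊕ G.edgeSet) → ℝ)
      ∈ vectorSpan ℝ {z ∈ totalMatchingPolytope G | Fv z = (r:ℝ)} := by
    intro b hb
    have h := Submodule.sub_mem _ (g1 a1 ha1 b hb) (g2 a1 ha1 b hb)
    rwa [show (Pi.single (Sum.inr (⟨s(a1,b), G.mem_edgeSet.mpr (hcross a1 ha1 b hb)⟩ : G.edgeSet)) 1
        - Pi.single (Sum.inl a1) 1 : (V ⊕ G.edgeSet) → ℝ)
        - (Pi.single (Sum.inr (⟨s(a1,b), G.mem_edgeSet.mpr (hcross a1 ha1 b hb)⟩ : G.edgeSet)) 1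
        - Pi.single (Sum.inl b) 1)
        = Pi.single (Sum.inl b) 1 - Pi.single (Sum.inl a1) 1 from by abel] at h
  have hva : ∀ a (ha : a ∈ A),
      (Pi.single (Sum.inl a) 1 - Pi.single (Sum.inl a1) 1 : (V ⊕ G.edgeSet) → ℝ)
      ∈ vectorSpan ℝ {z ∈ totalMatchingPolytope G | Fv z = (r:ℝ)} := by
    intro a ha
    have h := Submodule.sub_mem _
      (Submodule.add_mem _ (g2 a ha b1 hb1) (hvb b1 hb1)) (g1 a ha b1 hb1)
    rwa [show (Pi.single (Sum.inr (⟨s(a,b1), G.mem_edgeSet.mpr (hcross a ha b1 hb1)⟩ : G.edgeSet)) 1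
        - Pi.single (Sum.inl b1) 1
        + (Pi.single (Sum.inl b1) 1 - Pi.single (Sum.inl a1) 1) : (V ⊕ G.edgeSet) → ℝ)
        - (Pi.single (Sum.inr (⟨s(a,b1), G.mem_edgeSet.mpr (hcross a ha b1 hb1)⟩ : G.edgeSet)) 1
        - Pi.single (Sum.inl a) 1)
        = Pi.single (Sum.inl a) 1 - Pi.single (Sum.inl a1) 1 from by abel] at h
  have hve : ∀ a (ha : a ∈ A), ∀ b (hb : b ∈ B),
      (Pi.single (Sum.inr (⟨s(a,b), G.mem_edgeSet.mpr (hcross a ha b hb)⟩ : G.edgeSet)) 1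
        - Pi.single (Sum.inl a1) 1 : (V ⊕ G.edgeSet) → ℝ)
      ∈ vectorSpan ℝ {z ∈ totalMatchingPolytope G | Fv z = (r:ℝ)} := by
    intro a ha b hb
    have h := Submodule.add_mem _ (g1 a ha b hb) (hva a ha)
    rwa [show (Pi.single (Sum.inr (⟨s(a,b), G.mem_edgeSet.mpr (hcross a ha b hb)⟩ : G.edgeSet)) 1
        - Pi.single (Sum.inl a) 1 : (V ⊕ G.edgeSet) → ℝ)
        + (Pi.single (Sum.inl a) 1 - Pi.single (Sum.inl a1) 1)
        = Pi.single (Sum.inr (⟨s(a,b), G.mem_edgeSet.mpr (hcross a ha b hb)⟩ : G.edgeSet)) 1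
          - Pi.single (Sum.inl a1) 1 from by abel] at h
  have hnv : ∀ v : V, v ∉ A → v ∉ B →
      (Pi.single (Sum.inl v) 1 : (V ⊕ G.edgeSet) → ℝ)
      ∈ vectorSpan ℝ {z ∈ totalMatchingPolytope G | Fv z = (r:ℝ)} := by
    intro v hvA hvB
    have hm1 : IsTotalMatching G (insert (Sum.inl v) M) := by
      refine my_tm_insert hM_tm ?_
      rintro d' ⟨a, ha, h, rfl⟩
      have hnadj : ¬ v ∈ s(a, m a) := by
        intro hmem
        rcases Sym2.mem_iff.mp hmem with rfl | rfl
        · exact hvA ha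
        · exact hvB (hmB a ha)
      exact ⟨hnadj, hnadj⟩
    have hins := my_charVec_insert (G := G) (hMnotinl v)
    have hfT1 : Fv (charVec G (insert (Sum.inl v) M)) = r := by
      rw [hins, hf_add, hf_M, hf_single_inl,
        if_neg (fun hvu => (Finset.mem_union.mp hvu).elim hvA hvB)]
      ring
    have hd := hdiffS (hSmem _ hm1 hfT1) hM_S
    rw [hins] at hd
    rwa [show charVec G M + Pi.single (Sum.inl v) 1 - charVec G M
        = (Pi.single (Sum.inl v) 1 : (V ⊕ G.edgeSet) → ℝ) from by abel] at hd
  have hnE : ∀ e : G.edgeSet, (∀ a ∈ A, ∀ b ∈ B, (e : Sym2 V) ≠ s(a,b)) →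
      (Pi.single (Sum.inr e) 1 : (V ⊕ G.edgeSet) → ℝ)
      ∈ vectorSpan ℝ {z ∈ totalMatchingPolytope G | Fv z = (r:ℝ)} := by
    intro e hno
    have hsplit : (∀ v ∈ (e : Sym2 V), v ∉ A) ∨ (∀ v ∈ (e : Sym2 V), v ∉ B) := by
      by_contra h
      push_neg at h
      obtain ⟨⟨x, hxe, hxA⟩, ⟨y, hye, hyB⟩⟩ := h
      have hxy : x ≠ y := fun hh => (hABr hxA) (hh ▸ hyB)
      exact hno x hxA y hyB ((Sym2.mem_and_mem_iff hxy).mp ⟨hxe, hye⟩)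
    have hnotm : ∀ (C : Finset V), (Sum.inr e : V ⊕ G.edgeSet) ∉ Sum.inl '' (C : Set V) := by
      rintro C ⟨c, hc, hh⟩
      exact Sum.inl_ne_inr hh
    rcases hsplit with h | h
    · have hm1 := my_tm_vset_insert_edge hindA e h
      have hins := my_charVec_insert (G := G) (hnotm A)
      have hfT1 : Fv (charVec G (insert (Sum.inr e) (Sum.inl '' (A : Set V)))) = r := by
        rw [hins, hf_add, hf_TA, hf_single_inr_out e hno]
        ring
      have hd := hdiffS (hSmem _ hm1 hfT1) hTA_S
      rw [hins] at hd
      rwa [show charVec G (Sum.inl '' (A : Set V)) + Pi.single (Sum.inr e) 1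
          - charVec G (Sum.inl '' (A : Set V))
          = (Pi.single (Sum.inr e) 1 : (V ⊕ G.edgeSet) → ℝ) from by abel] at hd
    · have hm1 := my_tm_vset_insert_edge hindB e h
      have hins := my_charVec_insert (G := G) (hnotm B)
      have hfT1 : Fv (charVec G (insert (Sum.inr e) (Sum.inl '' (B : Set V)))) = r := by
        rw [hins, hf_add, hf_TB, hf_single_inr_out e hno]
        ring
      have hd := hdiffS (hSmem _ hm1 hfT1) hTB_S
      rw [hins] at hd
      rwa [show charVec G (Sum.inl '' (B : Set V)) + Pi.single (Sum.inr e) 1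
          - charVec G (Sum.inl '' (B : Set V))
          = (Pi.single (Sum.inr e) 1 : (V ⊕ G.edgeSet) → ℝ) from by abel] at hd
  -- the independent family
  have hmemu : ∀ d : V ⊕ G.edgeSet,
      (Pi.single d 1 - Pi.single (Sum.inl a1) (Fv (Pi.single d 1)) : (V ⊕ G.edgeSet) → ℝ)
      ∈ vectorSpan ℝ {z ∈ totalMatchingPolytope G | Fv z = (r:ℝ)} := by
    rintro (v | e)
    · by_cases hvA : v ∈ A
      · rw [hf_single_inl, if_pos (Finset.mem_union_left _ hvA)]
        exact hva v hvA
      · by_cases hvB : v ∈ B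
        · rw [hf_single_inl, if_pos (Finset.mem_union_right _ hvB)]
          exact hvb v hvB
        · rw [hf_single_inl,
            if_neg (fun hvu => (Finset.mem_union.mp hvu).elim hvA hvB),
            Pi.single_zero, sub_zero]
          exact hnv v hvA hvB
    · by_cases hk : ∃ a ∈ A, ∃ b ∈ B, (e : Sym2 V) = s(a,b)
      · obtain ⟨a, ha, b, hb, heq⟩ := hk
        have he : e = ⟨s(a,b), G.mem_edgeSet.mpr (hcross a ha b hb)⟩ := Subtype.ext heq
        rw [he, hf_single_inr_in a ha b hb]
        exact hve a ha b hb
      · push_neg at hk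
        rw [hf_single_inr_out e hk, Pi.single_zero, sub_zero]
        exact hnE e hk
  -- dimension count
  have hlin : IsLinearMap ℝ Fv := ⟨hf_add, hf_smul⟩
  let Flin : ((V ⊕ G.edgeSet) → ℝ) →ₗ[ℝ] ℝ := IsLinearMap.mk' Fv hlin
  have hker : vectorSpan ℝ {z ∈ totalMatchingPolytope G | Fv z = (r:ℝ)}
      ≤ LinearMap.ker Flin := by
    refine Submodule.span_le.mpr ?_
    rintro w ⟨x, hx, y, hy, rfl⟩
    rw [SetLike.mem_coe, LinearMap.mem_ker]
    show Flin (x - y) = 0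
    have : Flin (x - y) = Fv x - Fv y := by
      rw [map_sub]; rfl
    rw [this, hx.2, hy.2, sub_self]
  have hker_ne : LinearMap.ker Flin ≠ ⊤ := by
    intro h
    have h0 : Flin (charVec G (Sum.inl '' (A : Set V))) = 0 := by
      rw [LinearMap.ker_eq_top.mp h]; rfl
    have h1 : Flin (charVec G (Sum.inl '' (A : Set V))) = r := hf_TA
    rw [h0] at h1
    have : (r : ℝ) ≠ 0 := by
      simp only [ne_eq, Nat.cast_eq_zero]
      omega
    exact this h1.symm
  have hcardD : Fintype.card (V ⊕ G.edgeSet) = Fintype.card V + Fintype.card G.edgeSet :=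
    Fintype.card_sum
  have hup : Module.finrank ℝ (vectorSpan ℝ {z ∈ totalMatchingPolytope G | Fv z = (r:ℝ)})
      ≤ Fintype.card V + Fintype.card G.edgeSet - 1 := by
    have h1 := Submodule.finrank_mono hker
    have h2 : Module.finrank ℝ (LinearMap.ker Flin)
        < Module.finrank ℝ ((V ⊕ G.edgeSet) → ℝ) :=
      Submodule.finrank_lt hker_ne
    rw [Module.finrank_pi, hcardD] at h2
    omega
  have hlow : Fintype.card V + Fintype.card G.edgeSet - 1
      ≤ Module.finrank ℝ (vectorSpan ℝ {z ∈ totalMatchingPolytope G | Fv z = (r:ℝ)}) := by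
    set u : {x : V ⊕ G.edgeSet // x ≠ Sum.inl a1} → ((V ⊕ G.edgeSet) → ℝ) :=
      fun d => Pi.single d.1 1 - Pi.single (Sum.inl a1) (Fv (Pi.single d.1 1)) with hu
    have hindep : LinearIndependent ℝ u :=
      my_indep_single_sub (Sum.inl a1) (fun d => Fv (Pi.single d 1))
    have hspan_le : Submodule.span ℝ (Set.range u)
        ≤ vectorSpan ℝ {z ∈ totalMatchingPolytope G | Fv z = (r:ℝ)} := by
      refine Submodule.span_le.mpr ?_
      rintro w ⟨d, rfl⟩
      exact hmemu d.1
    have h1 : Module.finrank ℝ (Submodule.span ℝ (Set.range u))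
        = Fintype.card {x : V ⊕ G.edgeSet // x ≠ Sum.inl a1} :=
      finrank_span_eq_card hindep
    have h2 : Fintype.card {x : V ⊕ G.edgeSet // x ≠ Sum.inl a1}
        = Fintype.card (V ⊕ G.edgeSet) - 1 := by
      have h3 : Fintype.card {x : V ⊕ G.edgeSet // ¬ (x = Sum.inl a1)}
          = Fintype.card (V ⊕ G.edgeSet)
            - Fintype.card {x : V ⊕ G.edgeSet // x = Sum.inl a1} :=
        Fintype.card_subtype_compl _
      rw [Fintype.card_subtype_eq] at h3
      exact h3
    have h4 := Submodule.finrank_mono hspan_le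
    rw [h1, h2, hcardD] at h4
    exact h4
  exact ⟨hvalid, le_antisymm hup hlow⟩
end

section
/- Let G be a complete bipartite graph with vertex bipartition (A₀,B₀), edge weights u∈ℤ^{E(G)}, and k∈ℕ, and let r,ℓ be positive integers with ℓ≤r, r≤|A₀|, ℓ≤|B₀|. Let G' be the complete bipartite graph with bipartition (A',B') where A'=A₀ and B'=B₀∪B̄ for a set B̄ of r−ℓ new vertices. Define u'_e = u_e + ‖u‖_∞ for every edge e of G between A₀ and B₀, and u'_e = 1 + max_{f∈E(G)} u'_f for every edge e of G' incident to a vertex of B̄. Let k' = k + rℓ·‖u‖_∞ + r(r−ℓ)·(1 + max_{f∈E(G)} u'_f). Then there exist A⊆A', B⊆B' with |A|=|B|=r and Σ_{e∈A×B} u'(e) ≥ k' if and only if there exist Ã⊆A₀, B̃⊆B₀ with |Ã|=r, |B̃|=ℓ and Σ_{e∈Ã×B̃} u(e) ≥ k. -/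
open Finset

private lemma aux_sum_shift {α : Type*} (A T : Finset α) (u : α → α → ℤ) (M : ℤ) :
    ∑ a ∈ A, ∑ b ∈ T, (u a b + M)
      = (∑ a ∈ A, ∑ b ∈ T, u a b) + (A.card : ℤ) * (T.card : ℤ) * M := by
  simp [Finset.sum_add_distrib, Finset.sum_const, nsmul_eq_mul]
  ring

private lemma aux_sum_const {α : Type*} (A T : Finset α) (c : ℤ) :
    ∑ _a ∈ A, ∑ _b ∈ T, c = (A.card : ℤ) * (T.card : ℤ) * c := by
  simp [Finset.sum_const, nsmul_eq_mul]
  ring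

private lemma aux_sum_le {α : Type*} (A T : Finset α) (f : α → α → ℤ) (C : ℤ)
    (h : ∀ a ∈ A, ∀ b ∈ T, f a b ≤ C) :
    ∑ a ∈ A, ∑ b ∈ T, f a b ≤ (A.card : ℤ) * (T.card : ℤ) * C := by
  rw [← aux_sum_const A T C]
  exact Finset.sum_le_sum fun a ha => Finset.sum_le_sum fun b hb => h a ha b hb

set_option maxHeartbeats 1000000 in
/-- reduction of the weighted edge biclique decision problem to its
fixed-cardinality variant.  The complete bipartite graph `G` has bipartition `(A₀, B₀)`
and integer edge weights `u`; the complete bipartite graph `G'` has bipartition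
`(A₀, B₀ ∪ Bbar)` where `Bbar` is a set of `r - ℓ` new vertices, and edge weights `u'`. -/
theorem webdp_reduction_to_fixed_cardinality {α : Type*} [DecidableEq α]
    (A₀ B₀ Bbar : Finset α)
    (hAB : Disjoint A₀ B₀) (hBbarA : Disjoint Bbar A₀) (hBbarB : Disjoint Bbar B₀)
    (u : α → α → ℤ) (k : ℕ) (r ℓ : ℕ) (hℓ : 0 < ℓ) (hℓr : ℓ ≤ r)
    (hrA : r ≤ A₀.card) (hℓB : ℓ ≤ B₀.card) (hBbarcard : Bbar.card = r - ℓ)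
    (hne : (A₀ ×ˢ B₀).Nonempty)
    (M : ℤ) (hM : M = (A₀ ×ˢ B₀).sup' hne (fun p => |u p.1 p.2|))
    (Mx : ℤ) (hMx : Mx = (A₀ ×ˢ B₀).sup' hne (fun p => u p.1 p.2 + M))
    (u' : α → α → ℤ)
    (hu'₁ : ∀ a ∈ A₀, ∀ b ∈ B₀, u' a b = u a b + M)
    (hu'₂ : ∀ a ∈ A₀, ∀ b ∈ Bbar, u' a b = 1 + Mx)
    (k' : ℤ)
    (hk' : k' = (k : ℤ) + ((r * ℓ : ℕ) : ℤ) * M + ((r * (r - ℓ) : ℕ) : ℤ) * (1 + Mx)) :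
    (∃ A ⊆ A₀, ∃ B ⊆ B₀ ∪ Bbar, A.card = r ∧ B.card = r ∧
        k' ≤ ∑ a ∈ A, ∑ b ∈ B, u' a b) ↔
    (∃ Atil ⊆ A₀, ∃ Btil ⊆ B₀, Atil.card = r ∧ Btil.card = ℓ ∧
        (k : ℤ) ≤ ∑ a ∈ Atil, ∑ b ∈ Btil, u a b) := by
  have habs : ∀ a ∈ A₀, ∀ b ∈ B₀, |u a b| ≤ M := by
    intro a ha b hb
    rw [hM]
    have := Finset.le_sup' (s := A₀ ×ˢ B₀) (fun p => |u p.1 p.2|) (Finset.mk_mem_product ha hb)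
    exact this
  have hMxle : ∀ a ∈ A₀, ∀ b ∈ B₀, u a b + M ≤ Mx := by
    intro a ha b hb
    rw [hMx]
    have := Finset.le_sup' (s := A₀ ×ˢ B₀) (fun p => u p.1 p.2 + M) (Finset.mk_mem_product ha hb)
    exact this
  have hMx0 : 0 ≤ Mx := by
    obtain ⟨⟨a, b⟩, hp⟩ := hne
    rw [Finset.mem_product] at hp
    have h1 := abs_le.mp (habs a hp.1 b hp.2)
    have h2 := hMxle a hp.1 b hp.2
    linarith [h1.1]
  have hcast : ((r - ℓ : ℕ) : ℤ) = (r : ℤ) - (ℓ : ℤ) := by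
    omega
  constructor
  · -- forward direction
    rintro ⟨A, hA, B, hB, hAcard, hBcard, hsum⟩
    set Bb := B ∩ Bbar with hBb
    set Bt := B \ Bbar with hBt
    have hBtB₀ : Bt ⊆ B₀ := by
      intro x hx
      rw [hBt, Finset.mem_sdiff] at hx
      rcases Finset.mem_union.mp (hB hx.1) with h | h
      · exact h
      · exact absurd h hx.2
    have hsplit : B = Bt ∪ Bb := by
      rw [hBt, hBb, Finset.sdiff_union_inter]
    have hdisj : Disjoint Bt Bb := by
      exact Finset.sdiff_disjoint.mono_right Finset.inter_subset_right
    have hcards : Bt.card + Bb.card = r := by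
      rw [← hAcard] at hBcard ⊢
      rw [← hBcard, hsplit, Finset.card_union_of_disjoint hdisj]
    have hBbcard : Bb.card ≤ r - ℓ := by
      rw [← hBbarcard]
      exact Finset.card_le_card Finset.inter_subset_right
    have hℓBt : ℓ ≤ Bt.card := by omega
    obtain ⟨Bt', hBt'sub, hBt'card⟩ := Finset.exists_subset_card_eq hℓBt
    refine ⟨A, hA, Bt', hBt'sub.trans hBtB₀, hAcard, hBt'card, ?_⟩
    -- split the big sum
    have hsum1 : ∑ a ∈ A, ∑ b ∈ B, u' a b
        = (∑ a ∈ A, ∑ b ∈ Bt, u' a b) + ∑ a ∈ A, ∑ b ∈ Bb, u' a b := by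
      rw [hsplit, ← Finset.sum_add_distrib]
      exact Finset.sum_congr rfl fun a _ => Finset.sum_union hdisj
    have hBbval : ∑ a ∈ A, ∑ b ∈ Bb, u' a b
        = (A.card : ℤ) * (Bb.card : ℤ) * (1 + Mx) := by
      rw [← aux_sum_const A Bb (1 + Mx)]
      exact Finset.sum_congr rfl fun a ha => Finset.sum_congr rfl fun b hb =>
        hu'₂ a (hA ha) b (Finset.inter_subset_right hb)
    have hBtval : ∑ a ∈ A, ∑ b ∈ Bt, u' a b
        = ∑ a ∈ A, ∑ b ∈ Bt, (u a b + M) :=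
      Finset.sum_congr rfl fun a ha => Finset.sum_congr rfl fun b hb =>
        hu'₁ a (hA ha) b (hBtB₀ hb)
    have hsplit2 : Bt = Bt' ∪ (Bt \ Bt') := by rw [Finset.union_sdiff_of_subset hBt'sub]
    have hdisj2 : Disjoint Bt' (Bt \ Bt') := Finset.disjoint_sdiff
    have hsum2 : ∑ a ∈ A, ∑ b ∈ Bt, (u a b + M)
        = (∑ a ∈ A, ∑ b ∈ Bt', (u a b + M)) + ∑ a ∈ A, ∑ b ∈ Bt \ Bt', (u a b + M) := by
      conv_lhs => rw [hsplit2]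
      rw [← Finset.sum_add_distrib]
      exact Finset.sum_congr rfl fun a _ => Finset.sum_union hdisj2
    have hrest : ∑ a ∈ A, ∑ b ∈ Bt \ Bt', (u a b + M)
        ≤ (A.card : ℤ) * ((Bt \ Bt').card : ℤ) * Mx := by
      apply aux_sum_le
      intro a ha b hb
      exact hMxle a (hA ha) b (hBtB₀ (Finset.mem_sdiff.mp hb).1)
    have hshift := aux_sum_shift A Bt' u M
    -- numerical wrap-up
    rw [hsum1, hBbval, hBtval, hsum2, hshift, hk'] at hsum
    have ha : ((A.card : ℕ) : ℤ) = r := by exact_mod_cast hAcard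
    have hb' : ((Bt'.card : ℕ) : ℤ) = ℓ := by exact_mod_cast hBt'card
    have hsd : (((Bt \ Bt').card : ℕ) : ℤ) = (Bt.card : ℤ) - ℓ := by
      rw [Finset.card_sdiff_of_subset hBt'sub, hBt'card]
      omega
    rw [ha, hb'] at hsum
    rw [ha, hsd] at hrest
    have hbb : (Bt.card : ℤ) + (Bb.card : ℤ) = r := by exact_mod_cast hcards
    have hbt : (ℓ : ℤ) ≤ (Bt.card : ℤ) := by exact_mod_cast hℓBt
    have hr0 : (0 : ℤ) ≤ (r : ℤ) := by positivity
    push_cast [hcast] at hsum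
    have hc : (Bb.card : ℤ) = (r : ℤ) - (Bt.card : ℤ) := by linarith
    rw [hc] at hsum
    linarith [hsum, hrest,
      mul_nonneg hr0 (by linarith : (0 : ℤ) ≤ (Bt.card : ℤ) - ℓ)]
  · -- backward direction
    rintro ⟨Atil, hAt, Btil, hBtsub, hAc, hBc, hsum⟩
    have hdisj : Disjoint Btil Bbar := (hBbarB.mono_left (le_refl _)).symm.mono_left hBtsub
    refine ⟨Atil, hAt, Btil ∪ Bbar,
      Finset.union_subset_union hBtsub (Finset.Subset.refl _), hAc, ?_, ?_⟩
    · rw [Finset.card_union_of_disjoint hdisj, hBc, hBbarcard]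
      omega
    · have hsum1 : ∑ a ∈ Atil, ∑ b ∈ Btil ∪ Bbar, u' a b
          = (∑ a ∈ Atil, ∑ b ∈ Btil, u' a b) + ∑ a ∈ Atil, ∑ b ∈ Bbar, u' a b := by
        rw [← Finset.sum_add_distrib]
        exact Finset.sum_congr rfl fun a _ => Finset.sum_union hdisj
      have hBtval : ∑ a ∈ Atil, ∑ b ∈ Btil, u' a b
          = (∑ a ∈ Atil, ∑ b ∈ Btil, u a b) + (Atil.card : ℤ) * (Btil.card : ℤ) * M := by
        rw [← aux_sum_shift]
        exact Finset.sum_congr rfl fun a ha => Finset.sum_congr rfl fun b hb =>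
          hu'₁ a (hAt ha) b (hBtsub hb)
      have hBbval : ∑ a ∈ Atil, ∑ b ∈ Bbar, u' a b
          = (Atil.card : ℤ) * (Bbar.card : ℤ) * (1 + Mx) := by
        rw [← aux_sum_const Atil Bbar (1 + Mx)]
        exact Finset.sum_congr rfl fun a ha => Finset.sum_congr rfl fun b hb =>
          hu'₂ a (hAt ha) b hb
      rw [hsum1, hBtval, hBbval, hk', hAc, hBc, hBbarcard]
      push_cast [hcast]
      linarith [hsum]
end

section
/- Let K_{r,s} with s>r≥2 be a complete bipartite graph with vertex bipartition (A,B), |A|=r, |B|=s, and let A₁⊆A, B₁⊆B with |A|>|A₁|>|B₁| and such that if |B₁|=0 then |A₁|=1. Let β=(s+|A₁|−r−|B₁|)/(|A₁|−|B₁|), and for each element d of K_{r,s} let α_d=β if d∈A₁∪B₁∪(A₁×B₁) and α_d=1 otherwise. Then every characteristic vector (x,y) of a total matching of K_{r,s} satisfies Σ_{v∈A} α_v x_v + Σ_{w∈B} α_w x_w + Σ_{e∈E(K_{r,s})} α_e y_e ≤ |A₁|(β−1)+|A|. -/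
open Finset

variable {V : Type*}

/-- `G` is the complete bipartite graph with vertex bipartition `(A, B)`. -/
def IsCompleteBipartiteWith [Fintype V] [DecidableEq V]
    (G : SimpleGraph V) (A B : Finset V) : Prop :=
  Disjoint A B ∧ A ∪ B = Finset.univ ∧
    ∀ v w, G.Adj v w ↔ ((v ∈ A ∧ w ∈ B) ∨ (v ∈ B ∧ w ∈ A))

private lemma card_aux' {α : Type*} [DecidableEq α] (X : Finset α) (P : Finset (α × α))
    (C : Finset α) (f : α × α → α) (hX : X ⊆ C) (hP : ∀ p ∈ P, f p ∈ C)
    (hinj : ∀ p ∈ P, ∀ q ∈ P, f p = f q → p = q)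
    (hd : ∀ p ∈ P, f p ∉ X) : X.card + P.card ≤ C.card := by
  have himg : (P.image f).card = P.card :=
    Finset.card_image_of_injOn fun p hp q hq => hinj p hp q hq
  have hdisj : Disjoint X (P.image f) := by
    rw [Finset.disjoint_right]
    intro a ha hx
    obtain ⟨p, hp, rfl⟩ := Finset.mem_image.mp ha
    exact hd p hp hx
  calc X.card + P.card = (X ∪ P.image f).card := by
        rw [Finset.card_union_of_disjoint hdisj, himg]
    _ ≤ C.card := Finset.card_le_card (by
        intro a ha
        rcases Finset.mem_union.mp ha with h | h
        · exact hX h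
        · obtain ⟨p, hp, rfl⟩ := Finset.mem_image.mp h
          exact hP p hp)

private lemma sum_weight' {α : Type*} (S : Finset α) (P : α → Prop) [DecidablePred P] (β : ℝ) :
    ∑ v ∈ S, (if P v then β else 1) = (β - 1) * (S.filter P).card + S.card := by
  classical
  rw [← Finset.sum_filter_add_sum_filter_not S P]
  rw [Finset.sum_congr rfl (fun v hv => if_pos (Finset.mem_filter.mp hv).2),
    Finset.sum_congr rfl (fun v hv => if_neg (Finset.mem_filter.mp hv).2),
    Finset.sum_const, Finset.sum_const, nsmul_eq_mul, nsmul_eq_mul,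
    ← Finset.card_filter_add_card_filter_not (s := S) (p := P)]
  push_cast; ring

/-- validity of the non-balanced lifted biclique inequality for `K_{r,s}`. -/
theorem nonbalanced_lifted_biclique_inequality_valid
    [Fintype V] [DecidableEq V] (G : SimpleGraph V) [DecidableRel G.Adj]
    (r s : ℕ) (hr : 2 ≤ r) (hrs : r < s)
    (A B : Finset V) (hG : IsCompleteBipartiteWith G A B)
    (hA : A.card = r) (hB : B.card = s)
    (A₁ B₁ : Finset V) (hA₁ : A₁ ⊆ A) (hB₁ : B₁ ⊆ B)
    (hA₁lt : A₁.card < A.card) (hB₁lt : B₁.card < A₁.card)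
    (hdeg : B₁.card = 0 → A₁.card = 1)
    (β : ℝ)
    (hβ : β = ((s : ℝ) + A₁.card - r - B₁.card) / ((A₁.card : ℝ) - B₁.card))
    (T : Set (V ⊕ G.edgeSet)) (hT : IsTotalMatching G T) :
    ∑ v ∈ A, (if v ∈ A₁ then β else 1) * charVec G T (Sum.inl v) +
      ∑ w ∈ B, (if w ∈ B₁ then β else 1) * charVec G T (Sum.inl w) +
      ∑ a ∈ A, ∑ b ∈ B,
        (if h : G.Adj a b then
          (if a ∈ A₁ ∧ b ∈ B₁ then β else 1) *
            charVec G T (Sum.inr ⟨s(a, b), G.mem_edgeSet.mpr h⟩)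
        else 0)
      ≤ (A₁.card : ℝ) * (β - 1) + A.card := by
  classical
  obtain ⟨hdisjAB, -, hadj⟩ := hG
  have hAdjAB : ∀ a ∈ A, ∀ b ∈ B, G.Adj a b := fun a ha b hb => (hadj a b).mpr (Or.inl ⟨ha, hb⟩)
  have hAB : ∀ a ∈ A, ∀ b ∈ B, a ≠ b := by
    intro a ha b hb h
    exact (Finset.disjoint_left.mp hdisjAB ha (h ▸ hb))
  set IA := A.filter (fun v => Sum.inl v ∈ T) with hIAdef
  set IB := B.filter (fun v => Sum.inl v ∈ T) with hIBdef
  set ME := (A ×ˢ B).filter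
      (fun p => ∃ e : G.edgeSet, (e : Sym2 V) = s(p.1, p.2) ∧ Sum.inr e ∈ T) with hMEdef
  have hMEmem : ∀ p ∈ ME, p.1 ∈ A ∧ p.2 ∈ B ∧
      ∃ e : G.edgeSet, (e : Sym2 V) = s(p.1, p.2) ∧ Sum.inr e ∈ T := by
    intro p hp
    obtain ⟨hp1, hp2⟩ := Finset.mem_filter.mp hp
    obtain ⟨h1, h2⟩ := Finset.mem_product.mp hp1
    exact ⟨h1, h2, hp2⟩
  -- a vertex of the matching is not an endpoint of an edge of the matching
  have hVE : ∀ v, Sum.inl v ∈ T → ∀ p ∈ ME, v ≠ p.1 ∧ v ≠ p.2 := by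
    intro v hv p hp
    obtain ⟨-, -, e, he, het⟩ := hMEmem p hp
    have hne : (Sum.inl v : V ⊕ G.edgeSet) ≠ Sum.inr e := by simp
    have hnadj := hT _ hv _ het hne
    simp only [elemAdj, he, Sym2.mem_iff] at hnadj
    push_neg at hnadj
    exact hnadj
  -- the edges of the matching are vertex-disjoint
  have hinj : ∀ p ∈ ME, ∀ q ∈ ME, (p.1 = q.1 ∨ p.2 = q.2) → p = q := by
    intro p hp q hq hfs
    obtain ⟨hpA, hpB, e, he, het⟩ := hMEmem p hp
    obtain ⟨hqA, hqB, f, hf, hft⟩ := hMEmem q hq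
    by_cases hef : e = f
    · have hmk : s(p.1, p.2) = s(q.1, q.2) := by rw [← he, ← hf, hef]
      rw [Sym2.eq_iff] at hmk
      rcases hmk with ⟨h1, h2⟩ | ⟨h1, h2⟩
      · exact Prod.ext h1 h2
      · exact absurd h1 (hAB _ hpA _ hqB)
    · exfalso
      have hne : (Sum.inr e : V ⊕ G.edgeSet) ≠ Sum.inr f := by simpa using hef
      have hnadj := hT _ het _ hft hne
      refine hnadj ?_
      show e ≠ f ∧ ∃ v, v ∈ (e : Sym2 V) ∧ v ∈ (f : Sym2 V)
      refine ⟨hef, ?_⟩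
      rcases hfs with h1 | h2
      · exact ⟨p.1, by rw [he]; exact Sym2.mem_mk_left _ _,
          by rw [hf, h1]; exact Sym2.mem_mk_left _ _⟩
      · exact ⟨p.2, by rw [he]; exact Sym2.mem_mk_right _ _,
          by rw [hf, h2]; exact Sym2.mem_mk_right _ _⟩
  -- all vertices of the matching are in A, or all in B
  have hcase : IA = ∅ ∨ IB = ∅ := by
    by_contra hc
    push_neg at hc
    obtain ⟨a, ha⟩ := hc.1
    obtain ⟨b, hb⟩ := hc.2
    obtain ⟨haA, haT⟩ := Finset.mem_filter.mp ha
    obtain ⟨hbB, hbT⟩ := Finset.mem_filter.mp hb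
    have hne : (Sum.inl a : V ⊕ G.edgeSet) ≠ Sum.inl b := by
      simpa using hAB a haA b hbB
    exact hT _ haT _ hbT hne (hAdjAB a haA b hbB)
  -- rewrite the three sums
  have hS1 : ∑ v ∈ A, (if v ∈ A₁ then β else 1) * charVec G T (Sum.inl v)
      = ∑ v ∈ IA, (if v ∈ A₁ then β else (1:ℝ)) := by
    rw [hIAdef, Finset.sum_filter]
    refine Finset.sum_congr rfl fun v _ => ?_
    simp only [charVec, Set.indicator_apply]
    split_ifs <;> simp
  have hS2 : ∑ w ∈ B, (if w ∈ B₁ then β else 1) * charVec G T (Sum.inl w)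
      = ∑ w ∈ IB, (if w ∈ B₁ then β else (1:ℝ)) := by
    rw [hIBdef, Finset.sum_filter]
    refine Finset.sum_congr rfl fun v _ => ?_
    simp only [charVec, Set.indicator_apply]
    split_ifs <;> simp
  have hS3 : (∑ a ∈ A, ∑ b ∈ B,
        (if h : G.Adj a b then
          (if a ∈ A₁ ∧ b ∈ B₁ then β else 1) *
            charVec G T (Sum.inr ⟨s(a, b), G.mem_edgeSet.mpr h⟩)
        else 0))
      = ∑ p ∈ ME, (if p.1 ∈ A₁ ∧ p.2 ∈ B₁ then β else (1:ℝ)) := by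
    rw [← Finset.sum_product']
    rw [hMEdef, Finset.sum_filter]
    refine Finset.sum_congr rfl fun p hp => ?_
    obtain ⟨hpA, hpB⟩ := Finset.mem_product.mp hp
    have hadjp : G.Adj p.1 p.2 := hAdjAB _ hpA _ hpB
    rw [dif_pos hadjp]
    have hQ : (∃ e : G.edgeSet, (e : Sym2 V) = s(p.1, p.2) ∧ Sum.inr e ∈ T) ↔
        Sum.inr (⟨s(p.1, p.2), G.mem_edgeSet.mpr hadjp⟩ : G.edgeSet) ∈ T := by
      constructor
      · rintro ⟨e, he, het⟩
        have he' : e = ⟨s(p.1, p.2), G.mem_edgeSet.mpr hadjp⟩ := Subtype.ext he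
        rwa [he'] at het
      · intro h; exact ⟨_, rfl, h⟩
    simp only [charVec, Set.indicator_apply, hQ]
    split_ifs <;> simp
  rw [hS1, hS2, hS3, sum_weight' IA (fun v => v ∈ A₁) β, sum_weight' IB (fun v => v ∈ B₁) β,
    sum_weight' ME (fun p => p.1 ∈ A₁ ∧ p.2 ∈ B₁) β]
  -- basic real-number facts about β
  have hd0 : (0:ℝ) < (A₁.card : ℝ) - B₁.card := sub_pos.mpr (Nat.cast_lt.mpr hB₁lt)
  have hkey : (β - 1) * ((A₁.card : ℝ) - (B₁.card : ℝ)) = (s : ℝ) - r := by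
    rw [hβ]; field_simp; ring
  have hsr : (0:ℝ) < (s : ℝ) - r := sub_pos.mpr (Nat.cast_lt.mpr hrs)
  have hβ1 : 0 ≤ β - 1 := by nlinarith [hkey, hd0, hsr]
  have hAr : (A.card : ℝ) = r := by exact_mod_cast congrArg Nat.cast hA
  have hBr : (B.card : ℝ) = s := by exact_mod_cast congrArg Nat.cast hB
  rcases hcase with hIAe | hIBe
  · -- all matching vertices in B: count against B₁ and B
    have hc1n : (IB.filter (fun v => v ∈ B₁)).card
        + (ME.filter (fun p => p.1 ∈ A₁ ∧ p.2 ∈ B₁)).card ≤ B₁.card := by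
      refine card_aux' _ _ _ Prod.snd (fun v hv => (Finset.mem_filter.mp hv).2)
        (fun p hp => (Finset.mem_filter.mp hp).2.2) ?_ ?_
      · intro p hp q hq h
        exact hinj p (Finset.filter_subset _ _ hp) q (Finset.filter_subset _ _ hq) (Or.inr h)
      · intro p hp hmem
        have hT2 : Sum.inl p.2 ∈ T := (Finset.mem_filter.mp ((Finset.mem_filter.mp hmem).1)).2
        exact (hVE p.2 hT2 p (Finset.filter_subset _ _ hp)).2 rfl
    have hc2n : IB.card + ME.card ≤ B.card := by
      refine card_aux' _ _ _ Prod.snd (Finset.filter_subset _ _)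
        (fun p hp => (hMEmem p hp).2.1) ?_ ?_
      · intro p hp q hq h; exact hinj p hp q hq (Or.inr h)
      · intro p hp hmem
        have hT2 : Sum.inl p.2 ∈ T := (Finset.mem_filter.mp hmem).2
        exact (hVE p.2 hT2 p hp).2 rfl
    have hc1 : ((IB.filter (fun v => v ∈ B₁)).card : ℝ)
        + ((ME.filter (fun p => p.1 ∈ A₁ ∧ p.2 ∈ B₁)).card : ℝ) ≤ (B₁.card : ℝ) := by
      exact_mod_cast hc1n
    have hc2 : (IB.card : ℝ) + (ME.card : ℝ) ≤ (B.card : ℝ) := by exact_mod_cast hc2n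
    have hmul : (β - 1) * (((IB.filter (fun v => v ∈ B₁)).card : ℝ)
        + ((ME.filter (fun p => p.1 ∈ A₁ ∧ p.2 ∈ B₁)).card : ℝ))
        ≤ (β - 1) * (B₁.card : ℝ) := mul_le_mul_of_nonneg_left hc1 hβ1
    simp only [hIAe, Finset.filter_empty, Finset.card_empty, Nat.cast_zero, mul_zero, zero_add,
      add_zero]
    nlinarith [hmul, hc2, hkey, hBr, hAr]
  · -- all matching vertices in A: count against A₁ and A
    have hc1n : (IA.filter (fun v => v ∈ A₁)).card
        + (ME.filter (fun p => p.1 ∈ A₁ ∧ p.2 ∈ B₁)).card ≤ A₁.card := by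
      refine card_aux' _ _ _ Prod.fst (fun v hv => (Finset.mem_filter.mp hv).2)
        (fun p hp => (Finset.mem_filter.mp hp).2.1) ?_ ?_
      · intro p hp q hq h
        exact hinj p (Finset.filter_subset _ _ hp) q (Finset.filter_subset _ _ hq) (Or.inl h)
      · intro p hp hmem
        have hT1 : Sum.inl p.1 ∈ T := (Finset.mem_filter.mp ((Finset.mem_filter.mp hmem).1)).2
        exact (hVE p.1 hT1 p (Finset.filter_subset _ _ hp)).1 rfl
    have hc2n : IA.card + ME.card ≤ A.card := by
      refine card_aux' _ _ _ Prod.fst (Finset.filter_subset _ _)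
        (fun p hp => (hMEmem p hp).1) ?_ ?_
      · intro p hp q hq h; exact hinj p hp q hq (Or.inl h)
      · intro p hp hmem
        have hT1 : Sum.inl p.1 ∈ T := (Finset.mem_filter.mp hmem).2
        exact (hVE p.1 hT1 p hp).1 rfl
    have hc1 : ((IA.filter (fun v => v ∈ A₁)).card : ℝ)
        + ((ME.filter (fun p => p.1 ∈ A₁ ∧ p.2 ∈ B₁)).card : ℝ) ≤ (A₁.card : ℝ) := by
      exact_mod_cast hc1n
    have hc2 : (IA.card : ℝ) + (ME.card : ℝ) ≤ (A.card : ℝ) := by exact_mod_cast hc2n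
    have hmul : (β - 1) * (((IA.filter (fun v => v ∈ A₁)).card : ℝ)
        + ((ME.filter (fun p => p.1 ∈ A₁ ∧ p.2 ∈ B₁)).card : ℝ))
        ≤ (β - 1) * (A₁.card : ℝ) := mul_le_mul_of_nonneg_left hc1 hβ1
    simp only [hIBe, Finset.filter_empty, Finset.card_empty, Nat.cast_zero, mul_zero, zero_add,
      add_zero]
    nlinarith [hmul, hc2]
end

section
/- Let K_{r,s} with s>r≥2 be a complete bipartite graph with vertex bipartition (A,B), |A|=r, |B|=s, and let A₁⊆A, B₁⊆B with |A|>|A₁|>|B₁| and such that if |B₁|=0 then |A₁|=1. Let β=(s+|A₁|−r−|B₁|)/(|A₁|−|B₁|), and for each element d of K_{r,s} let α_d=β if d∈A₁∪B₁∪(A₁×B₁) and α_d=1 otherwise. Then the non-balanced lifted biclique inequality Σ_{v∈A} α_v x_v + Σ_{w∈B} α_w x_w + Σ_{e∈E(K_{r,s})} α_e y_e ≤ |A₁|(β−1)+|A| is facet-defining for the total matching polytope P_T(K_{r,s}). -/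
open Finset

variable {V : Type*}

private lemma card_aux {α γ : Type*} [DecidableEq α] {S X : Finset α} {F : Finset γ}
    (g : γ → α) (hS : S ⊆ X) (hF : ∀ p ∈ F, g p ∈ X) (hd : ∀ p ∈ F, g p ∉ S)
    (hinj : ∀ p ∈ F, ∀ q ∈ F, g p = g q → p = q) : S.card + F.card ≤ X.card := by
  classical
  have himg : (F.image g).card = F.card := Finset.card_image_of_injOn hinj
  have hdisj : Disjoint S (F.image g) := by
    rw [Finset.disjoint_right]
    intro a ha hs
    obtain ⟨p, hp, rfl⟩ := Finset.mem_image.mp ha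
    exact hd p hp hs
  have hsub : S ∪ F.image g ⊆ X := Finset.union_subset hS (by
    intro a ha; obtain ⟨p, hp, rfl⟩ := Finset.mem_image.mp ha; exact hF p hp)
  calc S.card + F.card = S.card + (F.image g).card := by rw [himg]
    _ = (S ∪ F.image g).card := (Finset.card_union_of_disjoint hdisj).symm
    _ ≤ X.card := Finset.card_le_card hsub

private lemma key_validity [Fintype V] [DecidableEq V] (G : SimpleGraph V) [DecidableRel G.Adj]
    (r s : ℕ) (hrs : r < s)
    (A B : Finset V) (hG : IsCompleteBipartiteWith G A B)
    (hA : A.card = r) (hB : B.card = s)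
    (A₁ B₁ : Finset V) (hA₁ : A₁ ⊆ A) (hB₁ : B₁ ⊆ B)
    (hB₁lt : B₁.card < A₁.card)
    (β : ℝ) (hβ : β = ((s : ℝ) + A₁.card - r - B₁.card) / ((A₁.card : ℝ) - B₁.card))
    (T : Set (V ⊕ G.edgeSet)) (hT : IsTotalMatching G T) :
    ∑ v ∈ A, (if v ∈ A₁ then β else 1) * charVec G T (Sum.inl v) +
      ∑ w ∈ B, (if w ∈ B₁ then β else 1) * charVec G T (Sum.inl w) +
      ∑ a ∈ A, ∑ b ∈ B,
        (if h : G.Adj a b then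
          (if a ∈ A₁ ∧ b ∈ B₁ then β else 1) *
            charVec G T (Sum.inr ⟨s(a, b), G.mem_edgeSet.mpr h⟩)
        else 0)
      ≤ (A₁.card : ℝ) * (β - 1) + A.card := by
  classical
  -- basic numeric facts
  have hpq : (0:ℝ) < (A₁.card : ℝ) - B₁.card := by
    have : (B₁.card : ℝ) < A₁.card := by exact_mod_cast hB₁lt
    linarith
  have hβ1 : β - 1 = ((s:ℝ) - r) / ((A₁.card : ℝ) - B₁.card) := by
    rw [hβ]; field_simp; ring
  have hβpos : 0 ≤ β - 1 := by
    rw [hβ1]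
    apply div_nonneg _ (le_of_lt hpq)
    have : (r:ℝ) ≤ s := by exact_mod_cast hrs.le
    linarith
  have hkey : (β - 1) * ((A₁.card : ℝ) - B₁.card) = (s:ℝ) - r := by
    rw [hβ1]; field_simp
  -- adjacency facts
  have hAB : ∀ a ∈ A, ∀ b ∈ B, G.Adj a b := fun a ha b hb => (hG.2.2 a b).mpr (Or.inl ⟨ha, hb⟩)
  have hneAB : ∀ a ∈ A, ∀ b ∈ B, a ≠ b := fun a ha b hb => (hAB a ha b hb).ne
  -- the sets
  set SA := A.filter (fun v => Sum.inl v ∈ T) with hSA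
  set SB := B.filter (fun v => Sum.inl v ∈ T) with hSB
  set P : V → V → Prop := fun a b => ∃ e : G.edgeSet, (e : Sym2 V) = s(a, b) ∧ Sum.inr e ∈ T
    with hP
  set ET := (A ×ˢ B).filter (fun p => P p.1 p.2) with hET
  set E₁ := ET.filter (fun p => p.1 ∈ A₁ ∧ p.2 ∈ B₁) with hE₁
  -- rewriting the three sums
  have hvert : ∀ (X X₁ : Finset V),
      ∑ v ∈ X, (if v ∈ X₁ then β else 1) * charVec G T (Sum.inl v)
        = ((X.filter (fun v => Sum.inl v ∈ T)).card : ℝ)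
          + (β - 1) * (((X.filter (fun v => Sum.inl v ∈ T)).filter (fun v => v ∈ X₁)).card) := by
    intro X X₁
    have : ∀ v ∈ X, (if v ∈ X₁ then β else 1) * charVec G T (Sum.inl v)
        = (if Sum.inl v ∈ T then (1 + (β - 1) * (if v ∈ X₁ then 1 else 0)) else 0) := by
      intro v _
      simp only [charVec, Set.indicator_apply]
      split <;> split <;> simp <;> ring
    rw [Finset.sum_congr rfl this, ← Finset.sum_filter]
    rw [Finset.sum_add_distrib, Finset.sum_const, ← Finset.mul_sum, Finset.sum_boole]
    simp [nsmul_eq_mul]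
  have hedge : ∑ a ∈ A, ∑ b ∈ B,
      (if h : G.Adj a b then
        (if a ∈ A₁ ∧ b ∈ B₁ then β else 1) *
          charVec G T (Sum.inr ⟨s(a, b), G.mem_edgeSet.mpr h⟩)
      else 0) = (ET.card : ℝ) + (β - 1) * (E₁.card) := by
    rw [← Finset.sum_product']
    have step : ∀ p ∈ A ×ˢ B,
        (if h : G.Adj p.1 p.2 then
          (if p.1 ∈ A₁ ∧ p.2 ∈ B₁ then β else 1) *
            charVec G T (Sum.inr ⟨s(p.1, p.2), G.mem_edgeSet.mpr h⟩)
        else 0)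
        = (if P p.1 p.2 then (1 + (β - 1) * (if p.1 ∈ A₁ ∧ p.2 ∈ B₁ then 1 else 0)) else 0) := by
      intro p hp
      obtain ⟨hpa, hpb⟩ := Finset.mem_product.mp hp
      have h := hAB _ hpa _ hpb
      rw [dif_pos h]
      have hmem : (Sum.inr (⟨s(p.1, p.2), G.mem_edgeSet.mpr h⟩ : G.edgeSet) ∈ T) ↔ P p.1 p.2 := by
        constructor
        · intro h'; exact ⟨_, rfl, h'⟩
        · rintro ⟨e, he, hmemT⟩
          have : (⟨s(p.1, p.2), G.mem_edgeSet.mpr h⟩ : G.edgeSet) = e := Subtype.ext he.symm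
          rw [this]; exact hmemT
      simp only [charVec, Set.indicator_apply]
      rw [if_congr hmem rfl rfl]
      split <;> split <;> simp <;> ring
    rw [Finset.sum_congr rfl step, ← Finset.sum_filter]
    rw [Finset.sum_add_distrib, Finset.sum_const, ← Finset.mul_sum, Finset.sum_boole]
    simp [nsmul_eq_mul, hE₁, hET]
  rw [hvert A A₁, hvert B B₁, hedge]
  -- combinatorial facts
  have hSAsub : SA ⊆ A := Finset.filter_subset _ _
  have hSBsub : SB ⊆ B := Finset.filter_subset _ _
  have hETmem : ∀ p ∈ ET, p.1 ∈ A ∧ p.2 ∈ B := by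
    intro p hp
    exact Finset.mem_product.mp (Finset.mem_filter.mp hp).1
  have hETP : ∀ p ∈ ET, P p.1 p.2 := fun p hp => (Finset.mem_filter.mp hp).2
  -- at most one side has vertices
  have hside : SA = ∅ ∨ SB = ∅ := by
    by_contra hcon
    push_neg at hcon
    obtain ⟨ha, hb⟩ := hcon
    obtain ⟨a, haa⟩ := ha
    obtain ⟨b, hbb⟩ := hb
    obtain ⟨haA, haT⟩ := Finset.mem_filter.mp haa
    obtain ⟨hbB, hbT⟩ := Finset.mem_filter.mp hbb
    have hne : (Sum.inl a : V ⊕ G.edgeSet) ≠ Sum.inl b := by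
      simp [hneAB a haA b hbB]
    exact hT _ haT _ hbT hne (hAB a haA b hbB)
  -- edges in T form a matching: fst injective
  have hfst : ∀ p ∈ ET, ∀ q ∈ ET, p.1 = q.1 → p = q := by
    intro p hp q hq h1
    obtain ⟨e, he, heT⟩ := hETP p hp
    obtain ⟨f, hf, hfT⟩ := hETP q hq
    by_contra hne'
    have hbb : p.2 ≠ q.2 := fun h2 => hne' (Prod.ext h1 h2)
    have hef : e ≠ f := by
      intro h'
      rw [h', hf] at he
      rcases Sym2.eq_iff.mp he with ⟨_, h2⟩ | ⟨hc, _⟩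
      · exact hbb h2.symm
      · exact hneAB _ (hETmem q hq).1 _ (hETmem p hp).2 hc
    have hadj : elemAdj G (Sum.inr e) (Sum.inr f) := by
      refine ⟨hef, p.1, ?_, ?_⟩
      · rw [he]; exact Sym2.mem_mk_left _ _
      · rw [hf, ← h1]; exact Sym2.mem_mk_left _ _
    exact hT _ heT _ hfT (by simpa using hef) hadj
  have hsnd : ∀ p ∈ ET, ∀ q ∈ ET, p.2 = q.2 → p = q := by
    intro p hp q hq h2
    obtain ⟨e, he, heT⟩ := hETP p hp
    obtain ⟨f, hf, hfT⟩ := hETP q hq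
    by_contra hne'
    have haa : p.1 ≠ q.1 := fun h1 => hne' (Prod.ext h1 h2)
    have hef : e ≠ f := by
      intro h'
      rw [h', hf] at he
      rcases Sym2.eq_iff.mp he with ⟨h1, _⟩ | ⟨hc, _⟩
      · exact haa h1.symm
      · exact hneAB _ (hETmem q hq).1 _ (hETmem p hp).2 hc
    have hadj : elemAdj G (Sum.inr e) (Sum.inr f) := by
      refine ⟨hef, p.2, ?_, ?_⟩
      · rw [he]; exact Sym2.mem_mk_right _ _
      · rw [hf, ← h2]; exact Sym2.mem_mk_right _ _
    exact hT _ heT _ hfT (by simpa using hef) hadj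
  -- endpoints of edges in T are not vertices in T
  have hnotT : ∀ p ∈ ET, ∀ v, v ∈ (s(p.1, p.2) : Sym2 V) → Sum.inl v ∉ T := by
    intro p hp v hv hvT
    obtain ⟨e, he, heT⟩ := hETP p hp
    have hadj : elemAdj G (Sum.inl v) (Sum.inr e) := by
      show v ∈ (e : Sym2 V)
      rw [he]; exact hv
    exact hT _ hvT _ heT (by simp) hadj
  have hnotSA : ∀ p ∈ ET, p.1 ∉ SA := by
    intro p hp hmem
    exact hnotT p hp p.1 (Sym2.mem_mk_left _ _) (Finset.mem_filter.mp hmem).2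
  have hnotSB : ∀ p ∈ ET, p.2 ∉ SB := by
    intro p hp hmem
    exact hnotT p hp p.2 (Sym2.mem_mk_right _ _) (Finset.mem_filter.mp hmem).2
  have hE₁ET : E₁ ⊆ ET := Finset.filter_subset _ _
  -- the four card bounds
  have hc1 : SA.card + ET.card ≤ A.card :=
    card_aux Prod.fst hSAsub (fun p hp => (hETmem p hp).1) hnotSA hfst
  have hc2 : SB.card + ET.card ≤ B.card :=
    card_aux Prod.snd hSBsub (fun p hp => (hETmem p hp).2) hnotSB hsnd
  have hc3 : (SA.filter (fun v => v ∈ A₁)).card + E₁.card ≤ A₁.card := by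
    refine card_aux Prod.fst (fun v hv => (Finset.mem_filter.mp hv).2)
      (fun p hp => (Finset.mem_filter.mp hp).2.1)
      (fun p hp hmem => hnotSA p (hE₁ET hp) (Finset.mem_filter.mp hmem).1)
      (fun p hp q hq h => hfst p (hE₁ET hp) q (hE₁ET hq) h)
  have hc4 : (SB.filter (fun v => v ∈ B₁)).card + E₁.card ≤ B₁.card := by
    refine card_aux Prod.snd (fun v hv => (Finset.mem_filter.mp hv).2)
      (fun p hp => (Finset.mem_filter.mp hp).2.2)
      (fun p hp hmem => hnotSB p (hE₁ET hp) (Finset.mem_filter.mp hmem).1)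
      (fun p hp q hq h => hsnd p (hE₁ET hp) q (hE₁ET hq) h)
  -- final arithmetic
  have hrA : (A.card : ℝ) = r := by exact_mod_cast hA
  have hsB : (B.card : ℝ) = s := by exact_mod_cast hB
  rcases hside with h0 | h0
  · -- SA empty
    have e1 : SA.card = 0 := by rw [h0]; rfl
    have e2 : (SA.filter (fun v => v ∈ A₁)).card = 0 := by rw [h0]; rfl
    have b2 : ((SB.card : ℝ)) + ET.card ≤ s := by
      have := hc2; rw [← hsB]; exact_mod_cast this
    have b4 : ((SB.filter (fun v => v ∈ B₁)).card : ℝ) + E₁.card ≤ B₁.card := by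
      exact_mod_cast hc4
    have hmul : (β - 1) * (((SB.filter (fun v => v ∈ B₁)).card : ℝ) + E₁.card)
        ≤ (β - 1) * (B₁.card) := mul_le_mul_of_nonneg_left b4 hβpos
    rw [e1, e2, hrA]
    push_cast
    nlinarith [hkey, hmul, b2]
  · -- SB empty
    have e1 : SB.card = 0 := by rw [h0]; rfl
    have e2 : (SB.filter (fun v => v ∈ B₁)).card = 0 := by rw [h0]; rfl
    have b1 : ((SA.card : ℝ)) + ET.card ≤ r := by
      have := hc1; rw [← hrA]; exact_mod_cast this
    have b3 : ((SA.filter (fun v => v ∈ A₁)).card : ℝ) + E₁.card ≤ A₁.card := by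
      exact_mod_cast hc3
    have hmul : (β - 1) * (((SA.filter (fun v => v ∈ A₁)).card : ℝ) + E₁.card)
        ≤ (β - 1) * (A₁.card) := mul_le_mul_of_nonneg_left b3 hβpos
    rw [e1, e2, hrA]
    push_cast
    nlinarith [hmul, b1]

private lemma biclique_linear [Fintype V] [DecidableEq V] (G : SimpleGraph V) [DecidableRel G.Adj]
    (A B A₁ B₁ : Finset V) (β : ℝ) :
    IsLinearMap ℝ (fun z : (V ⊕ G.edgeSet) → ℝ =>
      ∑ v ∈ A, (if v ∈ A₁ then β else 1) * z (Sum.inl v) +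
        ∑ w ∈ B, (if w ∈ B₁ then β else 1) * z (Sum.inl w) +
        ∑ a ∈ A, ∑ b ∈ B,
          (if h : G.Adj a b then
            (if a ∈ A₁ ∧ b ∈ B₁ then β else 1) *
              z (Sum.inr ⟨s(a, b), G.mem_edgeSet.mpr h⟩)
          else 0)) := by
  constructor
  · intro x y
    have h3 : ∀ (a : V), a ∈ A → ∀ (b : V), b ∈ B →
        (if h : G.Adj a b then
          (if a ∈ A₁ ∧ b ∈ B₁ then β else 1) *
            (x + y) (Sum.inr ⟨s(a, b), G.mem_edgeSet.mpr h⟩)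
        else 0)
        = (if h : G.Adj a b then
          (if a ∈ A₁ ∧ b ∈ B₁ then β else 1) *
            x (Sum.inr ⟨s(a, b), G.mem_edgeSet.mpr h⟩) else 0)
        + (if h : G.Adj a b then
          (if a ∈ A₁ ∧ b ∈ B₁ then β else 1) *
            y (Sum.inr ⟨s(a, b), G.mem_edgeSet.mpr h⟩) else 0) := by
      intro a _ b _
      by_cases h : G.Adj a b
      · simp [h, mul_add]
      · simp [h]
    rw [Finset.sum_congr rfl (fun a ha => Finset.sum_congr rfl (fun b hb => h3 a ha b hb))]
    rw [Finset.sum_congr rfl (fun a (_ : a ∈ A) => Finset.sum_add_distrib), Finset.sum_add_distrib]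
    simp only [Pi.add_apply, mul_add, Finset.sum_add_distrib]
    ring
  · intro c x
    have h3 : ∀ (a : V), a ∈ A → ∀ (b : V), b ∈ B →
        (if h : G.Adj a b then
          (if a ∈ A₁ ∧ b ∈ B₁ then β else 1) *
            (c • x) (Sum.inr ⟨s(a, b), G.mem_edgeSet.mpr h⟩)
        else 0)
        = c * (if h : G.Adj a b then
          (if a ∈ A₁ ∧ b ∈ B₁ then β else 1) *
            x (Sum.inr ⟨s(a, b), G.mem_edgeSet.mpr h⟩) else 0) := by
      intro a _ b _
      by_cases h : G.Adj a b
      · simp [h]; ring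
      · simp [h]
    rw [Finset.sum_congr rfl (fun a ha => Finset.sum_congr rfl (fun b hb => h3 a ha b hb))]
    simp only [Pi.smul_apply, smul_eq_mul, mul_left_comm, ← Finset.mul_sum]
    ring

private noncomputable def bFun [Fintype V] [DecidableEq V] (G : SimpleGraph V)
    [DecidableRel G.Adj] (A B A₁ B₁ : Finset V) (β : ℝ) :
    ((V ⊕ G.edgeSet) → ℝ) → ℝ :=
  fun z => ∑ v ∈ A, (if v ∈ A₁ then β else 1) * z (Sum.inl v) +
    ∑ w ∈ B, (if w ∈ B₁ then β else 1) * z (Sum.inl w) +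
    ∑ a ∈ A, ∑ b ∈ B,
      (if h : G.Adj a b then
        (if a ∈ A₁ ∧ b ∈ B₁ then β else 1) *
          z (Sum.inr ⟨s(a, b), G.mem_edgeSet.mpr h⟩)
      else 0)

section Lemmas
variable [Fintype V] [DecidableEq V] {G : SimpleGraph V} [DecidableRel G.Adj]
  {A B A₁ B₁ : Finset V} {β : ℝ}

private lemma charVec_coe (D : Finset (V ⊕ G.edgeSet)) :
    charVec G ↑D = ∑ d ∈ D, Pi.single d (1 : ℝ) := by
  classical
  funext x
  simp [charVec, Set.indicator_apply, Finset.sum_apply, Finset.sum_pi_single]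

private lemma bFun_single_inlA (hG : IsCompleteBipartiteWith G A B) {v : V} (hv : v ∈ A) :
    bFun G A B A₁ B₁ β (Pi.single (Sum.inl v) 1) = if v ∈ A₁ then β else 1 := by
  classical
  have hvB : v ∉ B := Finset.disjoint_left.mp hG.1 hv
  simp only [bFun, Pi.single_apply, Sum.inl.injEq, mul_ite, mul_one, mul_zero,
    reduceCtorEq, dite_eq_ite]
  rw [Finset.sum_ite_eq' A v, Finset.sum_ite_eq' B v, if_pos hv, if_neg hvB]
  simp

private lemma bFun_single_inlB (hG : IsCompleteBipartiteWith G A B) {w : V} (hw : w ∈ B) :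
    bFun G A B A₁ B₁ β (Pi.single (Sum.inl w) 1) = if w ∈ B₁ then β else 1 := by
  classical
  have hwA : w ∉ A := Finset.disjoint_right.mp hG.1 hw
  simp only [bFun, Pi.single_apply, Sum.inl.injEq, mul_ite, mul_one, mul_zero,
    reduceCtorEq, dite_eq_ite]
  rw [Finset.sum_ite_eq' A w, Finset.sum_ite_eq' B w, if_pos hw, if_neg hwA]
  simp

private lemma bFun_single_inr (hG : IsCompleteBipartiteWith G A B)
    {a b : V} (ha : a ∈ A) (hb : b ∈ B) (e : G.edgeSet)
    (he : (e : Sym2 V) = s(a, b)) :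
    bFun G A B A₁ B₁ β (Pi.single (Sum.inr e) 1) = if a ∈ A₁ ∧ b ∈ B₁ then β else 1 := by
  classical
  have hAB : ∀ x ∈ A, ∀ y ∈ B, G.Adj x y := fun x hx y hy => (hG.2.2 x y).mpr (Or.inl ⟨hx, hy⟩)
  have hneAB : ∀ x ∈ A, ∀ y ∈ B, x ≠ y := fun x hx y hy => (hAB x hx y hy).ne
  have h1 : ∑ v ∈ A, (if v ∈ A₁ then β else 1) *
      (Pi.single (Sum.inr e) 1 : (V ⊕ G.edgeSet) → ℝ) (Sum.inl v) = 0 := by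
    apply Finset.sum_eq_zero; intro v _; simp [Pi.single_apply]
  have h2 : ∑ w ∈ B, (if w ∈ B₁ then β else 1) *
      (Pi.single (Sum.inr e) 1 : (V ⊕ G.edgeSet) → ℝ) (Sum.inl w) = 0 := by
    apply Finset.sum_eq_zero; intro w _; simp [Pi.single_apply]
  simp only [bFun]
  rw [h1, h2, ← Finset.sum_product']
  rw [Finset.sum_eq_single_of_mem (a, b) (Finset.mem_product.mpr ⟨ha, hb⟩)]
  · rw [dif_pos (hAB a ha b hb)]
    have : (⟨s(a, b), G.mem_edgeSet.mpr (hAB a ha b hb)⟩ : G.edgeSet) = e :=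
      Subtype.ext he.symm
    rw [this]
    simp
  · intro p hp hpne
    obtain ⟨hpa, hpb⟩ := Finset.mem_product.mp hp
    rw [dif_pos (hAB _ hpa _ hpb)]
    have hne : (⟨s(p.1, p.2), G.mem_edgeSet.mpr (hAB _ hpa _ hpb)⟩ : G.edgeSet) ≠ e := by
      intro hcon
      have : s(p.1, p.2) = s(a, b) := by
        have := congrArg (Subtype.val) hcon
        simpa [he] using this
      rcases Sym2.eq_iff.mp this with ⟨h1', h2'⟩ | ⟨h1', h2'⟩
      · exact hpne (Prod.ext h1' h2')
      · exact hneAB _ hpa _ hb h1'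
    simp [Pi.single_apply, Sum.inr.injEq, hne]

end Lemmas

section LemmasB
variable [Fintype V] [DecidableEq V] {G : SimpleGraph V} [DecidableRel G.Adj]
  {A B A₁ B₁ : Finset V} {β : ℝ}

private lemma tm_side (hG : IsCompleteBipartiteWith G A B) {X : Finset V}
    (hX : X ⊆ A ∨ X ⊆ B) :
    IsTotalMatching G ↑(X.image Sum.inl : Finset (V ⊕ G.edgeSet)) := by
  intro d hd d' hd' _ hadj
  simp only [Finset.coe_image, Set.mem_image, Finset.mem_coe] at hd hd'
  obtain ⟨x, hx, rfl⟩ := hd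
  obtain ⟨y, hy, rfl⟩ := hd'
  have hxy : G.Adj x y := hadj
  rcases (hG.2.2 x y).mp hxy with ⟨h1, h2⟩ | ⟨h1, h2⟩ <;> rcases hX with hX | hX
  · exact Finset.disjoint_left.mp hG.1 (hX hy) h2
  · exact Finset.disjoint_left.mp hG.1 h1 (hX hx)
  · exact Finset.disjoint_left.mp hG.1 (hX hx) h1
  · exact Finset.disjoint_left.mp hG.1 h2 (hX hy)

private lemma tm_side_edge (hG : IsCompleteBipartiteWith G A B) {X : Finset V}
    (hX : X ⊆ A ∨ X ⊆ B) {a b : V} (ha : a ∈ A) (hb : b ∈ B)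
    (e : G.edgeSet) (he : (e : Sym2 V) = s(a, b)) (haX : a ∉ X) (hbX : b ∉ X) :
    IsTotalMatching G ↑((X.image Sum.inl ∪ {Sum.inr e} : Finset (V ⊕ G.edgeSet))) := by
  have hvert : ∀ x ∈ X, ¬ elemAdj G (Sum.inl x) (Sum.inr e) := by
    intro x hx hadj
    have : x ∈ (e : Sym2 V) := hadj
    rw [he] at this
    rcases Sym2.mem_iff.mp this with rfl | rfl
    · exact haX hx
    · exact hbX hx
  intro d hd d' hd' hne hadj
  simp only [Finset.coe_union, Finset.coe_image, Finset.coe_singleton, Set.mem_union,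
    Set.mem_image, Finset.mem_coe, Set.mem_singleton_iff] at hd hd'
  rcases hd with ⟨x, hx, rfl⟩ | rfl <;> rcases hd' with ⟨y, hy, rfl⟩ | rfl
  · exact tm_side hG hX (d := Sum.inl x)
      (Finset.mem_coe.mpr (Finset.mem_image_of_mem _ hx))
      (d' := Sum.inl y) (Finset.mem_coe.mpr (Finset.mem_image_of_mem _ hy)) hne hadj
  · exact hvert x hx hadj
  · -- symmetric: elemAdj (inr e) (inl y)
    have : y ∈ (e : Sym2 V) := hadj
    rw [he] at this
    rcases Sym2.mem_iff.mp this with rfl | rfl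
    · exact haX hy
    · exact hbX hy
  · exact hne rfl

end LemmasB

section LemmasC
variable [Fintype V] [DecidableEq V] {G : SimpleGraph V} [DecidableRel G.Adj]
  {A B A₁ B₁ : Finset V} {β : ℝ}

private lemma bFun_linear : IsLinearMap ℝ (bFun G A B A₁ B₁ β) := by
  constructor
  · intro x y
    simp only [bFun]
    have h3 : ∀ (a : V), a ∈ A → ∀ (b : V), b ∈ B →
        (if h : G.Adj a b then
          (if a ∈ A₁ ∧ b ∈ B₁ then β else 1) *
            (x + y) (Sum.inr ⟨s(a, b), G.mem_edgeSet.mpr h⟩)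
        else 0)
        = (if h : G.Adj a b then
          (if a ∈ A₁ ∧ b ∈ B₁ then β else 1) *
            x (Sum.inr ⟨s(a, b), G.mem_edgeSet.mpr h⟩) else 0)
        + (if h : G.Adj a b then
          (if a ∈ A₁ ∧ b ∈ B₁ then β else 1) *
            y (Sum.inr ⟨s(a, b), G.mem_edgeSet.mpr h⟩) else 0) := by
      intro a _ b _
      by_cases h : G.Adj a b
      · simp [h, mul_add]
      · simp [h]
    rw [Finset.sum_congr rfl (fun a ha => Finset.sum_congr rfl (fun b hb => h3 a ha b hb))]
    rw [Finset.sum_congr rfl (fun a (_ : a ∈ A) => Finset.sum_add_distrib), Finset.sum_add_distrib]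
    simp only [Pi.add_apply, mul_add, Finset.sum_add_distrib]
    ring
  · intro c x
    simp only [bFun]
    have h3 : ∀ (a : V), a ∈ A → ∀ (b : V), b ∈ B →
        (if h : G.Adj a b then
          (if a ∈ A₁ ∧ b ∈ B₁ then β else 1) *
            (c • x) (Sum.inr ⟨s(a, b), G.mem_edgeSet.mpr h⟩)
        else 0)
        = c * (if h : G.Adj a b then
          (if a ∈ A₁ ∧ b ∈ B₁ then β else 1) *
            x (Sum.inr ⟨s(a, b), G.mem_edgeSet.mpr h⟩) else 0) := by
      intro a _ b _
      by_cases h : G.Adj a b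
      · simp [h]; ring
      · simp [h]
    rw [Finset.sum_congr rfl (fun a ha => Finset.sum_congr rfl (fun b hb => h3 a ha b hb))]
    simp only [Pi.smul_apply, smul_eq_mul, mul_left_comm, ← Finset.mul_sum]
    ring

private lemma bFun_charVec (D : Finset (V ⊕ G.edgeSet)) :
    bFun G A B A₁ B₁ β (charVec G ↑D) = ∑ d ∈ D, bFun G A B A₁ B₁ β (Pi.single d 1) := by
  rw [charVec_coe]
  exact map_sum (IsLinearMap.mk' _ (bFun_linear (G := G))) _ D

private lemma sum_weights (X X₁ : Finset V) (hX₁ : X₁ ⊆ X) :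
    ∑ v ∈ X, (if v ∈ X₁ then β else 1) = (X₁.card : ℝ) * (β - 1) + X.card := by
  classical
  rw [Finset.sum_ite, Finset.sum_const, Finset.sum_const]
  have h1 : X.filter (fun v => v ∈ X₁) = X₁ := by
    rw [Finset.filter_mem_eq_inter]; exact Finset.inter_eq_right.mpr hX₁
  have h2 : (X.filter (fun v => ¬ v ∈ X₁)).card = X.card - X₁.card := by
    have h3 := Finset.card_filter_add_card_filter_not (s := X)
      (p := fun v => v ∈ X₁)
    have h4 : (X.filter (fun v => v ∈ X₁)).card = X₁.card := by rw [h1]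
    omega
  rw [h1, h2, nsmul_eq_mul, nsmul_eq_mul, Nat.cast_sub (Finset.card_le_card hX₁)]
  ring

private lemma bFun_val_image (hG : IsCompleteBipartiteWith G A B) (hA₁ : A₁ ⊆ A) :
    bFun G A B A₁ B₁ β (charVec G ↑(A.image Sum.inl : Finset (V ⊕ G.edgeSet)))
      = (A₁.card : ℝ) * (β - 1) + A.card := by
  rw [bFun_charVec, Finset.sum_image (fun x _ y _ h => Sum.inl_injective h)]
  rw [Finset.sum_congr rfl (fun v hv => bFun_single_inlA hG hv)]
  exact sum_weights A A₁ hA₁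

private lemma bFun_val_imageB (hG : IsCompleteBipartiteWith G A B) (hB₁ : B₁ ⊆ B) :
    bFun G A B A₁ B₁ β (charVec G ↑(B.image Sum.inl : Finset (V ⊕ G.edgeSet)))
      = (B₁.card : ℝ) * (β - 1) + B.card := by
  rw [bFun_charVec, Finset.sum_image (fun x _ y _ h => Sum.inl_injective h)]
  rw [Finset.sum_congr rfl (fun v hv => bFun_single_inlB hG hv)]
  exact sum_weights B B₁ hB₁

private lemma bFun_val_erase_edge (hG : IsCompleteBipartiteWith G A B)
    {X X₁ : Finset V} (hX₁ : X₁ ⊆ X)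
    {c : V} (hc : c ∈ X)
    (hsingle : ∀ v ∈ X, bFun G A B A₁ B₁ β (Pi.single (Sum.inl v) 1) = if v ∈ X₁ then β else 1)
    {a b : V} (ha : a ∈ A) (hb : b ∈ B)
    (e : G.edgeSet) (he : (e : Sym2 V) = s(a, b))
    (hw : bFun G A B A₁ B₁ β (Pi.single (Sum.inr e) 1) = if c ∈ X₁ then β else 1) :
    bFun G A B A₁ B₁ β
      (charVec G ↑((X.erase c).image Sum.inl ∪ {Sum.inr e} : Finset (V ⊕ G.edgeSet)))
      = (X₁.card : ℝ) * (β - 1) + X.card := by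
  classical
  rw [bFun_charVec, Finset.sum_union (by simp)]
  rw [Finset.sum_image (fun x _ y _ h => Sum.inl_injective h), Finset.sum_singleton, hw]
  rw [Finset.sum_congr rfl (fun v hv => hsingle v (Finset.mem_of_mem_erase hv))]
  have := Finset.sum_erase_add X (fun v => if v ∈ X₁ then β else (1:ℝ)) hc
  rw [sum_weights X X₁ hX₁] at this
  linarith [this]

end LemmasC

section LemmasD
variable [Fintype V] [DecidableEq V] {G : SimpleGraph V} [DecidableRel G.Adj]

private lemma face_dim (G : SimpleGraph V) [DecidableRel G.Adj]
    (r s : ℕ) (hr : 2 ≤ r) (hrs : r < s)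
    (A B : Finset V) (hG : IsCompleteBipartiteWith G A B)
    (hA : A.card = r) (hB : B.card = s)
    (A₁ B₁ : Finset V) (hA₁ : A₁ ⊆ A) (hB₁ : B₁ ⊆ B)
    (hA₁lt : A₁.card < A.card) (hB₁lt : B₁.card < A₁.card)
    (hdeg : B₁.card = 0 → A₁.card = 1)
    (β : ℝ)
    (hβ : β = ((s : ℝ) + A₁.card - r - B₁.card) / ((A₁.card : ℝ) - B₁.card)) :
    Module.finrank ℝ (vectorSpan ℝ {z ∈ totalMatchingPolytope G |
        bFun G A B A₁ B₁ β z = (A₁.card : ℝ) * (β - 1) + A.card}) =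
      Fintype.card V + Fintype.card G.edgeSet - 1 := by
  classical
  set b : ℝ := (A₁.card : ℝ) * (β - 1) + A.card with hbdef
  set S : Set ((V ⊕ G.edgeSet) → ℝ) :=
    {z ∈ totalMatchingPolytope G | bFun G A B A₁ B₁ β z = b} with hSdef
  -- numeric facts
  have hrq : ((A.card : ℕ) : ℝ) = (r : ℝ) := by rw [hA]
  have hsq : ((B.card : ℕ) : ℝ) = (s : ℝ) := by rw [hB]
  have hpq0 : ((A₁.card : ℝ) - B₁.card) ≠ 0 := by
    have : (B₁.card : ℝ) < A₁.card := by exact_mod_cast hB₁lt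
    linarith
  have hβmul : β * ((A₁.card : ℝ) - B₁.card) = (s : ℝ) + A₁.card - r - B₁.card := by
    rw [hβ]; field_simp
  have hβge : 0 ≤ β - 1 := by
    have h1 : β - 1 = ((s : ℝ) - r) / ((A₁.card : ℝ) - B₁.card) := by
      rw [hβ]; field_simp; ring
    rw [h1]
    apply div_nonneg
    · have : (r : ℝ) ≤ s := by exact_mod_cast hrs.le
      linarith
    · have : (B₁.card : ℝ) < A₁.card := by exact_mod_cast hB₁lt
      linarith
  have hb0 : b ≠ 0 := by
    have h2 : (2 : ℝ) ≤ (A.card : ℝ) := by rw [hrq]; exact_mod_cast hr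
    have h3 : (0 : ℝ) ≤ (A₁.card : ℝ) := Nat.cast_nonneg _
    nlinarith [mul_nonneg h3 hβge]
  have hbeq : (B₁.card : ℝ) * (β - 1) + B.card = b := by
    rw [hbdef, hrq, hsq]
    linear_combination -hβmul
  -- adjacency
  have hAB : ∀ x ∈ A, ∀ y ∈ B, G.Adj x y := fun x hx y hy => (hG.2.2 x y).mpr (Or.inl ⟨hx, hy⟩)
  -- tight families
  have hmemS : ∀ D : Finset (V ⊕ G.edgeSet), IsTotalMatching G ↑D →
      bFun G A B A₁ B₁ β (charVec G ↑D) = b → charVec G ↑D ∈ S := by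
    intro D h1 h2
    exact ⟨subset_convexHull ℝ _ ⟨↑D, h1, rfl⟩, h2⟩
  have hDA : charVec G ↑(A.image Sum.inl : Finset (V ⊕ G.edgeSet)) ∈ S :=
    hmemS _ (tm_side hG (Or.inl subset_rfl)) (bFun_val_image hG hA₁)
  have hDB : charVec G ↑(B.image Sum.inl : Finset (V ⊕ G.edgeSet)) ∈ S :=
    hmemS _ (tm_side hG (Or.inr subset_rfl)) ((bFun_val_imageB hG hB₁).trans hbeq)
  have hDab : ∀ a ∈ A, ∀ b' ∈ B, (a ∈ A₁ → b' ∈ B₁) → ∀ e : G.edgeSet,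
      (e : Sym2 V) = s(a, b') →
      charVec G ↑((A.erase a).image Sum.inl ∪ {Sum.inr e} : Finset (V ⊕ G.edgeSet)) ∈ S := by
    intro a ha b' hb' hcond e he
    refine hmemS _ (tm_side_edge hG (Or.inl (Finset.erase_subset _ _)) ha hb' e he
      (Finset.notMem_erase _ _)
      (fun hmem => Finset.disjoint_right.mp hG.1 hb' (Finset.mem_of_mem_erase hmem))) ?_
    refine (bFun_val_erase_edge hG hA₁ ha (fun v hv => bFun_single_inlA hG hv)
      ha hb' e he ?_)
    rw [bFun_single_inr hG ha hb' e he]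
    by_cases haA₁ : a ∈ A₁
    · rw [if_pos ⟨haA₁, hcond haA₁⟩, if_pos haA₁]
    · rw [if_neg (fun hc => haA₁ hc.1), if_neg haA₁]
  have hDba : ∀ a ∈ A, ∀ b' ∈ B, (b' ∈ B₁ → a ∈ A₁) → ∀ e : G.edgeSet,
      (e : Sym2 V) = s(a, b') →
      charVec G ↑((B.erase b').image Sum.inl ∪ {Sum.inr e} : Finset (V ⊕ G.edgeSet)) ∈ S := by
    intro a ha b' hb' hcond e he
    refine hmemS _ (tm_side_edge hG (Or.inr (Finset.erase_subset _ _)) ha hb' e he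
      (fun hmem => Finset.disjoint_left.mp hG.1 ha (Finset.mem_of_mem_erase hmem))
      (Finset.notMem_erase _ _)) ?_
    refine ((bFun_val_erase_edge hG hB₁ hb' (fun v hv => bFun_single_inlB hG hv)
      ha hb' e he ?_)).trans hbeq
    rw [bFun_single_inr hG ha hb' e he]
    by_cases hbB₁ : b' ∈ B₁
    · rw [if_pos ⟨hcond hbB₁, hbB₁⟩, if_pos hbB₁]
    · rw [if_neg (fun hc => hbB₁ hc.2), if_neg hbB₁]
  -- the linear functional
  set Lm : ((V ⊕ G.edgeSet) → ℝ) →ₗ[ℝ] ℝ :=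
    IsLinearMap.mk' _ (bFun_linear (G := G) (A := A) (B := B) (A₁ := A₁) (B₁ := B₁) (β := β))
    with hLm
  have hLmapp : ∀ z, Lm z = bFun G A B A₁ B₁ β z := fun z => rfl
  -- upper bound: vectorSpan ≤ ker
  have hWle : vectorSpan ℝ S ≤ LinearMap.ker Lm := by
    rw [vectorSpan_def]
    refine Submodule.span_le.mpr ?_
    rintro w hw
    rw [Set.mem_vsub] at hw
    obtain ⟨x, hx, y, hy, rfl⟩ := hw
    rw [SetLike.mem_coe, LinearMap.mem_ker]
    have : x -ᵥ y = x - y := rfl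
    rw [this, map_sub, hLmapp, hLmapp, hx.2, hy.2, sub_self]
  -- surjectivity and rank of kernel
  have hsurj : Function.Surjective Lm := by
    intro c
    refine ⟨(c / b) • charVec G ↑(A.image Sum.inl : Finset (V ⊕ G.edgeSet)), ?_⟩
    rw [map_smul, smul_eq_mul, hLmapp, bFun_val_image hG hA₁]
    field_simp
    rw [hbdef]
  have hkerrank : Module.finrank ℝ (LinearMap.ker Lm)
      = Fintype.card V + Fintype.card G.edgeSet - 1 := by
    have h1 := LinearMap.finrank_range_add_finrank_ker Lm
    rw [LinearMap.range_eq_top.mpr hsurj, finrank_top, Module.finrank_self,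
      Module.finrank_pi, Fintype.card_sum] at h1
    omega
  -- lower bound: ker ≤ vectorSpan
  have hkerle : LinearMap.ker Lm ≤ vectorSpan ℝ S := by
    intro v hv
    rw [LinearMap.mem_ker] at hv
    rw [← Subspace.dualAnnihilator_dualCoannihilator_eq (W := vectorSpan ℝ S),
      Submodule.mem_dualCoannihilator]
    intro g hgann
    have hg : ∀ w ∈ vectorSpan ℝ S, g w = 0 := (Submodule.mem_dualAnnihilator g).mp hgann
    -- coefficients of g
    set gs : (V ⊕ G.edgeSet) → ℝ := fun d => g (Pi.single d 1) with hgs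
    have hgsum : ∀ D : Finset (V ⊕ G.edgeSet), g (charVec G ↑D) = ∑ d ∈ D, gs d := by
      intro D
      rw [charVec_coe, map_sum]
    have hrel : ∀ D D' : Finset (V ⊕ G.edgeSet), charVec G ↑D ∈ S → charVec G ↑D' ∈ S →
        ∑ d ∈ D, gs d = ∑ d ∈ D', gs d := by
      intro D D' h1 h2
      have h3 := hg _ (vsub_mem_vectorSpan ℝ h1 h2)
      have h4 : charVec G ↑D -ᵥ charVec G ↑D' = charVec G ↑D - charVec G ↑D' := rfl
      rw [h4, map_sub] at h3
      rw [← hgsum D, ← hgsum D']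
      linarith
    have hsum_image : ∀ X : Finset V,
        ∑ d ∈ X.image Sum.inl, gs d = ∑ x ∈ X, gs (Sum.inl x) := fun X =>
      Finset.sum_image (fun x _ y _ h => Sum.inl_injective h)
    have hsum_union : ∀ (X : Finset V) (e : G.edgeSet),
        ∑ d ∈ (X.image Sum.inl ∪ {Sum.inr e} : Finset (V ⊕ G.edgeSet)), gs d
          = ∑ x ∈ X, gs (Sum.inl x) + gs (Sum.inr e) := by
      intro X e
      rw [Finset.sum_union (by simp), hsum_image, Finset.sum_singleton]
    -- relations R1, R2, R3
    have R1 : ∀ a ∈ A, ∀ b' ∈ B, (a ∈ A₁ → b' ∈ B₁) → ∀ e : G.edgeSet,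
        (e : Sym2 V) = s(a, b') → gs (Sum.inl a) = gs (Sum.inr e) := by
      intro a ha b' hb' hcond e he
      have h := hrel _ _ hDA (hDab a ha b' hb' hcond e he)
      rw [hsum_image, hsum_union] at h
      have h2 := Finset.sum_erase_add A (fun x => gs (Sum.inl x)) ha
      linarith
    have R2 : ∀ a ∈ A, ∀ b' ∈ B, (b' ∈ B₁ → a ∈ A₁) → ∀ e : G.edgeSet,
        (e : Sym2 V) = s(a, b') → gs (Sum.inl b') = gs (Sum.inr e) := by
      intro a ha b' hb' hcond e he
      have h := hrel _ _ hDB (hDba a ha b' hb' hcond e he)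
      rw [hsum_image, hsum_union] at h
      have h2 := Finset.sum_erase_add B (fun x => gs (Sum.inl x)) hb'
      linarith
    have R3 : ∑ x ∈ A, gs (Sum.inl x) = ∑ x ∈ B, gs (Sum.inl x) := by
      have h := hrel _ _ hDA hDB
      rw [hsum_image, hsum_image] at h
      exact h
    -- distinguished elements
    obtain ⟨a₀, ha₀⟩ := Finset.sdiff_nonempty.mpr
      (fun h => absurd (Finset.card_le_card h) (not_le.mpr hA₁lt))
    obtain ⟨ha₀A, ha₀n⟩ := Finset.mem_sdiff.mp ha₀
    have hBB₁lt : B₁.card < B.card := by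
      have h1 : A₁.card ≤ A.card := Finset.card_le_card hA₁
      omega
    obtain ⟨b₀, hb₀⟩ := Finset.sdiff_nonempty.mpr
      (fun h => absurd (Finset.card_le_card h) (not_le.mpr hBB₁lt))
    obtain ⟨hb₀B, hb₀n⟩ := Finset.mem_sdiff.mp hb₀
    have hA₁ne : A₁.Nonempty := Finset.card_pos.mp (by omega)
    obtain ⟨a₁, ha₁⟩ := hA₁ne
    have ha₁A : a₁ ∈ A := hA₁ ha₁
    set lam : ℝ := gs (Sum.inl a₀) with hlam
    set mu : ℝ := gs (Sum.inl a₁) with hmu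
    -- edges exist
    have hedge : ∀ a ∈ A, ∀ b' ∈ B, ∃ e : G.edgeSet, (e : Sym2 V) = s(a, b') :=
      fun a ha b' hb' => ⟨⟨_, G.mem_edgeSet.mpr (hAB a ha b' hb')⟩, rfl⟩
    -- chain: for a ∉ A₁, b' ∉ B₁ : gs (inl a) = gs (inl b')
    have hchain : ∀ a ∈ A, ∀ b' ∈ B, (a ∈ A₁ → b' ∈ B₁) → (b' ∈ B₁ → a ∈ A₁) →
        gs (Sum.inl a) = gs (Sum.inl b') := by
      intro a ha b' hb' hc1 hc2
      obtain ⟨e, he⟩ := hedge a ha b' hb'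
      rw [R1 a ha b' hb' hc1 e he, R2 a ha b' hb' hc2 e he]
    have hA0 : ∀ a ∈ A, a ∉ A₁ → gs (Sum.inl a) = lam := by
      intro a ha han
      have h1 := hchain a ha b₀ hb₀B (fun h => absurd h han) (fun h => absurd h hb₀n)
      have h2 := hchain a₀ ha₀A b₀ hb₀B (fun h => absurd h ha₀n) (fun h => absurd h hb₀n)
      rw [h1, hlam, h2]
    have hB0 : ∀ b' ∈ B, b' ∉ B₁ → gs (Sum.inl b') = lam := by
      intro b' hb' hbn
      have h1 := hchain a₀ ha₀A b' hb' (fun h => absurd h ha₀n) (fun h => absurd h hbn)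
      rw [← h1, hlam]
    have hA1 : ∀ a ∈ A₁, gs (Sum.inl a) = mu := by
      intro a ha
      rcases B₁.eq_empty_or_nonempty with hBe | ⟨b₁, hb₁⟩
      · have hp1 : A₁.card = 1 := hdeg (by rw [hBe]; rfl)
        obtain ⟨x, hx⟩ := Finset.card_eq_one.mp hp1
        rw [hx] at ha ha₁
        rw [Finset.mem_singleton.mp ha, ← Finset.mem_singleton.mp ha₁]
      · have h1 := hchain a (hA₁ ha) b₁ (hB₁ hb₁) (fun _ => hb₁) (fun _ => ha)
        have h2 := hchain a₁ ha₁A b₁ (hB₁ hb₁) (fun _ => hb₁) (fun _ => ha₁)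
        rw [h1, hmu, h2]
    have hB1 : ∀ b' ∈ B₁, gs (Sum.inl b') = mu := by
      intro b' hb'
      have h1 := hchain a₁ ha₁A b' (hB₁ hb') (fun _ => hb') (fun _ => ha₁)
      rw [← h1, hmu]
    -- mu = β * lam
    have hmulam : mu = β * lam := by
      have hsA : ∑ x ∈ A, gs (Sum.inl x) = ((A.card : ℝ) - A₁.card) * lam + (A₁.card : ℝ) * mu := by
        rw [← Finset.sum_sdiff hA₁]
        rw [Finset.sum_congr rfl (fun x hx => hA0 x (Finset.mem_sdiff.mp hx).1
          (Finset.mem_sdiff.mp hx).2)]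
        rw [Finset.sum_congr rfl (fun x hx => hA1 x hx)]
        rw [Finset.sum_const, Finset.sum_const, Finset.card_sdiff_of_subset hA₁, nsmul_eq_mul,
          nsmul_eq_mul, Nat.cast_sub (Finset.card_le_card hA₁)]
      have hsB : ∑ x ∈ B, gs (Sum.inl x) = ((B.card : ℝ) - B₁.card) * lam + (B₁.card : ℝ) * mu := by
        rw [← Finset.sum_sdiff hB₁]
        rw [Finset.sum_congr rfl (fun x hx => hB0 x (Finset.mem_sdiff.mp hx).1
          (Finset.mem_sdiff.mp hx).2)]
        rw [Finset.sum_congr rfl (fun x hx => hB1 x hx)]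
        rw [Finset.sum_const, Finset.sum_const, Finset.card_sdiff_of_subset hB₁, nsmul_eq_mul,
          nsmul_eq_mul, Nat.cast_sub (Finset.card_le_card hB₁)]
      have heq : ((A.card : ℝ) - A₁.card) * lam + (A₁.card : ℝ) * mu
          = ((B.card : ℝ) - B₁.card) * lam + (B₁.card : ℝ) * mu := by
        rw [← hsA, ← hsB, R3]
      rw [hrq, hsq] at heq
      have h2 : ((A₁.card : ℝ) - B₁.card) * mu = ((A₁.card : ℝ) - B₁.card) * (β * lam) := by
        linear_combination heq - lam * hβmul
      exact mul_left_cancel₀ hpq0 h2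
    -- edge coefficients
    have hE : ∀ a ∈ A, ∀ b' ∈ B, ∀ e : G.edgeSet, (e : Sym2 V) = s(a, b') →
        gs (Sum.inr e) = if a ∈ A₁ ∧ b' ∈ B₁ then mu else lam := by
      intro a ha b' hb' e he
      by_cases haA₁ : a ∈ A₁
      · by_cases hbB₁ : b' ∈ B₁
        · rw [if_pos ⟨haA₁, hbB₁⟩, ← R1 a ha b' hb' (fun _ => hbB₁) e he, hA1 a haA₁]
        · rw [if_neg (fun hc => hbB₁ hc.2), ← R2 a ha b' hb' (fun h => absurd h hbB₁) e he,
            hB0 b' hb' hbB₁]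
      · rw [if_neg (fun hc => haA₁ hc.1), ← R1 a ha b' hb' (fun h => absurd h haA₁) e he,
          hA0 a ha haA₁]
    -- all coefficients: gs d = lam * Lm (single d)
    have hval : ∀ d : V ⊕ G.edgeSet, gs d = lam * Lm (Pi.single d 1) := by
      intro d
      cases d with
      | inl u =>
        have hu : u ∈ A ∪ B := by rw [hG.2.1]; exact Finset.mem_univ u
        rcases Finset.mem_union.mp hu with hu | hu
        · rw [hLmapp, bFun_single_inlA hG hu]
          by_cases huA₁ : u ∈ A₁
          · rw [if_pos huA₁, hA1 u huA₁, hmulam]; ring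
          · rw [if_neg huA₁, hA0 u hu huA₁]; ring
        · rw [hLmapp, bFun_single_inlB hG hu]
          by_cases huB₁ : u ∈ B₁
          · rw [if_pos huB₁, hB1 u huB₁, hmulam]; ring
          · rw [if_neg huB₁, hB0 u hu huB₁]; ring
      | inr e =>
        obtain ⟨a, b', ha, hb', he⟩ : ∃ a b', a ∈ A ∧ b' ∈ B ∧ (e : Sym2 V) = s(a, b') := by
          obtain ⟨ev, hev⟩ := e
          induction ev using Sym2.ind with
          | _ x y =>
            rcases (hG.2.2 x y).mp (G.mem_edgeSet.mp hev) with ⟨hx, hy⟩ | ⟨hx, hy⟩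
            · exact ⟨x, y, hx, hy, rfl⟩
            · exact ⟨y, x, hy, hx, Sym2.eq_swap⟩
        rw [hLmapp, bFun_single_inr hG ha hb' e he, hE a ha b' hb' e he]
        by_cases hc : a ∈ A₁ ∧ b' ∈ B₁
        · rw [if_pos hc, if_pos hc, hmulam]; ring
        · rw [if_neg hc, if_neg hc]; ring
    -- conclude: g v = lam * Lm v = 0
    have hsingle_eq : ∀ i : V ⊕ G.edgeSet,
        (fun j => if i = j then (1:ℝ) else 0) = Pi.single i 1 := by
      intro i; funext j; rw [Pi.single_apply]; simp [eq_comm]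
    have hgv : g v = ∑ i : V ⊕ G.edgeSet, v i • gs i := by
      rw [LinearMap.pi_apply_eq_sum_univ g v]
      refine Finset.sum_congr rfl (fun i _ => ?_)
      rw [hsingle_eq i]
    have hLv : Lm v = ∑ i : V ⊕ G.edgeSet, v i • Lm (Pi.single i 1) := by
      rw [LinearMap.pi_apply_eq_sum_univ Lm v]
      refine Finset.sum_congr rfl (fun i _ => ?_)
      rw [hsingle_eq i]
    rw [hgv]
    calc ∑ i : V ⊕ G.edgeSet, v i • gs i
        = ∑ i : V ⊕ G.edgeSet, lam * (v i • Lm (Pi.single i 1)) := by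
          refine Finset.sum_congr rfl (fun i _ => ?_)
          rw [hval i, smul_eq_mul, smul_eq_mul]; ring
      _ = lam * ∑ i : V ⊕ G.edgeSet, v i • Lm (Pi.single i 1) := by rw [Finset.mul_sum]
      _ = lam * Lm v := by rw [← hLv]
      _ = 0 := by rw [hv, mul_zero]
  have : vectorSpan ℝ S = LinearMap.ker Lm := le_antisymm hWle hkerle
  rw [this, hkerrank]

end LemmasD

/-- the non-balanced lifted biclique inequality is facet-defining for the
total matching polytope of `K_{r,s}`. -/
theorem nonbalanced_lifted_biclique_facet_defining_Krs
    [Fintype V] [DecidableEq V] (G : SimpleGraph V) [DecidableRel G.Adj]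
    (r s : ℕ) (hr : 2 ≤ r) (hrs : r < s)
    (A B : Finset V) (hG : IsCompleteBipartiteWith G A B)
    (hA : A.card = r) (hB : B.card = s)
    (A₁ B₁ : Finset V) (hA₁ : A₁ ⊆ A) (hB₁ : B₁ ⊆ B)
    (hA₁lt : A₁.card < A.card) (hB₁lt : B₁.card < A₁.card)
    (hdeg : B₁.card = 0 → A₁.card = 1)
    (β : ℝ)
    (hβ : β = ((s : ℝ) + A₁.card - r - B₁.card) / ((A₁.card : ℝ) - B₁.card)) :
    IsFacetDefining G
      (fun z => ∑ v ∈ A, (if v ∈ A₁ then β else 1) * z (Sum.inl v) +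
        ∑ w ∈ B, (if w ∈ B₁ then β else 1) * z (Sum.inl w) +
        ∑ a ∈ A, ∑ b ∈ B,
          (if h : G.Adj a b then
            (if a ∈ A₁ ∧ b ∈ B₁ then β else 1) *
              z (Sum.inr ⟨s(a, b), G.mem_edgeSet.mpr h⟩)
          else 0))
      ((A₁.card : ℝ) * (β - 1) + A.card) := by
  constructor
  · intro z hz
    refine convexHull_min ?_ (convex_halfSpace_le (biclique_linear G A B A₁ B₁ β)
      ((A₁.card : ℝ) * (β - 1) + A.card)) hz
    rintro z ⟨T, hT, rfl⟩
    exact key_validity G r s hrs A B hG hA hB A₁ B₁ hA₁ hB₁ hB₁lt β hβ T hT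
  · exact face_dim G r s hr hrs A B hG hA hB A₁ B₁ hA₁ hB₁ hA₁lt hB₁lt hdeg β hβ
end

section
/- Let K_{r,s} be a complete bipartite graph with vertex bipartition (A,B), let T(K_{r,s}) be its total graph, and let U∈{A,B}. Then the induced subgraph of T(K_{r,s}) on the vertex set (V(K_{r,s})∪E(K_{r,s}))∖U is a perfect graph, i.e., for every induced subgraph H of it, the chromatic number of H equals the clique number of H. -/
open Finset

variable {V : Type*}

/-- The clique number of a graph, as an extended natural number. -/
noncomputable def cliqueNumber {W : Type*} (H : SimpleGraph W) : ℕ∞ :=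
  sSup {n : ℕ∞ | ∃ K : Finset W, H.IsClique (K : Set W) ∧ (K.card : ℕ∞) = n}

/-- A graph is perfect if every induced subgraph has chromatic number equal to its
clique number. -/
def IsPerfect {W : Type*} (H : SimpleGraph W) : Prop :=
  ∀ s : Set W, (H.induce s).chromaticNumber = cliqueNumber (H.induce s)

lemma bip_edge_coloring {α β : Type*} [DecidableEq α] [DecidableEq β] (n : ℕ) :
    ∀ E : Finset (α × β),
      (∀ a : α, (E.filter fun f => f.1 = a).card ≤ n) →
      (∀ b : β, (E.filter fun f => f.2 = b).card ≤ n) →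
      ∃ c : α × β → ℕ, (∀ f ∈ E, c f < n) ∧
        ∀ f ∈ E, ∀ g ∈ E, f ≠ g → (f.1 = g.1 ∨ f.2 = g.2) → c f ≠ c g := by
  classical
  intro E
  induction E using Finset.strongInduction with
  | _ E ih =>
    intro hrow hcol
    rcases E.eq_empty_or_nonempty with rfl | ⟨e, he⟩
    · exact ⟨fun _ => 0, by simp, by simp⟩
    have hsub : E.erase e ⊂ E := Finset.erase_ssubset he
    have hrow' : ∀ a, ((E.erase e).filter fun f => f.1 = a).card ≤ n := fun a =>
      le_trans (Finset.card_le_card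
        (Finset.filter_subset_filter _ (Finset.erase_subset _ _))) (hrow a)
    have hcol' : ∀ b, ((E.erase e).filter fun f => f.2 = b).card ≤ n := fun b =>
      le_trans (Finset.card_le_card
        (Finset.filter_subset_filter _ (Finset.erase_subset _ _))) (hcol b)
    obtain ⟨c, hc, hp⟩ := ih _ hsub hrow' hcol'
    have hemem : e ∈ E.filter (fun f => f.1 = e.1) := Finset.mem_filter.mpr ⟨he, rfl⟩
    have hn : 0 < n := lt_of_lt_of_le (Finset.card_pos.mpr ⟨e, hemem⟩) (hrow e.1)
    -- a color missing at e.1 among rows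
    have hexA : ∃ k, k < n ∧ ∀ f ∈ E.erase e, f.1 = e.1 → c f ≠ k := by
      have h1 : (E.erase e).filter (fun f => f.1 = e.1)
          = (E.filter fun f => f.1 = e.1).erase e := by rw [Finset.filter_erase]
      have hlt : ((E.erase e).filter (fun f => f.1 = e.1)).card < n := by
        rw [h1, Finset.card_erase_of_mem hemem]
        have := hrow e.1
        have h2 : 0 < (E.filter fun f => f.1 = e.1).card := Finset.card_pos.mpr ⟨e, hemem⟩
        omega
      have hcard : (((E.erase e).filter fun f => f.1 = e.1).image c).card < n :=
        lt_of_le_of_lt Finset.card_image_le hlt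
      have hns : ¬ (Finset.range n ⊆ ((E.erase e).filter fun f => f.1 = e.1).image c) :=
        fun hss => absurd (Finset.card_le_card hss) (by rw [Finset.card_range]; omega)
      obtain ⟨k, hk1, hk2⟩ := Finset.not_subset.mp hns
      exact ⟨k, Finset.mem_range.mp hk1, fun f hf hf1 hck =>
        hk2 (Finset.mem_image.mpr ⟨f, Finset.mem_filter.mpr ⟨hf, hf1⟩, hck⟩)⟩
    have hexB : ∃ k, k < n ∧ ∀ f ∈ E.erase e, f.2 = e.2 → c f ≠ k := by
      have h1 : (E.erase e).filter (fun f => f.2 = e.2)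
          = (E.filter fun f => f.2 = e.2).erase e := by rw [Finset.filter_erase]
      have hlt : ((E.erase e).filter (fun f => f.2 = e.2)).card < n := by
        have hemem2 : e ∈ E.filter (fun f => f.2 = e.2) := Finset.mem_filter.mpr ⟨he, rfl⟩
        rw [h1, Finset.card_erase_of_mem hemem2]
        have := hcol e.2
        have h2 : 0 < (E.filter fun f => f.2 = e.2).card := Finset.card_pos.mpr ⟨e, hemem2⟩
        omega
      have hcard : (((E.erase e).filter fun f => f.2 = e.2).image c).card < n :=
        lt_of_le_of_lt Finset.card_image_le hlt
      have hns : ¬ (Finset.range n ⊆ ((E.erase e).filter fun f => f.2 = e.2).image c) :=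
        fun hss => absurd (Finset.card_le_card hss) (by rw [Finset.card_range]; omega)
      obtain ⟨k, hk1, hk2⟩ := Finset.not_subset.mp hns
      exact ⟨k, Finset.mem_range.mp hk1, fun f hf hf1 hck =>
        hk2 (Finset.mem_image.mpr ⟨f, Finset.mem_filter.mpr ⟨hf, hf1⟩, hck⟩)⟩
    obtain ⟨α₀, hα₀n, hα₀⟩ := hexA
    have key : ∃ (c₂ : α × β → ℕ) (γ : ℕ), γ < n ∧ (∀ f ∈ E.erase e, c₂ f < n) ∧
        (∀ f ∈ E.erase e, ∀ g ∈ E.erase e, f ≠ g → (f.1 = g.1 ∨ f.2 = g.2) → c₂ f ≠ c₂ g) ∧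
        (∀ f ∈ E.erase e, f.1 = e.1 → c₂ f ≠ γ) ∧
        (∀ f ∈ E.erase e, f.2 = e.2 → c₂ f ≠ γ) := by
      by_cases hcommon : ∀ f ∈ E.erase e, f.2 = e.2 → c f ≠ α₀
      · exact ⟨c, α₀, hα₀n, hc, hp, hα₀, hcommon⟩
      push_neg at hcommon
      obtain ⟨eb, heb, heb2, hebc⟩ := hcommon
      obtain ⟨β₀, hβ₀n, hβ₀⟩ := hexB
      have hαβ : α₀ ≠ β₀ := fun h => hβ₀ eb heb heb2 (h ▸ hebc)
      have huniq : ∀ f ∈ E.erase e, ∀ g ∈ E.erase e,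
          (f.1 = g.1 ∨ f.2 = g.2) → c f = c g → f = g := by
        intro f hf g hg hsh hcfg
        by_contra hne
        exact hp f hf g hg hne hsh hcfg
      set vstep : (α ⊕ β) → (α ⊕ β) → Prop := fun x y =>
        (∃ l r, x = Sum.inr r ∧ y = Sum.inl l ∧ (l, r) ∈ E.erase e ∧ c (l, r) = α₀) ∨
        (∃ l r, x = Sum.inl l ∧ y = Sum.inr r ∧ (l, r) ∈ E.erase e ∧ c (l, r) = β₀)
        with hvstep
      set O : Set (α ⊕ β) := {x | Relation.ReflTransGen vstep (Sum.inr e.2) x} with hO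
      have hnotA : Sum.inl e.1 ∉ O := by
        intro h
        rcases Relation.ReflTransGen.cases_tail h with heq | ⟨y, -, hstep⟩
        · exact Sum.inl_ne_inr heq
        rcases hstep with ⟨l, r, hy, hx, hmem, hcolr⟩ | ⟨l, r, hy, hx, hmem, hcolr⟩
        · have hl : l = e.1 := (Sum.inl.inj hx).symm
          exact hα₀ (l, r) hmem hl hcolr
        · exact Sum.inl_ne_inr hx
      have hOiff : ∀ f ∈ E.erase e, (c f = α₀ ∨ c f = β₀) →
          (Sum.inl f.1 ∈ O ↔ Sum.inr f.2 ∈ O) := by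
        rintro ⟨l, r⟩ hm hcolr
        rcases hcolr with hA | hB
        · constructor
          · intro hl
            rcases Relation.ReflTransGen.cases_tail hl with heq | ⟨y, hy, hstep⟩
            · exact (Sum.inl_ne_inr heq).elim
            rcases hstep with ⟨l', r', h1, h2, h3, h4⟩ | ⟨l', r', h1, h2, h3, h4⟩
            · have hll : l' = l := (Sum.inl.inj h2).symm
              subst hll
              have heqf : (l', r') = (l', r) :=
                huniq (l', r') h3 (l', r) hm (Or.inl rfl) (h4.trans hA.symm)
              have hr : r' = r := (Prod.mk.injEq _ _ _ _ ▸ heqf).2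
              rw [h1, hr] at hy
              exact hy
            · exact (Sum.inl_ne_inr h2).elim
          · intro hr
            exact hr.tail (Or.inl ⟨l, r, rfl, rfl, hm, hA⟩)
        · constructor
          · intro hl
            exact hl.tail (Or.inr ⟨l, r, rfl, rfl, hm, hB⟩)
          · intro hr
            have hrb : r ≠ e.2 := fun h => hβ₀ (l, r) hm h hB
            rcases Relation.ReflTransGen.cases_tail hr with heq | ⟨y, hy, hstep⟩
            · exact absurd (Sum.inr.inj heq) hrb
            rcases hstep with ⟨l', r', h1, h2, h3, h4⟩ | ⟨l', r', h1, h2, h3, h4⟩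
            · exact (Sum.inr_ne_inl h2).elim
            · have hrr : r' = r := (Sum.inr.inj h2).symm
              subst hrr
              have heqf : (l', r') = (l, r') :=
                huniq (l', r') h3 (l, r') hm (Or.inr rfl) (h4.trans hB.symm)
              have hl' : l' = l := (Prod.mk.injEq _ _ _ _ ▸ heqf).1
              rw [h1, hl'] at hy
              exact hy
      have hclose : ∀ f ∈ E.erase e, ∀ g ∈ E.erase e, (c f = α₀ ∨ c f = β₀) →
          (c g = α₀ ∨ c g = β₀) → (f.1 = g.1 ∨ f.2 = g.2) →
          Sum.inl f.1 ∈ O → Sum.inl g.1 ∈ O := by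
        intro f hf g hg hcf hcg hsh hmO
        rcases hsh with h | h
        · rwa [← h]
        · have h1 := (hOiff f hf hcf).mp hmO
          rw [h] at h1
          exact (hOiff g hg hcg).mpr h1
      have hebeq : (eb.1, e.2) = eb := by rw [← heb2]
      have heb_O : Sum.inl eb.1 ∈ O :=
        Relation.ReflTransGen.single
          (Or.inl ⟨eb.1, e.2, rfl, rfl, hebeq ▸ heb, hebeq ▸ hebc⟩)
      refine ⟨fun f => if f ∈ E.erase e ∧ (c f = α₀ ∨ c f = β₀) ∧ Sum.inl f.1 ∈ O then
        (if c f = α₀ then β₀ else α₀) else c f, α₀, hα₀n, ?_, ?_, ?_, ?_⟩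
      · intro f hf
        dsimp only
        split
        · split
          · exact hβ₀n
          · exact hα₀n
        · exact hc f hf
      · intro f hf g hg hfg hsh
        dsimp only
        by_cases Pf : f ∈ E.erase e ∧ (c f = α₀ ∨ c f = β₀) ∧ Sum.inl f.1 ∈ O <;>
          by_cases Pg : g ∈ E.erase e ∧ (c g = α₀ ∨ c g = β₀) ∧ Sum.inl g.1 ∈ O
        · rw [if_pos Pf, if_pos Pg]
          rcases Pf.2.1 with hfα | hfβ <;> rcases Pg.2.1 with hgα | hgβ
          · exact absurd (hfα.trans hgα.symm) (hp f hf g hg hfg hsh)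
          · rw [if_pos hfα, if_neg (fun h => hαβ (h.symm.trans hgβ))]
            exact Ne.symm hαβ
          · rw [if_neg (fun h => hαβ (h.symm.trans hfβ)), if_pos hgα]
            exact hαβ
          · exact absurd (hfβ.trans hgβ.symm) (hp f hf g hg hfg hsh)
        · rw [if_pos Pf, if_neg Pg]
          have hgc : ¬ (c g = α₀ ∨ c g = β₀) := by
            intro hcg
            exact Pg ⟨hg, hcg, hclose f hf g hg Pf.2.1 hcg hsh Pf.2.2⟩
          split
          · exact fun h => hgc (Or.inr h.symm)
          · exact fun h => hgc (Or.inl h.symm)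
        · rw [if_neg Pf, if_pos Pg]
          have hfc : ¬ (c f = α₀ ∨ c f = β₀) := by
            intro hcf
            exact Pf ⟨hf, hcf, hclose g hg f hf Pg.2.1 hcf
              (by rcases hsh with h | h; exact Or.inl h.symm; exact Or.inr h.symm) Pg.2.2⟩
          split
          · exact fun h => hfc (Or.inr h)
          · exact fun h => hfc (Or.inl h)
        · rw [if_neg Pf, if_neg Pg]
          exact hp f hf g hg hfg hsh
      · intro f hf hf1
        dsimp only
        by_cases Pf : f ∈ E.erase e ∧ (c f = α₀ ∨ c f = β₀) ∧ Sum.inl f.1 ∈ O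
        · exact absurd (hf1 ▸ Pf.2.2) hnotA
        · rw [if_neg Pf]
          exact hα₀ f hf hf1
      · intro f hf hf2
        dsimp only
        by_cases Pf : f ∈ E.erase e ∧ (c f = α₀ ∨ c f = β₀) ∧ Sum.inl f.1 ∈ O
        · rw [if_pos Pf]
          rcases Pf.2.1 with hfα | hfβ
          · rw [if_pos hfα]
            exact Ne.symm hαβ
          · exact absurd hfβ (hβ₀ f hf hf2)
        · rw [if_neg Pf]
          intro hfα
          have hfeb : f = eb :=
            huniq f hf eb heb (Or.inr (hf2.trans heb2.symm)) (hfα.trans hebc.symm)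
          exact Pf ⟨hf, Or.inl hfα, hfeb ▸ heb_O⟩
    obtain ⟨c₂, γ, hγ, hc₂, hp₂, hma, hmb⟩ := key
    refine ⟨Function.update c₂ e γ, ?_, ?_⟩
    · intro f hf
      rcases eq_or_ne f e with rfl | hne
      · rw [Function.update_self]
        exact hγ
      · rw [Function.update_of_ne hne]
        exact hc₂ f (Finset.mem_erase.mpr ⟨hne, hf⟩)
    · intro f hf g hg hfg hsh
      by_cases hfe : f = e <;> by_cases hge : g = e
      · exact absurd (hfe.trans hge.symm) hfg
      · rw [hfe] at hsh
        rw [hfe, Function.update_self, Function.update_of_ne hge]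
        have hg' : g ∈ E.erase e := Finset.mem_erase.mpr ⟨hge, hg⟩
        rcases hsh with h | h
        · exact fun hEq => hma g hg' h.symm hEq.symm
        · exact fun hEq => hmb g hg' h.symm hEq.symm
      · rw [hge] at hsh
        rw [hge, Function.update_of_ne hfe, Function.update_self]
        have hf' : f ∈ E.erase e := Finset.mem_erase.mpr ⟨hfe, hf⟩
        rcases hsh with h | h
        · exact fun hEq => hma f hf' h hEq
        · exact fun hEq => hmb f hf' h hEq
      · rw [Function.update_of_ne hfe, Function.update_of_ne hge]
        exact hp₂ f (Finset.mem_erase.mpr ⟨hfe, hf⟩) g (Finset.mem_erase.mpr ⟨hge, hg⟩) hfg hsh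

lemma rook_chrom_eq_clique {T γ δ : Type*} [Finite T] [Fintype γ] [Fintype δ] [DecidableEq γ] [DecidableEq δ]
    {H : SimpleGraph T} (m : T → γ × δ) (hminj : Function.Injective m)
    (hAdjm : ∀ x y : T, x ≠ y → (H.Adj x y ↔ ((m x).1 = (m y).1 ∨ (m x).2 = (m y).2))) :
    H.chromaticNumber = cliqueNumber H := by
  classical
  haveI : Fintype T := Fintype.ofFinite T
  set Es : Finset (γ × δ) := Finset.univ.image m with hEsdef
  have hb1 : ∀ r, (Es.filter fun f => f.1 = r).card ≤
      (Finset.univ.sup fun r : γ => (Es.filter fun f => f.1 = r).card) ⊔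
      (Finset.univ.sup fun v : δ => (Es.filter fun f => f.2 = v).card) :=
    fun r => le_sup_of_le_left (Finset.le_sup (f := fun r : γ => (Es.filter fun f => f.1 = r).card) (Finset.mem_univ r))
  have hb2 : ∀ v, (Es.filter fun f => f.2 = v).card ≤
      (Finset.univ.sup fun r : γ => (Es.filter fun f => f.1 = r).card) ⊔
      (Finset.univ.sup fun v : δ => (Es.filter fun f => f.2 = v).card) :=
    fun v => le_sup_of_le_right (Finset.le_sup (f := fun v : δ => (Es.filter fun f => f.2 = v).card) (Finset.mem_univ v))
  set nn : ℕ := (Finset.univ.sup fun r : γ => (Es.filter fun f => f.1 = r).card) ⊔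
    (Finset.univ.sup fun v : δ => (Es.filter fun f => f.2 = v).card) with hnn
  obtain ⟨c, hc, hpr⟩ := bip_edge_coloring nn Es hb1 hb2
  have hcolo : H.Colorable nn := by
    refine ⟨SimpleGraph.Coloring.mk
      (fun x => ⟨c (m x), hc (m x) (Finset.mem_image_of_mem m (Finset.mem_univ x))⟩) ?_⟩
    intro x y hxyadj hcc
    have hxy : x ≠ y := hxyadj.ne
    exact hpr (m x) (Finset.mem_image_of_mem m (Finset.mem_univ x))
      (m y) (Finset.mem_image_of_mem m (Finset.mem_univ y))
      (fun h => hxy (hminj h)) ((hAdjm x y hxy).mp hxyadj)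
      (by simpa using congrArg Fin.val hcc)
  have hχ : H.chromaticNumber ≤ nn := hcolo.chromaticNumber_le
  have hωχ : cliqueNumber H ≤ H.chromaticNumber := by
    apply sSup_le
    rintro x ⟨K, hK, rfl⟩
    exact hK.card_le_chromaticNumber
  have hrowω : ∀ r : γ, ((Es.filter fun f => f.1 = r).card : ℕ∞) ≤ cliqueNumber H := by
    intro r
    set K : Finset T := Finset.univ.filter (fun x => (m x).1 = r) with hK
    have hclique : H.IsClique (K : Set T) := by
      intro x hx y hy hxy
      rw [Finset.mem_coe, hK, Finset.mem_filter] at hx hy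
      exact (hAdjm x y hxy).mpr (Or.inl (hx.2.trans hy.2.symm))
    have hcard : (Es.filter fun f => f.1 = r) = K.image m := by
      ext f
      constructor
      · intro hf
        obtain ⟨hf1, hf2⟩ := Finset.mem_filter.mp hf
        rw [hEsdef, Finset.mem_image] at hf1
        obtain ⟨x, -, rfl⟩ := hf1
        exact Finset.mem_image_of_mem m (Finset.mem_filter.mpr ⟨Finset.mem_univ x, hf2⟩)
      · intro hf
        rw [Finset.mem_image] at hf
        obtain ⟨x, hx, rfl⟩ := hf
        exact Finset.mem_filter.mpr ⟨Finset.mem_image_of_mem m (Finset.mem_univ x),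
          (Finset.mem_filter.mp hx).2⟩
    rw [hcard, Finset.card_image_of_injective K hminj]
    exact le_sSup ⟨K, hclique, rfl⟩
  have hcolω : ∀ v : δ, ((Es.filter fun f => f.2 = v).card : ℕ∞) ≤ cliqueNumber H := by
    intro v
    set K : Finset T := Finset.univ.filter (fun x => (m x).2 = v) with hK
    have hclique : H.IsClique (K : Set T) := by
      intro x hx y hy hxy
      rw [Finset.mem_coe, hK, Finset.mem_filter] at hx hy
      exact (hAdjm x y hxy).mpr (Or.inr (hx.2.trans hy.2.symm))
    have hcard : (Es.filter fun f => f.2 = v) = K.image m := by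
      ext f
      constructor
      · intro hf
        obtain ⟨hf1, hf2⟩ := Finset.mem_filter.mp hf
        rw [hEsdef, Finset.mem_image] at hf1
        obtain ⟨x, -, rfl⟩ := hf1
        exact Finset.mem_image_of_mem m (Finset.mem_filter.mpr ⟨Finset.mem_univ x, hf2⟩)
      · intro hf
        rw [Finset.mem_image] at hf
        obtain ⟨x, hx, rfl⟩ := hf
        exact Finset.mem_filter.mpr ⟨Finset.mem_image_of_mem m (Finset.mem_univ x),
          (Finset.mem_filter.mp hx).2⟩
    rw [hcard, Finset.card_image_of_injective K hminj]
    exact le_sSup ⟨K, hclique, rfl⟩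
  have hnω : (nn : ℕ∞) ≤ cliqueNumber H := by
    rw [hnn]
    have hmono : Monotone (Nat.cast : ℕ → ℕ∞) := Nat.mono_cast
    rw [hmono.map_max]
    refine max_le ?_ ?_
    · rw [Finset.comp_sup_eq_sup_comp (Nat.cast : ℕ → ℕ∞) (fun x y => hmono.map_max) rfl]
      exact Finset.sup_le fun r _ => hrowω r
    · rw [Finset.comp_sup_eq_sup_comp (Nat.cast : ℕ → ℕ∞) (fun x y => hmono.map_max) rfl]
      exact Finset.sup_le fun v _ => hcolω v
  exact le_antisymm (le_trans hχ hnω) hωχ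

lemma main_perfect [Fintype V] [DecidableEq V] (G : SimpleGraph V)
    (A B : Finset V) (hG : IsCompleteBipartiteWith G A B) :
    IsPerfect ((totalGraph G).induce
      {d : V ⊕ G.edgeSet | ∀ u ∈ A, d ≠ Sum.inl u}) := by
  classical
  obtain ⟨hdisj, hunion, hadj⟩ := hG
  have hrep' : ∀ q : Sym2 V, q ∈ G.edgeSet →
      ∃ p : V × V, p.1 ∈ A ∧ p.2 ∈ B ∧ q = s(p.1, p.2) := by
    intro q
    induction q using Sym2.ind with
    | _ x y =>
      intro hq
      rw [SimpleGraph.mem_edgeSet] at hq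
      rcases (hadj x y).mp hq with ⟨hx, hy⟩ | ⟨hx, hy⟩
      · exact ⟨(x, y), hx, hy, rfl⟩
      · exact ⟨(y, x), hy, hx, Sym2.eq_swap⟩
  have hrep : ∀ e : G.edgeSet, ∃ p : V × V, p.1 ∈ A ∧ p.2 ∈ B ∧ (e : Sym2 V) = s(p.1, p.2) :=
    fun e => hrep' e.1 e.2
  choose φ hφA hφB hφe using hrep
  have hmem : ∀ (e : G.edgeSet) (v : V), v ∈ (e : Sym2 V) ↔ v = (φ e).1 ∨ v = (φ e).2 := by
    intro e v
    rw [hφe e]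
    exact Sym2.mem_iff
  set η : (V ⊕ G.edgeSet) → (V ⊕ V) × V := fun d =>
    match d with
    | Sum.inl v => (Sum.inr v, v)
    | Sum.inr e => (Sum.inl (φ e).1, (φ e).2) with hη
  have hη1 : ∀ v, η (Sum.inl v) = (Sum.inr v, v) := fun v => rfl
  have hη2 : ∀ e, η (Sum.inr e) = (Sum.inl (φ e).1, (φ e).2) := fun e => rfl
  have hedgeeq : ∀ e f : G.edgeSet, (φ e).1 = (φ f).1 → (φ e).2 = (φ f).2 → e = f := by
    intro e f h1 h2
    apply Subtype.ext
    rw [hφe e, hφe f, h1, h2]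
  have hinj : Function.Injective η := by
    rintro (v | e) (w | f) h
    · rw [hη1, hη1] at h
      exact congrArg Sum.inl (Prod.ext_iff.mp h).2
    · rw [hη1, hη2] at h
      exact absurd (Prod.ext_iff.mp h).1 (fun hh => Sum.inr_ne_inl hh)
    · rw [hη2, hη1] at h
      exact absurd (Prod.ext_iff.mp h).1 (fun hh => Sum.inl_ne_inr hh)
    · rw [hη2, hη2] at h
      obtain ⟨h1, h2⟩ := Prod.ext_iff.mp h
      rw [hedgeeq e f (Sum.inl.inj h1) h2]
  have hnA : ∀ v : V, (∀ u ∈ A, (Sum.inl v : V ⊕ G.edgeSet) ≠ Sum.inl u) → v ∉ A :=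
    fun v hv h => hv v h rfl
  have hAdj : ∀ d : V ⊕ G.edgeSet, (∀ u ∈ A, d ≠ Sum.inl u) →
      ∀ d' : V ⊕ G.edgeSet, (∀ u ∈ A, d' ≠ Sum.inl u) → d ≠ d' →
      ((totalGraph G).Adj d d' ↔ ((η d).1 = (η d').1 ∨ (η d).2 = (η d').2)) := by
    rintro (v | e) hd (w | f) hd' hne
    · rw [hη1, hη1]
      simp only [totalGraph, SimpleGraph.fromRel_adj, elemAdj]
      constructor
      · rintro ⟨-, h | h⟩
        · rcases (hadj v w).mp h with ⟨h1, -⟩ | ⟨-, h1⟩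
          · exact absurd h1 (hnA v hd)
          · exact absurd h1 (hnA w hd')
        · rcases (hadj w v).mp h with ⟨h1, -⟩ | ⟨-, h1⟩
          · exact absurd h1 (hnA w hd')
          · exact absurd h1 (hnA v hd)
      · rintro (h | h)
        · exact absurd (congrArg Sum.inl (Sum.inr.inj h)) hne
        · exact absurd (congrArg Sum.inl h) hne
    · rw [hη1, hη2]
      simp only [totalGraph, SimpleGraph.fromRel_adj, elemAdj]
      constructor
      · rintro ⟨-, h | h⟩ <;>
        · rcases (hmem f v).mp h with h1 | h1
          · exact absurd (h1 ▸ hφA f) (hnA v hd)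
          · exact Or.inr h1
      · rintro (h | h)
        · exact absurd h (fun hh => Sum.inr_ne_inl hh)
        · exact ⟨hne, Or.inl ((hmem f v).mpr (Or.inr h))⟩
    · rw [hη2, hη1]
      simp only [totalGraph, SimpleGraph.fromRel_adj, elemAdj]
      constructor
      · rintro ⟨-, h | h⟩ <;>
        · rcases (hmem e w).mp h with h1 | h1
          · exact absurd (h1 ▸ hφA e) (hnA w hd')
          · exact Or.inr h1.symm
      · rintro (h | h)
        · exact absurd h (fun hh => Sum.inl_ne_inr hh)
        · exact ⟨hne, Or.inl ((hmem e w).mpr (Or.inr h.symm))⟩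
    · rw [hη2, hη2]
      have hef : e ≠ f := fun h => hne (congrArg Sum.inr h)
      simp only [totalGraph, SimpleGraph.fromRel_adj, elemAdj]
      constructor
      · rintro ⟨-, ⟨-, x, hx1, hx2⟩ | ⟨-, x, hx2, hx1⟩⟩ <;>
        · rcases (hmem e x).mp hx1 with h1 | h1 <;> rcases (hmem f x).mp hx2 with h2 | h2
          · exact Or.inl (congrArg Sum.inl (h1.symm.trans h2))
          · exact absurd (h1 ▸ hφA e) (fun hh => Finset.disjoint_left.mp hdisj hh (h2 ▸ hφB f))
          · exact absurd (h2 ▸ hφA f) (fun hh => Finset.disjoint_left.mp hdisj hh (h1 ▸ hφB e))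
          · exact Or.inr (h1.symm.trans h2)
      · rintro (h | h)
        · refine ⟨hne, Or.inl ⟨hef, (φ e).1, ?_, ?_⟩⟩
          · exact (hmem e _).mpr (Or.inl rfl)
          · exact (hmem f _).mpr (Or.inl (Sum.inl.inj h))
        · refine ⟨hne, Or.inl ⟨hef, (φ e).2, ?_, ?_⟩⟩
          · exact (hmem e _).mpr (Or.inr rfl)
          · exact (hmem f _).mpr (Or.inr h)
  intro s
  refine rook_chrom_eq_clique (fun x => η x.1.1)
    (fun x y h => Subtype.ext (Subtype.ext (hinj h))) ?_
  intro x y hxy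
  have hne : x.1.1 ≠ y.1.1 := fun h => hxy (Subtype.ext (Subtype.ext h))
  exact hAdj x.1.1 x.1.2 y.1.1 y.1.2 hne

/-- for a complete bipartite graph with bipartition `(A, B)` and
`U ∈ {A, B}`, the subgraph of the total graph induced on the elements outside `U`
is perfect. -/
theorem totalGraph_minus_side_isPerfect
    [Fintype V] [DecidableEq V] (G : SimpleGraph V)
    (A B : Finset V) (hG : IsCompleteBipartiteWith G A B)
    (U : Finset V) (hU : U = A ∨ U = B) :
    IsPerfect ((totalGraph G).induce
      {d : V ⊕ G.edgeSet | ∀ u ∈ U, d ≠ Sum.inl u}) := by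
  rcases hU with rfl | rfl
  · exact main_perfect G U B hG
  · exact main_perfect G U A
      ⟨hG.1.symm, by rw [Finset.union_comm]; exact hG.2.1,
        fun v w => (hG.2.2 v w).trans or_comm⟩
end

section
/- Let K_{r,s} be a complete bipartite graph with vertex bipartition (A,B) and let H be the induced subgraph of the total graph T(K_{r,s}) on the vertex set (V(K_{r,s})∪E(K_{r,s}))∖B. Then H contains no induced cycle of odd length at least 5. -/
open Finset

variable {V : Type*}

lemma elemAdj_symm (G : SimpleGraph V) :
    ∀ d d', elemAdj G d d' → elemAdj G d' d := by
  rintro (v | e) (w | f) h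
  · exact h.symm
  · exact h
  · exact h
  · exact ⟨h.1.symm, h.2.imp fun v hv => hv.symm⟩

lemma totalGraph_adj (G : SimpleGraph V) (d d' : V ⊕ G.edgeSet) :
    (totalGraph G).Adj d d' ↔ d ≠ d' ∧ elemAdj G d d' := by
  rw [totalGraph, SimpleGraph.fromRel_adj]
  constructor
  · rintro ⟨h, h' | h'⟩
    · exact ⟨h, h'⟩
    · exact ⟨h, elemAdj_symm G _ _ h'⟩
  · rintro ⟨h, h'⟩
    exact ⟨h, Or.inl h'⟩

open Fin.NatCast Fin.CommRing

/-- for a complete bipartite graph with bipartition `(A, B)`, the subgraph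
of the total graph induced on the elements outside `B` has no induced odd cycle of
length at least 5. -/
theorem totalGraph_minus_B_no_odd_hole
    [Fintype V] [DecidableEq V] (G : SimpleGraph V)
    (A B : Finset V) (hG : IsCompleteBipartiteWith G A B)
    (n : ℕ) (hn : 5 ≤ n) (hodd : Odd n) :
    IsEmpty (SimpleGraph.cycleGraph n ↪g
      ((totalGraph G).induce {d : V ⊕ G.edgeSet | ∀ b ∈ B, d ≠ Sum.inl b})) := by
  obtain ⟨m, rfl⟩ : ∃ m, n = m + 5 := ⟨n - 5, by omega⟩
  constructor
  intro φ
  obtain ⟨hdisj, hcover, hadj⟩ := hG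
  -- basic Fin facts
  have hne0 : ∀ k : ℕ, 0 < k → k < m + 5 → ((k : ℕ) : Fin (m + 5)) ≠ 0 := by
    intro k h1 h2 h
    rw [Fin.natCast_eq_zero] at h
    have := Nat.le_of_dvd h1 h
    omega
  have h1ne : (1 : Fin (m + 5)) ≠ 0 := by simpa using hne0 1 (by omega) (by omega)
  have h2ne : (2 : Fin (m + 5)) ≠ 0 := by simpa using hne0 2 (by omega) (by omega)
  have h3ne : (3 : Fin (m + 5)) ≠ 0 := by simpa using hne0 3 (by omega) (by omega)
  have ne1 : ∀ i : Fin (m + 5), i ≠ i + 1 := fun i h => h1ne (by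
    have := h.symm; rwa [add_eq_left] at this)
  have ne2 : ∀ i : Fin (m + 5), i ≠ i + 2 := fun i h => h2ne (by
    have := h.symm; rwa [add_eq_left] at this)
  -- cycle graph adjacency facts
  have hC1 : ∀ i : Fin (m + 5), (SimpleGraph.cycleGraph (m + 5)).Adj i (i + 1) := by
    intro i
    rw [SimpleGraph.cycleGraph_adj']
    right
    rw [add_sub_cancel_left]
    exact Fin.val_one (m + 3)
  have hC2 : ∀ i : Fin (m + 5), ¬ (SimpleGraph.cycleGraph (m + 5)).Adj i (i + 2) := by
    intro i h
    rw [SimpleGraph.cycleGraph_adj'] at h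
    rcases h with h | h
    · have heq : i - (i + 2) = (1 : Fin (m + 5)) :=
        Fin.ext (by rw [h]; exact (Fin.val_one (m + 3)).symm)
      exact h3ne (by linear_combination -heq)
    · have heq : (i + 2) - i = (1 : Fin (m + 5)) :=
        Fin.ext (by rw [h]; exact (Fin.val_one (m + 3)).symm)
      exact h1ne (by linear_combination heq)
  -- adjacency transfer
  have hmap : ∀ i j : Fin (m + 5),
      (SimpleGraph.cycleGraph (m + 5)).Adj i j ↔ (totalGraph G).Adj (φ i).1 (φ j).1 := by
    intro i j
    rw [← φ.map_rel_iff]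
    rfl
  have hinj : ∀ i j : Fin (m + 5), (φ i).1 = (φ j).1 → i = j := by
    intro i j h
    exact φ.injective (Subtype.ext h)
  -- Step A: every vertex of the cycle is an edge of G
  have hE : ∀ i : Fin (m + 5), ∃ e : G.edgeSet, (φ i).1 = Sum.inr e := by
    intro i
    cases hx : (φ i).1 with
    | inr e => exact ⟨e, rfl⟩
    | inl v =>
      exfalso
      have hvB : v ∉ B := fun hv => (φ i).2 v hv hx
      have neighbor : ∀ j : Fin (m + 5), (totalGraph G).Adj (φ i).1 (φ j).1 →
          ∃ e : G.edgeSet, (φ j).1 = Sum.inr e ∧ v ∈ (e : Sym2 V) := by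
        intro j hj
        rw [totalGraph_adj] at hj
        cases hy : (φ j).1 with
        | inl w =>
          exfalso
          rw [hx, hy] at hj
          have : G.Adj v w := hj.2
          rcases (hadj v w).1 this with ⟨_, hw⟩ | ⟨hv, _⟩
          · exact (φ j).2 w hw hy
          · exact hvB hv
        | inr e =>
          rw [hx, hy] at hj
          exact ⟨e, rfl, hj.2⟩
      obtain ⟨e, he, hve⟩ := neighbor (i + 1) ((hmap i (i + 1)).1 (hC1 i))
      have hprev : (SimpleGraph.cycleGraph (m + 5)).Adj i (i - 1) := by
        have := hC1 (i - 1)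
        rw [sub_add_cancel] at this
        exact this.symm
      obtain ⟨f, hf, hvf⟩ := neighbor (i - 1) ((hmap i (i - 1)).1 hprev)
      -- i+1 and i-1 are adjacent in the total graph, distance 2 on the cycle
      have hne : e ≠ f := by
        rintro rfl
        have hi : i + 1 = i - 1 := hinj _ _ (by rw [he, hf])
        exact ne2 (i - 1) (by rw [show i - 1 + 2 = i + 1 from by ring, hi])
      have hadj2 : (totalGraph G).Adj (φ (i + 1)).1 (φ (i - 1)).1 := by
        rw [he, hf, totalGraph_adj]
        exact ⟨fun h => hne (Sum.inr.inj h), hne, v, hve, hvf⟩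
      have : (SimpleGraph.cycleGraph (m + 5)).Adj (i + 1) (i - 1) :=
        (hmap (i + 1) (i - 1)).2 hadj2
      have h2 : (SimpleGraph.cycleGraph (m + 5)).Adj (i - 1) ((i - 1) + 2) := by
        have hq : (i - 1) + 2 = i + 1 := by ring
        rw [hq]
        exact this.symm
      exact hC2 (i - 1) h2
  choose e he using hE
  -- edge endpoints
  have hEdge : ∀ ed : G.edgeSet, ∃ x y, x ∈ A ∧ y ∈ B ∧ (ed : Sym2 V) = s(x, y) := by
    rintro ⟨ed, hed⟩
    induction ed using Sym2.ind with
    | _ x y =>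
      rw [SimpleGraph.mem_edgeSet] at hed
      rcases (hadj x y).1 hed with ⟨hx, hy⟩ | ⟨hx, hy⟩
      · exact ⟨x, y, hx, hy, rfl⟩
      · exact ⟨y, x, hy, hx, Sym2.eq_swap⟩
  choose a b ha hb hab using fun i => hEdge (e i)
  have einj : ∀ i j : Fin (m + 5), i ≠ j → e i ≠ e j := by
    intro i j hij h
    exact hij (hinj i j (by rw [he i, he j, h]))
  -- consecutive edges share exactly one side
  have hConsec : ∀ i : Fin (m + 5), Xor' (a i = a (i + 1)) (b i = b (i + 1)) := by
    intro i
    have hadj1 : (totalGraph G).Adj (φ i).1 (φ (i + 1)).1 := (hmap i (i + 1)).1 (hC1 i)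
    rw [he i, he (i + 1), totalGraph_adj] at hadj1
    obtain ⟨-, -, v, hv1, hv2⟩ := hadj1
    rw [hab i, Sym2.mem_iff] at hv1
    rw [hab (i + 1), Sym2.mem_iff] at hv2
    have hnotboth : ¬ (a i = a (i + 1) ∧ b i = b (i + 1)) := by
      rintro ⟨h1, h2⟩
      exact einj i (i + 1) (ne1 i) (Subtype.ext (by rw [hab i, hab (i + 1), h1, h2]))
    have hshare : a i = a (i + 1) ∨ b i = b (i + 1) := by
      rcases hv1 with rfl | rfl
      · rcases hv2 with h | h
        · exact Or.inl h
        · exact absurd (h ▸ hb (i + 1)) (fun hB => (Finset.disjoint_left.1 hdisj) (ha i) hB)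
      · rcases hv2 with h | h
        · exact absurd (h ▸ ha (i + 1)) (fun hA => (Finset.disjoint_left.1 hdisj) hA (hb i))
        · exact Or.inr h
    rcases hshare with h | h
    · exact Or.inl ⟨h, fun h' => hnotboth ⟨h, h'⟩⟩
    · exact Or.inr ⟨h, fun h' => hnotboth ⟨h', h⟩⟩
  -- distance-2 edges share nothing
  have hDist2 : ∀ i : Fin (m + 5), a i ≠ a (i + 2) ∧ b i ≠ b (i + 2) := by
    intro i
    have hnadj : ¬ (totalGraph G).Adj (φ i).1 (φ (i + 2)).1 :=
      fun h => hC2 i ((hmap i (i + 2)).2 h)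
    rw [he i, he (i + 2), totalGraph_adj] at hnadj
    have hne : e i ≠ e (i + 2) := einj i (i + 2) (ne2 i)
    constructor
    · intro h
      exact hnadj ⟨fun hh => hne (Sum.inr.inj hh), hne, a i,
        by rw [hab i]; exact Sym2.mem_mk_left _ _,
        by rw [hab (i + 2), h]; exact Sym2.mem_mk_left _ _⟩
    · intro h
      exact hnadj ⟨fun hh => hne (Sum.inr.inj hh), hne, b i,
        by rw [hab i]; exact Sym2.mem_mk_right _ _,
        by rw [hab (i + 2), h]; exact Sym2.mem_mk_right _ _⟩
  -- alternation
  set P : Fin (m + 5) → Prop := fun i => a i = a (i + 1) with hP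
  have hAlt : ∀ i : Fin (m + 5), P (i + 1) ↔ ¬ P i := by
    intro i
    constructor
    · intro h1 h0
      have : a i = a (i + 2) := by
        rw [hP] at h0 h1
        rw [show i + 1 + 1 = i + 2 from by ring] at h1
        exact h0.trans h1
      exact (hDist2 i).1 this
    · intro h0
      by_contra h1
      have hb0 : b i = b (i + 1) := ((hConsec i).resolve_left
        (fun hx => h0 hx.1)).1
      have hb1 : b (i + 1) = b (i + 1 + 1) := ((hConsec (i + 1)).resolve_left
        (fun hx => h1 hx.1)).1
      have : b i = b (i + 2) := by
        rw [hb0, hb1, show i + 1 + 1 = i + 2 from by ring]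
      exact (hDist2 i).2 this
  -- parity contradiction
  have hpar : ∀ k : ℕ, P ((k : Fin (m + 5))) ↔ (Even k ↔ P 0) := by
    intro k
    induction k with
    | zero => simp
    | succ k ih =>
      have hcast : ((k + 1 : ℕ) : Fin (m + 5)) = (k : Fin (m + 5)) + 1 := by
        push_cast; ring
      rw [hcast, hAlt, ih, Nat.even_add_one]
      tauto
  have hfinal := hpar (m + 5)
  rw [Fin.natCast_self] at hfinal
  have hnev : ¬ Even (m + 5) := Nat.not_even_iff_odd.2 hodd
  tauto
end

section
/- Let K_{r,s} be a complete bipartite graph with vertex bipartition (A,B) and let H be the induced subgraph of the total graph T(K_{r,s}) on the vertex set (V(K_{r,s})∪E(K_{r,s}))∖B. Then the complement graph of H contains no induced cycle of odd length at least 5. -/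
open Finset

variable {V : Type*}

lemma exu [Fintype V] [DecidableEq V] (G : SimpleGraph V) (A B : Finset V)
    (hG : IsCompleteBipartiteWith G A B) (e : Sym2 V) (he : e ∈ G.edgeSet) :
    ∃ x, (x ∈ e ∧ x ∈ A) ∧ ∀ y, y ∈ e → y ∈ A → y = x := by
  induction e using Sym2.ind with
  | _ x y =>
  rw [SimpleGraph.mem_edgeSet] at he
  rcases (hG.2.2 x y).1 he with ⟨hx, hy⟩ | ⟨hx, hy⟩
  · refine ⟨x, ⟨by simp, hx⟩, fun z hz hzA => ?_⟩
    rcases Sym2.mem_iff.1 hz with rfl | rfl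
    · rfl
    · exact absurd hy (Finset.disjoint_left.1 hG.1 hzA)
  · refine ⟨y, ⟨by simp, hy⟩, fun z hz hzA => ?_⟩
    rcases Sym2.mem_iff.1 hz with rfl | rfl
    · exact absurd hx (Finset.disjoint_left.1 hG.1 hzA)
    · rfl


lemma stepOne {γ : Type*} [DecidableEq γ] {m : ℕ} (hodd : Odd (m + 2))
    (f : Fin (m + 2) → γ) (hf : ∀ k : Fin (m + 2), f k ≠ f (k + 1)) (i : Fin (m + 2)) :
    2 * (univ.filter (fun j => f j = f i)).card ≤ m + 1 := by
  obtain ⟨t, ht⟩ := hodd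
  set S := univ.filter (fun j => f j = f i) with hS
  have hdisj : Disjoint S (S.image (· + 1)) := by
    rw [Finset.disjoint_right]
    intro x hx hx'
    obtain ⟨y, hy, rfl⟩ := Finset.mem_image.1 hx
    have h1 : f y = f i := (Finset.mem_filter.1 hy).2
    have h2 : f (y + 1) = f i := (Finset.mem_filter.1 hx').2
    exact hf y (h1.trans h2.symm)
  have hcard : S.card + (S.image (· + 1)).card ≤ m + 2 := by
    rw [← Finset.card_union_of_disjoint hdisj]
    calc (S ∪ S.image (· + 1)).card ≤ (univ : Finset (Fin (m + 2))).card :=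
          Finset.card_le_univ _
      _ = m + 2 := by simp
  have himg : (S.image (· + 1)).card = S.card :=
    Finset.card_image_of_injective _ (add_left_injective 1)
  omega

lemma key {α β : Type*} {m : ℕ} (hodd : Odd (m + 2)) (hm : 5 ≤ m + 2)
    (a : Fin (m + 2) → α) (b : Fin (m + 2) → β)
    (H1 : ∀ i j : Fin (m + 2), (i - j = 1 ∨ j - i = 1) → a i ≠ a j ∧ b i ≠ b j)
    (H2 : ∀ i j : Fin (m + 2), i ≠ j → ¬(i - j = 1 ∨ j - i = 1) → a i = a j ∨ b i = b j) :
    False := by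
  classical
  obtain ⟨t, ht⟩ := hodd
  have bndA : ∀ i, 2 * (univ.filter (fun j => a j = a i)).card ≤ m + 1 :=
    stepOne ⟨t, ht⟩ a (fun k => (H1 k (k + 1) (Or.inr (by abel))).1)
  have bndB : ∀ i, 2 * (univ.filter (fun j => b j = b i)).card ≤ m + 1 :=
    stepOne ⟨t, ht⟩ b (fun k => (H1 k (k + 1) (Or.inr (by abel))).2)
  have cover : ∀ i j : Fin (m + 2), j ≠ i - 1 → j ≠ i + 1 → (a j = a i ∨ b j = b i) := by
    intro i j h1 h2
    by_cases hji : j = i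
    · exact Or.inl (by rw [hji])
    · have hcond : ¬(i - j = 1 ∨ j - i = 1) := by
        rintro (h | h)
        · exact h1 (by rw [sub_eq_iff_eq_add.mp h]; abel)
        · exact h2 (by rw [sub_eq_iff_eq_add.mp h]; abel)
      rcases H2 i j (Ne.symm hji) hcond with h | h
      · exact Or.inl h.symm
      · exact Or.inr h.symm
  have bndU : ∀ i : Fin (m + 2),
      m ≤ ((univ.filter (fun j => a j = a i)) ∪ (univ.filter (fun j => b j = b i))).card := by
    intro i
    have hsub : univ \ {i - 1, i + 1} ⊆
        (univ.filter (fun j => a j = a i)) ∪ (univ.filter (fun j => b j = b i)) := by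
      intro j hj
      rw [Finset.mem_sdiff, Finset.mem_insert, Finset.mem_singleton] at hj
      push_neg at hj
      rcases cover i j hj.2.1 hj.2.2 with h | h
      · exact Finset.mem_union_left _ (Finset.mem_filter.2 ⟨Finset.mem_univ _, h⟩)
      · exact Finset.mem_union_right _ (Finset.mem_filter.2 ⟨Finset.mem_univ _, h⟩)
    have h1 : (univ \ ({i - 1, i + 1} : Finset (Fin (m + 2)))).card
        = (m + 2) - ({i - 1, i + 1} : Finset (Fin (m + 2))).card := by
      rw [Finset.card_sdiff_of_subset (Finset.subset_univ _)]; simp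
    have h2 : ({i - 1, i + 1} : Finset (Fin (m + 2))).card ≤ 2 := by
      apply le_trans (Finset.card_insert_le _ _); simp
    have h3 := Finset.card_le_card hsub
    omega
  have exactA : ∀ i : Fin (m + 2), 2 * (univ.filter (fun j => a j = a i)).card = m + 1 := by
    intro i
    have h1 := bndA i
    have h2 := bndB i
    have h3 := bndU i
    have h4 := Finset.card_union_add_card_inter
      (univ.filter (fun j => a j = a i)) (univ.filter (fun j => b j = b i))
    have h5 : 1 ≤ ((univ.filter (fun j => a j = a i)) ∩ (univ.filter (fun j => b j = b i))).card :=
      Finset.card_pos.2 ⟨i, by simp⟩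
    omega
  have hdisjA : ∀ i j : Fin (m + 2), a i ≠ a j →
      Disjoint (univ.filter (fun k => a k = a i)) (univ.filter (fun k => a k = a j)) := by
    intro i j hij
    rw [Finset.disjoint_left]
    intro x hx hx'
    exact hij ((Finset.mem_filter.1 hx).2.symm.trans (Finset.mem_filter.1 hx').2)
  have hlt : ∀ s : Finset (Fin (m + 2)), s.card < m + 2 → ∃ j, j ∉ s := by
    intro s hs
    by_contra h
    push_neg at h
    have : s = univ := Finset.eq_univ_iff_forall.2 h
    rw [this] at hs
    simp at hs
  obtain ⟨j, hj⟩ := hlt (univ.filter (fun k => a k = a (0 : Fin (m + 2)))) (by have := exactA 0; omega)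
  have haj : a 0 ≠ a j := fun h => hj (Finset.mem_filter.2 ⟨Finset.mem_univ _, h.symm⟩)
  obtain ⟨k, hk⟩ := hlt
    ((univ.filter (fun k => a k = a (0 : Fin (m + 2)))) ∪ (univ.filter (fun l => a l = a j)))
    (by
      rw [Finset.card_union_of_disjoint (hdisjA 0 j haj)]
      have := exactA 0; have := exactA j; omega)
  rw [Finset.mem_union] at hk
  push_neg at hk
  have hak0 : a 0 ≠ a k := fun h => hk.1 (Finset.mem_filter.2 ⟨Finset.mem_univ _, h.symm⟩)
  have hakj : a j ≠ a k := fun h => hk.2 (Finset.mem_filter.2 ⟨Finset.mem_univ _, h.symm⟩)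
  have hfin : ((univ.filter (fun l => a l = a (0 : Fin (m + 2)))) ∪ (univ.filter (fun l => a l = a j))
      ∪ (univ.filter (fun l => a l = a k))).card ≤ m + 2 := by
    calc _ ≤ (univ : Finset (Fin (m + 2))).card := Finset.card_le_univ _
      _ = m + 2 := by simp
  rw [Finset.card_union_of_disjoint, Finset.card_union_of_disjoint (hdisjA 0 j haj)] at hfin
  · have := exactA 0; have := exactA j; have := exactA k; omega
  · rw [Finset.disjoint_union_left]
    exact ⟨hdisjA 0 k hak0, hdisjA j k hakj⟩

/-- for a complete bipartite graph with bipartition `(A, B)`, the complement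
of the subgraph of the total graph induced on the elements outside `B` has no induced
odd cycle of length at least 5. -/
theorem compl_totalGraph_minus_B_no_odd_hole
    [Fintype V] [DecidableEq V] (G : SimpleGraph V)
    (A B : Finset V) (hG : IsCompleteBipartiteWith G A B)
    (n : ℕ) (hn : 5 ≤ n) (hodd : Odd n) :
    IsEmpty (SimpleGraph.cycleGraph n ↪g
      ((totalGraph G).induce {d : V ⊕ G.edgeSet | ∀ b ∈ B, d ≠ Sum.inl b})ᶜ) := by
  obtain ⟨m, rfl⟩ : ∃ m, n = m + 2 := ⟨n - 2, by omega⟩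
  classical
  constructor
  intro φ
  have hGswap : IsCompleteBipartiteWith G B A :=
    ⟨hG.1.symm, by rw [Finset.union_comm]; exact hG.2.1, fun v w => by rw [hG.2.2 v w]; tauto⟩
  choose fA hfA using fun (e : G.edgeSet) => exu G A B hG e.1 e.2
  choose fB hfB using fun (e : G.edgeSet) => exu G B A hGswap e.1 e.2
  have hmemA : ∀ v : V, v ∉ B → v ∈ A := by
    intro v hv
    rcases Finset.mem_union.1 (by rw [hG.2.1]; exact Finset.mem_univ v) with h | h
    · exact h
    · exact absurd h hv
  have hnotB : ∀ (i : Fin (m + 2)) (v : V), (φ i).1 = Sum.inl v → v ∈ A := by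
    intro i v h
    refine hmemA v (fun hvB => ?_)
    exact (φ i).2 v hvB h
  have main : ∀ i j : Fin (m + 2), i ≠ j →
      ((SimpleGraph.cycleGraph (m + 2)).Adj i j ↔
        ¬(elemAdj G (φ i).1 (φ j).1 ∨ elemAdj G (φ j).1 (φ i).1)) := by
    intro i j hij
    have hφ : φ i ≠ φ j := fun h => hij (φ.injective h)
    have hval : (φ i).1 ≠ (φ j).1 := fun h => hφ (Subtype.ext h)
    rw [← φ.map_rel_iff]
    simp only [SimpleGraph.compl_adj, SimpleGraph.comap_adj, totalGraph,
      SimpleGraph.fromRel_adj, Function.Embedding.coe_subtype]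
    constructor
    · intro ⟨_, h⟩ hor
      exact h ⟨hval, hor⟩
    · intro h
      exact ⟨hφ, fun ⟨_, hor⟩ => h hor⟩
  have H1 : ∀ i j : Fin (m + 2), (i - j = 1 ∨ j - i = 1) →
      (Sum.elim (fun v => some v) (fun e => some (fA e)) (φ i).1
        ≠ Sum.elim (fun v => some v) (fun e => some (fA e)) (φ j).1) ∧
      (Sum.elim (fun v => some (Sum.inr v)) (fun e => some (Sum.inl (fB e))) (φ i).1
        ≠ Sum.elim (fun v => some (Sum.inr v)) (fun e => some (Sum.inl (fB e))) (φ j).1) := by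
    intro i j hsub
    have hadj : (SimpleGraph.cycleGraph (m + 2)).Adj i j := SimpleGraph.cycleGraph_adj.mpr hsub
    have hij : i ≠ j := hadj.ne
    have hval : (φ i).1 ≠ (φ j).1 := fun h => hij (φ.injective (Subtype.ext h))
    have hnot := (main i j hij).1 hadj
    rcases h1 : (φ i).1 with v | e <;> rcases h2 : (φ j).1 with w | f <;>
      rw [h1, h2] at hval hnot <;> simp only [Sum.elim_inl, Sum.elim_inr]
    · have hvw : v ≠ w := fun h => hval (by rw [h])
      exact ⟨by simp [hvw], by simp [hvw]⟩
    · have hvf : v ∉ (f : Sym2 V) := fun hv => hnot (Or.inl hv)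
      refine ⟨fun h => hvf ?_, by simp⟩
      rw [Option.some_inj.mp h]
      exact (hfA f).1.1
    · have hvf : w ∉ (e : Sym2 V) := fun hv => hnot (Or.inl hv)
      refine ⟨fun h => hvf ?_, by simp⟩
      rw [← Option.some_inj.mp h]
      exact (hfA e).1.1
    · have hef : e ≠ f := fun h => hval (by rw [h])
      have hshare : ¬∃ v, v ∈ (e : Sym2 V) ∧ v ∈ (f : Sym2 V) :=
        fun ⟨v, hv1, hv2⟩ => hnot (Or.inl ⟨hef, v, hv1, hv2⟩)
      constructor
      · intro h
        have := Option.some_inj.mp h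
        exact hshare ⟨fA e, (hfA e).1.1, this ▸ (hfA f).1.1⟩
      · intro h
        have : fB e = fB f := by simpa using h
        exact hshare ⟨fB e, (hfB e).1.1, this ▸ (hfB f).1.1⟩
  have H2 : ∀ i j : Fin (m + 2), i ≠ j → ¬(i - j = 1 ∨ j - i = 1) →
      (Sum.elim (fun v => some v) (fun e => some (fA e)) (φ i).1
        = Sum.elim (fun v => some v) (fun e => some (fA e)) (φ j).1) ∨
      (Sum.elim (fun v => some (Sum.inr v)) (fun e => some (Sum.inl (fB e))) (φ i).1
        = Sum.elim (fun v => some (Sum.inr v)) (fun e => some (Sum.inl (fB e))) (φ j).1) := by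
    intro i j hij hnsub
    have hnadj : ¬(SimpleGraph.cycleGraph (m + 2)).Adj i j :=
      fun h => hnsub (SimpleGraph.cycleGraph_adj.mp h)
    have hel : elemAdj G (φ i).1 (φ j).1 ∨ elemAdj G (φ j).1 (φ i).1 := by
      by_contra hc
      exact hnadj ((main i j hij).2 hc)
    rcases h1 : (φ i).1 with v | e <;> rcases h2 : (φ j).1 with w | f <;>
      rw [h1, h2] at hel <;> simp only [Sum.elim_inl, Sum.elim_inr]
    · exfalso
      have hadj : G.Adj v w := by
        rcases hel with h | h
        · exact h
        · exact h.symm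
      have hvA : v ∈ A := hnotB i v h1
      have hwA : w ∈ A := hnotB j w h2
      rcases (hG.2.2 v w).1 hadj with ⟨_, hwB⟩ | ⟨hvB, _⟩
      · exact Finset.disjoint_left.1 hG.1 hwA hwB
      · exact Finset.disjoint_left.1 hG.1 hvA hvB
    · left
      have hv : v ∈ (f : Sym2 V) := by
        rcases hel with h | h
        · exact h
        · exact h
      have hvA : v ∈ A := hnotB i v h1
      rw [(hfA f).2 v hv hvA]
    · left
      have hv : w ∈ (e : Sym2 V) := by
        rcases hel with h | h
        · exact h
        · exact h
      have hwA : w ∈ A := hnotB j w h2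
      rw [(hfA e).2 w hv hwA]
    · obtain ⟨x, hxe, hxf⟩ : ∃ x, x ∈ (e : Sym2 V) ∧ x ∈ (f : Sym2 V) := by
        rcases hel with ⟨_, x, hx1, hx2⟩ | ⟨_, x, hx1, hx2⟩
        · exact ⟨x, hx1, hx2⟩
        · exact ⟨x, hx2, hx1⟩
      rcases Finset.mem_union.1 (by rw [hG.2.1]; exact Finset.mem_univ x) with hxA | hxB
      · left
        rw [← (hfA e).2 x hxe hxA, ← (hfA f).2 x hxf hxA]
      · right
        rw [← (hfB e).2 x hxe hxB, ← (hfB f).2 x hxf hxB]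
  exact key hodd hn _ _ H1 H2
end
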